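/- For every integer d ≥ 14 with d ≡ 2 (mod 4), letting m = (d + 6)/2, the complement of the Cayley graph Cay(Dih(m), {r^{±2}, s, r⁸s, r⁹s}) is a d-regular nut graph of order d + 6. -/

import Mathlib

attribute [local instance] Classical.propDecidable

/-- The real adjacency matrix of a simple graph. -/
noncomputable def adjMatR {V : Type*} [Fintype V] (G : SimpleGraph V) : Matrix V V ℝ :=
  Matrix.of fun u v => if G.Adj u v then (1 : ℝ) else 0

/-- A nut graph: a finite simple graph on at least two vertices whose real adjacency
matrix has a one-dimensional kernel spanned by a vector all of whose entries are nonzero. -/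
def IsNutGraph {V : Type*} [Fintype V] (G : SimpleGraph V) : Prop :=
  2 ≤ Fintype.card V ∧
    ∃ x : V → ℝ, (∀ v, x v ≠ 0) ∧ (adjMatR G).mulVec x = 0 ∧
      ∀ y : V → ℝ, (adjMatR G).mulVec y = 0 → ∃ c : ℝ, y = c • x

/-- A graph is `d`-regular if every vertex has exactly `d` neighbours. -/
def IsRegularGraph {V : Type*} (G : SimpleGraph V) (d : ℕ) : Prop :=
  ∀ v : V, (G.neighborSet v).ncard = d

/-- The Cayley graph of a group `Γ` with connection set `C`: vertices `u ≠ v` are adjacent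
iff `v * u⁻¹ ∈ C` (the adjacency is stated symmetrically; for `C` closed under inversion
this agrees with the usual definition). -/
def cayleyGraph {Γ : Type*} [Group Γ] (C : Set Γ) : SimpleGraph Γ where
  Adj u v := u ≠ v ∧ v * u⁻¹ ∈ C ∧ u * v⁻¹ ∈ C
  symm := ⟨fun _ _ h => ⟨h.1.symm, h.2.2, h.2.1⟩⟩
  loopless := ⟨fun _ h => h.1 rfl⟩

/-- The rotation generator `r` of the dihedral group `Dih(m)`. -/
def dihR (m : ℕ) : DihedralGroup m := DihedralGroup.r 1

/-- The reflection generator `s` of the dihedral group `Dih(m)`. -/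
def dihS (m : ℕ) : DihedralGroup m := DihedralGroup.sr 0

/-- The connection set `{r^{±2}, s, r⁸s, r⁹s}`. -/
def conn17 (m : ℕ) : Set (DihedralGroup m) :=
  {dihR m ^ 2, (dihR m ^ 2)⁻¹, dihS m, dihR m ^ 8 * dihS m, dihR m ^ 9 * dihS m}

private lemma fact_inv_le {i : ℕ} (h2i : 2 ≤ i) : (0:ℚ) ≤ 1 - (i:ℚ)⁻¹ ∧ 1 - (i:ℚ)⁻¹ ≤ 1 := by
  have h0 : (0:ℚ) < i := by exact_mod_cast (by omega : 0 < i)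
  constructor
  · have : (i:ℚ)⁻¹ ≤ 1 := by
      rw [inv_le_one_iff₀]; right; exact_mod_cast (by omega : 1 ≤ i)
    linarith
  · have : (0:ℚ) ≤ (i:ℚ)⁻¹ := by positivity
    linarith

private lemma totient_bound {n : ℕ} (hφ : Nat.totient n ≤ 18) (hn0 : 0 < n) : n ≤ 105 := by
  have hsub : n.primeFactors ⊆ ({2,3,5,7,11,13,17,19} : Finset ℕ) := by
    intro p hp
    have hpp : p.Prime := Nat.prime_of_mem_primeFactors hp
    have hdvd : Nat.totient p ∣ Nat.totient n :=
      Nat.totient_dvd_of_dvd (Nat.dvd_of_mem_primeFactors hp)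
    have hppos : 0 < Nat.totient n := Nat.totient_pos.mpr hn0
    have : Nat.totient p ≤ 18 := le_trans (Nat.le_of_dvd hppos hdvd) hφ
    rw [Nat.totient_prime hpp] at this
    have hple : p ≤ 19 := by omega
    have h2p : 2 ≤ p := hpp.two_le
    interval_cases p <;> revert hpp <;> decide
  have euler : (Nat.totient n : ℚ) = n * ∏ p ∈ n.primeFactors, (1 - (p : ℚ)⁻¹) :=
    Nat.totient_eq_mul_prod_factors n
  have hprodS : ∏ p ∈ ({2,3,5,7,11,13,17,19} : Finset ℕ), (1 - (p : ℚ)⁻¹) = 55296/323323 := by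
    norm_num
  have h2' : (0:ℚ) ≤ ∏ p ∈ n.primeFactors, (1 - (p : ℚ)⁻¹) :=
    Finset.prod_nonneg fun i hi => (fact_inv_le (Nat.prime_of_mem_primeFactors hi).two_le).1
  have h1 : ∏ p ∈ (({2,3,5,7,11,13,17,19} : Finset ℕ) \ n.primeFactors), (1 - (p : ℚ)⁻¹) ≤ 1 := by
    apply Finset.prod_le_one
    · intro i hi
      have hi' : i ∈ ({2,3,5,7,11,13,17,19} : Finset ℕ) := (Finset.mem_sdiff.mp hi).1
      have h2i : 2 ≤ i := by fin_cases hi' <;> norm_num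
      exact (fact_inv_le h2i).1
    · intro i hi
      have hi' : i ∈ ({2,3,5,7,11,13,17,19} : Finset ℕ) := (Finset.mem_sdiff.mp hi).1
      have h2i : 2 ≤ i := by fin_cases hi' <;> norm_num
      exact (fact_inv_le h2i).2
  have hge : (55296/323323 : ℚ) ≤ ∏ p ∈ n.primeFactors, (1 - (p : ℚ)⁻¹) := by
    rw [← hprodS, ← Finset.prod_sdiff hsub]
    calc _ ≤ 1 * ∏ p ∈ n.primeFactors, (1 - (p : ℚ)⁻¹) :=
          mul_le_mul h1 le_rfl h2' zero_le_one
    _ = _ := one_mul _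
  have hn18 : (Nat.totient n : ℚ) ≤ 18 := by exact_mod_cast hφ
  have hnn : (0:ℚ) ≤ (n:ℚ) := by positivity
  have : (n:ℚ) < 106 := by nlinarith [euler, hge, hn18, hnn]
  have : n < 106 := by exact_mod_cast this
  omega

private lemma cert2 (z : ℂ) (h1 : z ^ 2 = 1)
    (h2 : -1 - z + z^5 + 2*z^7 - z^8 - z^10 + 2*z^11 + z^13 - z^17 - z^18 = 0) : z = 1 := by
  linear_combination ((1/4 : ℂ)) * h2 + ((3/4 : ℂ) + (-5/4 : ℂ) * z + (3/4 : ℂ) * z^2 + (-5/4 : ℂ) * z^3 + (3/4 : ℂ) * z^4 + (-1/1 : ℂ) * z^5 + (3/4 : ℂ) * z^6 + (-1/2 : ℂ) * z^7 + (1/2 : ℂ) * z^8 + (-1/2 : ℂ) * z^9 + (1/4 : ℂ) * z^10 + (1/4 : ℂ) * z^12 + (1/4 : ℂ) * z^13 + (1/4 : ℂ) * z^14 + (1/4 : ℂ) * z^15 + (1/4 : ℂ) * z^16) * h1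

private lemma cert3 (z : ℂ) (h1 : z ^ 3 = 1)
    (h2 : -1 - z + z^5 + 2*z^7 - z^8 - z^10 + 2*z^11 + z^13 - z^17 - z^18 = 0) : z = 1 := by
  linear_combination ((1/3 : ℂ) + (-1/3 : ℂ) * z) * h2 + ((2/3 : ℂ) + (-1/1 : ℂ) * z + (1/3 : ℂ) * z^2 + (2/3 : ℂ) * z^3 + (-1/1 : ℂ) * z^4 + (2/3 : ℂ) * z^5 + (1/3 : ℂ) * z^6 + (-1/3 : ℂ) * z^7 + (-1/3 : ℂ) * z^8 + (2/3 : ℂ) * z^9 + (-2/3 : ℂ) * z^10 + (2/3 : ℂ) * z^11 + (-1/3 : ℂ) * z^13 + (1/3 : ℂ) * z^14 + (-1/3 : ℂ) * z^16) * h1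

private lemma cert4 (z : ℂ) (h1 : z ^ 4 = 1)
    (h2 : -1 - z + z^5 + 2*z^7 - z^8 - z^10 + 2*z^11 + z^13 - z^17 - z^18 = 0) : z = 1 := by
  linear_combination ((-1/8 : ℂ) + (-1/4 : ℂ) * z + (1/8 : ℂ) * z^2) * h2 + ((9/8 : ℂ) + (-5/8 : ℂ) * z + (1/8 : ℂ) * z^2 + (-1/8 : ℂ) * z^3 + (9/8 : ℂ) * z^4 + (-3/4 : ℂ) * z^5 + (-1/8 : ℂ) * z^6 + (-1/4 : ℂ) * z^7 + (3/4 : ℂ) * z^8 + (-1/4 : ℂ) * z^9 + (-1/8 : ℂ) * z^10 + (-1/4 : ℂ) * z^11 + (1/8 : ℂ) * z^12 + (-1/8 : ℂ) * z^13 + (-3/8 : ℂ) * z^14 + (-1/8 : ℂ) * z^15 + (1/8 : ℂ) * z^16) * h1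

private lemma cert5 (z : ℂ) (h1 : z ^ 5 = 1)
    (h2 : -1 - z + z^5 + 2*z^7 - z^8 - z^10 + 2*z^11 + z^13 - z^17 - z^18 = 0) : z = 1 := by
  linear_combination ((2/5 : ℂ) + (-1/5 : ℂ) * z + (1/5 : ℂ) * z^2 + (-2/5 : ℂ) * z^3) * h2 + ((3/5 : ℂ) + (-6/5 : ℂ) * z + (1/5 : ℂ) * z^3 + (2/5 : ℂ) * z^4 + (1/1 : ℂ) * z^5 + (-7/5 : ℂ) * z^6 + (1/1 : ℂ) * z^7 + (-1/1 : ℂ) * z^8 + (1/1 : ℂ) * z^9 + (-2/5 : ℂ) * z^10 + (2/5 : ℂ) * z^12 + (1/5 : ℂ) * z^13 + (-1/5 : ℂ) * z^15 + (-2/5 : ℂ) * z^16) * h1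

private lemma cert6 (z : ℂ) (h1 : z ^ 6 = 1)
    (h2 : -1 - z + z^5 + 2*z^7 - z^8 - z^10 + 2*z^11 + z^13 - z^17 - z^18 = 0) : z = 1 := by
  linear_combination ((5/12 : ℂ) + (1/3 : ℂ) * z + (3/4 : ℂ) * z^2 + (2/3 : ℂ) * z^3 + (1/12 : ℂ) * z^4) * h2 + ((7/12 : ℂ) + (-7/4 : ℂ) * z + (-13/12 : ℂ) * z^2 + (-17/12 : ℂ) * z^3 + (-3/4 : ℂ) * z^4 + (1/3 : ℂ) * z^5 + (11/12 : ℂ) * z^6 + (-1/6 : ℂ) * z^7 + (-1/6 : ℂ) * z^8 + (-1/6 : ℂ) * z^9 + (-7/12 : ℂ) * z^10 + (1/3 : ℂ) * z^11 + (3/4 : ℂ) * z^12 + (13/12 : ℂ) * z^13 + (17/12 : ℂ) * z^14 + (3/4 : ℂ) * z^15 + (1/12 : ℂ) * z^16) * h1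

private lemma cert7 (z : ℂ) (h1 : z ^ 7 = 1)
    (h2 : -1 - z + z^5 + 2*z^7 - z^8 - z^10 + 2*z^11 + z^13 - z^17 - z^18 = 0) : z = 1 := by
  linear_combination ((-5/7 : ℂ) + (-17/7 : ℂ) * z + (-8/7 : ℂ) * z^2 + (1/7 : ℂ) * z^3 + (-11/7 : ℂ) * z^4 + (-16/7 : ℂ) * z^5) * h2 + ((12/7 : ℂ) + (15/7 : ℂ) * z + (25/7 : ℂ) * z^2 + (1/1 : ℂ) * z^3 + (10/7 : ℂ) * z^4 + (22/7 : ℂ) * z^5 + (-1/7 : ℂ) * z^6 + (-6/7 : ℂ) * z^7 + (-13/7 : ℂ) * z^8 + (15/7 : ℂ) * z^9 + (6/7 : ℂ) * z^10 + (-6/7 : ℂ) * z^11 + (-25/7 : ℂ) * z^12 + (-1/1 : ℂ) * z^13 + (-10/7 : ℂ) * z^14 + (-27/7 : ℂ) * z^15 + (-16/7 : ℂ) * z^16) * h1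

private lemma cert8 (z : ℂ) (h1 : z ^ 8 = 1)
    (h2 : -1 - z + z^5 + 2*z^7 - z^8 - z^10 + 2*z^11 + z^13 - z^17 - z^18 = 0) : z = 1 := by
  linear_combination ((-13/16 : ℂ) + (-3/8 : ℂ) * z + (-3/16 : ℂ) * z^2 + (-3/4 : ℂ) * z^3 + (-1/16 : ℂ) * z^4 + (-5/8 : ℂ) * z^5 + (-7/16 : ℂ) * z^6) * h2 + ((29/16 : ℂ) + (3/16 : ℂ) * z + (9/16 : ℂ) * z^2 + (15/16 : ℂ) * z^3 + (13/16 : ℂ) * z^4 + (-1/8 : ℂ) * z^5 + (11/16 : ℂ) * z^6 + (-11/8 : ℂ) * z^7 + (9/8 : ℂ) * z^8 + (1/8 : ℂ) * z^9 + (-9/16 : ℂ) * z^10 + (-1/8 : ℂ) * z^11 + (-15/16 : ℂ) * z^12 + (-13/16 : ℂ) * z^13 + (-11/16 : ℂ) * z^14 + (-17/16 : ℂ) * z^15 + (-7/16 : ℂ) * z^16) * h1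

private lemma cert9 (z : ℂ) (h1 : z ^ 9 = 1)
    (h2 : -1 - z + z^5 + 2*z^7 - z^8 - z^10 + 2*z^11 + z^13 - z^17 - z^18 = 0) : z = 1 := by
  linear_combination ((-34/477 : ℂ) + (-104/477 : ℂ) * z + (-46/159 : ℂ) * z^2 + (8/477 : ℂ) * z^3 + (-116/477 : ℂ) * z^4 + (-23/159 : ℂ) * z^5 + (-22/477 : ℂ) * z^6 + (-146/477 : ℂ) * z^7) * h2 + ((511/477 : ℂ) + (-113/159 : ℂ) * z + (242/477 : ℂ) * z^2 + (130/477 : ℂ) * z^3 + (12/53 : ℂ) * z^4 + (151/477 : ℂ) * z^5 + (-13/477 : ℂ) * z^6 + (-38/477 : ℂ) * z^7 + (-20/477 : ℂ) * z^8 + (223/477 : ℂ) * z^9 + (-220/477 : ℂ) * z^10 + (16/477 : ℂ) * z^11 + (-12/53 : ℂ) * z^12 + (-185/477 : ℂ) * z^13 + (-91/477 : ℂ) * z^14 + (-56/159 : ℂ) * z^15 + (-146/477 : ℂ) * z^16) * h1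

private lemma cert10 (z : ℂ) (h1 : z ^ 10 = 1)
    (h2 : -1 - z + z^5 + 2*z^7 - z^8 - z^10 + 2*z^11 + z^13 - z^17 - z^18 = 0) : z = 1 := by
  linear_combination ((-31/20 : ℂ) + (-13/5 : ℂ) * z + (-3/20 : ℂ) * z^2 + (-6/5 : ℂ) * z^3 + (-11/4 : ℂ) * z^4 + (-4/5 : ℂ) * z^5 + (-7/20 : ℂ) * z^6 + (-12/5 : ℂ) * z^7 + (-39/20 : ℂ) * z^8) * h2 + ((51/20 : ℂ) + (63/20 : ℂ) * z + (11/4 : ℂ) * z^2 + (27/20 : ℂ) * z^3 + (79/20 : ℂ) * z^4 + (2/1 : ℂ) * z^5 + (-29/20 : ℂ) * z^6 + (-1/2 : ℂ) * z^7 + (-1/2 : ℂ) * z^8 + (3/2 : ℂ) * z^9 + (21/20 : ℂ) * z^10 + (-2/1 : ℂ) * z^11 + (-71/20 : ℂ) * z^12 + (-23/20 : ℂ) * z^13 + (-11/4 : ℂ) * z^14 + (-87/20 : ℂ) * z^15 + (-39/20 : ℂ) * z^16) * h1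

private lemma cert11 (z : ℂ) (h1 : z ^ 11 = 1)
    (h2 : -1 - z + z^5 + 2*z^7 - z^8 - z^10 + 2*z^11 + z^13 - z^17 - z^18 = 0) : z = 1 := by
  linear_combination ((-1/11 : ℂ) + (9/11 : ℂ) * z + (8/11 : ℂ) * z^2 + (-4/11 : ℂ) * z^3 + (-5/11 : ℂ) * z^4 + (5/11 : ℂ) * z^5 + (4/11 : ℂ) * z^6 + (3/11 : ℂ) * z^7 + (2/11 : ℂ) * z^8 + (1/11 : ℂ) * z^9) * h2 + ((12/11 : ℂ) + (-19/11 : ℂ) * z + (-17/11 : ℂ) * z^2 + (-4/11 : ℂ) * z^3 + (9/11 : ℂ) * z^4 + (-1/11 : ℂ) * z^5 + (-1/11 : ℂ) * z^7 + (10/11 : ℂ) * z^8 + (-1/11 : ℂ) * z^9 + (-1/1 : ℂ) * z^10 + (-1/11 : ℂ) * z^11 + (9/11 : ℂ) * z^12 + (7/11 : ℂ) * z^13 + (5/11 : ℂ) * z^14 + (3/11 : ℂ) * z^15 + (1/11 : ℂ) * z^16) * h1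

private lemma cert12 (z : ℂ) (h1 : z ^ 12 = 1)
    (h2 : -1 - z + z^5 + 2*z^7 - z^8 - z^10 + 2*z^11 + z^13 - z^17 - z^18 = 0) : z = 1 := by
  linear_combination ((-1/24 : ℂ) + (-1/12 : ℂ) * z + (3/8 : ℂ) * z^2 + (1/3 : ℂ) * z^3 + (7/24 : ℂ) * z^4 + (1/4 : ℂ) * z^5 + (17/24 : ℂ) * z^6 + (2/3 : ℂ) * z^7 + (5/8 : ℂ) * z^8 + (7/12 : ℂ) * z^9 + (1/24 : ℂ) * z^10) * h2 + ((25/24 : ℂ) + (-7/8 : ℂ) * z + (-7/24 : ℂ) * z^2 + (-17/24 : ℂ) * z^3 + (-5/8 : ℂ) * z^4 + (-7/12 : ℂ) * z^5 + (-25/24 : ℂ) * z^6 + (-13/12 : ℂ) * z^7 + (-13/12 : ℂ) * z^8 + (-1/12 : ℂ) * z^9 + (-1/24 : ℂ) * z^10 + (11/12 : ℂ) * z^11 + (11/8 : ℂ) * z^12 + (31/24 : ℂ) * z^13 + (29/24 : ℂ) * z^14 + (5/8 : ℂ) * z^15 + (1/24 : ℂ) * z^16) * h1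

private lemma cert13 (z : ℂ) (h1 : z ^ 13 = 1)
    (h2 : -1 - z + z^5 + 2*z^7 - z^8 - z^10 + 2*z^11 + z^13 - z^17 - z^18 = 0) : z = 1 := by
  linear_combination ((44/13 : ℂ) + (10/13 : ℂ) * z + (15/13 : ℂ) * z^2 + (33/13 : ℂ) * z^3 + (12/13 : ℂ) * z^4 + (30/13 : ℂ) * z^5 + (9/13 : ℂ) * z^6 + (27/13 : ℂ) * z^7 + (32/13 : ℂ) * z^8 + (-2/13 : ℂ) * z^9 + (42/13 : ℂ) * z^10 + (21/13 : ℂ) * z^11) * h2 + ((-31/13 : ℂ) + (-67/13 : ℂ) * z + (-25/13 : ℂ) * z^2 + (-48/13 : ℂ) * z^3 + (-45/13 : ℂ) * z^4 + (2/13 : ℂ) * z^5 + (-29/13 : ℂ) * z^6 + (67/13 : ℂ) * z^7 + (-50/13 : ℂ) * z^8 + (2/13 : ℂ) * z^9 + (-3/13 : ℂ) * z^10 + (15/13 : ℂ) * z^11 + (59/13 : ℂ) * z^12 + (30/13 : ℂ) * z^13 + (40/13 : ℂ) * z^14 + (63/13 : ℂ) * z^15 + (21/13 : ℂ) * z^16)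 * h1

private lemma cert14 (z : ℂ) (h1 : z ^ 14 = 1)
    (h2 : -1 - z + z^5 + 2*z^7 - z^8 - z^10 + 2*z^11 + z^13 - z^17 - z^18 = 0) : z = 1 := by
  linear_combination ((-493/1204 : ℂ) + (-418/301 : ℂ) * z + (-737/1204 : ℂ) * z^2 + (-31/301 : ℂ) * z^3 + (-1009/1204 : ℂ) * z^4 + (-8/7 : ℂ) * z^5 + (-27/172 : ℂ) * z^6 + (-139/301 : ℂ) * z^7 + (-1441/1204 : ℂ) * z^8 + (-207/301 : ℂ) * z^9 + (107/1204 : ℂ) * z^10 + (-268/301 : ℂ) * z^11 + (-1565/1204 : ℂ) * z^12) * h2 + ((1697/1204 : ℂ) + (961/1204 : ℂ) * z + (2409/1204 : ℂ) * z^2 + (123/172 : ℂ) * z^3 + (1133/1204 : ℂ) * z^4 + (11/7 : ℂ) * z^5 + (-107/1204 : ℂ) * z^6 + (-489/602 : ℂ) * z^7 + (-489/602 : ℂ) * z^8 + (729/602 : ℂ) * z^9 + (327/1204 : ℂ) * z^10 + (-108/301 : ℂ) * z^11 + (-2269/1204 : ℂ) * z^12 + (-103/172 : ℂ) * z^13 +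 (-965/1204 : ℂ) * z^14 + (-2637/1204 : ℂ) * z^15 + (-1565/1204 : ℂ) * z^16) * h1

private lemma cert15 (z : ℂ) (h1 : z ^ 15 = 1)
    (h2 : -1 - z + z^5 + 2*z^7 - z^8 - z^10 + 2*z^11 + z^13 - z^17 - z^18 = 0) : z = 1 := by
  linear_combination ((202/4065 : ℂ) + (-481/4065 : ℂ) * z + (187/1355 : ℂ) * z^2 + (-392/4065 : ℂ) * z^3 + (-167/813 : ℂ) * z^4 + (344/1355 : ℂ) * z^5 + (229/4065 : ℂ) * z^6 + (-229/4065 : ℂ) * z^7 + (-344/1355 : ℂ) * z^8 + (167/813 : ℂ) * z^9 + (392/4065 : ℂ) * z^10 + (-187/1355 : ℂ) * z^11 + (481/4065 : ℂ) * z^12 + (-202/4065 : ℂ) * z^13) * h2 + ((3863/4065 : ℂ) + (-1262/1355 : ℂ) * z + (-16/813 : ℂ) * z^2 + (-169/4065 : ℂ) * z^3 + (409/1355 : ℂ) * z^4 + (1/813 : ℂ) * z^5 + (-1742/4065 : ℂ) * z^6 + (193/813 : ℂ) * z^7 + (-59/813 : ℂ) * z^8 + (193/813 : ℂ) * z^9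 + (-1742/4065 : ℂ) * z^10 + (1/813 : ℂ) * z^11 + (409/1355 : ℂ) * z^12 + (-169/4065 : ℂ) * z^13 + (-16/813 : ℂ) * z^14 + (93/1355 : ℂ) * z^15 + (-202/4065 : ℂ) * z^16) * h1

private lemma cert16 (z : ℂ) (h1 : z ^ 16 = 1)
    (h2 : -1 - z + z^5 + 2*z^7 - z^8 - z^10 + 2*z^11 + z^13 - z^17 - z^18 = 0) : z = 1 := by
  linear_combination ((3/32 : ℂ) + (5/16 : ℂ) * z + (-3/32 : ℂ) * z^2 + (-1/8 : ℂ) * z^3 + (7/32 : ℂ) * z^4 + (-5/16 : ℂ) * z^5 + (9/32 : ℂ) * z^6 + (1/2 : ℂ) * z^7 + (-13/32 : ℂ) * z^8 + (-3/16 : ℂ) * z^9 + (13/32 : ℂ) * z^10 + (-1/8 : ℂ) * z^11 + (7/32 : ℂ) * z^12 + (3/16 : ℂ) * z^13 + (-7/32 : ℂ) * z^14) * h2 + ((29/32 : ℂ) + (-45/32 : ℂ) * z + (-7/32 : ℂ) * z^2 + (7/32 : ℂ) * z^3 + (-3/32 : ℂ) * z^4 + (3/16 : ℂ) * z^5 +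 (11/32 : ℂ) * z^6 + (-11/16 : ℂ) * z^7 + (5/16 : ℂ) * z^8 + (5/16 : ℂ) * z^9 + (-25/32 : ℂ) * z^10 + (7/16 : ℂ) * z^11 + (9/32 : ℂ) * z^12 + (3/32 : ℂ) * z^13 + (13/32 : ℂ) * z^14 + (-1/32 : ℂ) * z^15 + (-7/32 : ℂ) * z^16) * h1

private lemma cert17 (z : ℂ) (h1 : z ^ 17 = 1)
    (h2 : -1 - z + z^5 + 2*z^7 - z^8 - z^10 + 2*z^11 + z^13 - z^17 - z^18 = 0) : z = 1 := by
  linear_combination ((-61/221 : ℂ) + (-122/221 : ℂ) * z + (55/221 : ℂ) * z^2 + (-23/221 : ℂ) * z^3 + (-203/221 : ℂ) * z^4 + (-111/221 : ℂ) * z^5 + (32/221 : ℂ) * z^6 + (-12/221 : ℂ) * z^7 + (-107/221 : ℂ) * z^8 + (-15/221 : ℂ) * z^9 + (-110/221 : ℂ) * z^10 + (-154/221 : ℂ) * z^11 + (-11/221 : ℂ) * z^12 + (81/221 : ℂ) * z^13 + (-99/221 : ℂ) * z^14 + (-177/221 : ℂ) * z^15) * h2 + ((282/221 : ℂ) + (-38/221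 : ℂ) * z + (67/221 : ℂ) * z^2 + (-32/221 : ℂ) * z^3 + (226/221 : ℂ) * z^4 + (253/221 : ℂ) * z^5 + (-43/221 : ℂ) * z^6 + (-87/221 : ℂ) * z^7 + (-87/221 : ℂ) * z^8 + (151/221 : ℂ) * z^9 + (-2/17 : ℂ) * z^10 + (-87/221 : ℂ) * z^11 + (-165/221 : ℂ) * z^12 + (70/221 : ℂ) * z^13 + (-18/221 : ℂ) * z^14 + (-276/221 : ℂ) * z^15 + (-177/221 : ℂ) * z^16) * h1

private lemma cert18 (z : ℂ) (h1 : z ^ 18 = 1)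
    (h2 : -1 - z + z^5 + 2*z^7 - z^8 - z^10 + 2*z^11 + z^13 - z^17 - z^18 = 0) : z = 1 := by
  linear_combination ((409/1908 : ℂ) + (425/477 : ℂ) * z + (703/636 : ℂ) * z^2 + (4/477 : ℂ) * z^3 + (245/1908 : ℂ) * z^4 + (227/159 : ℂ) * z^5 + (433/1908 : ℂ) * z^6 + (-73/477 : ℂ) * z^7 + (5/4 : ℂ) * z^8 + (460/477 : ℂ) * z^9 + (269/1908 : ℂ) * z^10 + (-23/159 : ℂ) * z^11 + (2401/1908 : ℂ) * z^12 + (419/477 : ℂ) * z^13 + (-205/636 : ℂ) * z^14 + (466/477 : ℂ) * z^15 + (2093/1908 : ℂ) * z^16) * h2 + ((1499/1908 : ℂ) + (-1339/636 : ℂ) * z + (-3809/1908 : ℂ) * z^2 + (-2125/1908 : ℂ) * z^3 + (-29/212 : ℂ) * z^4 + (-640/477 : ℂ) * z^5 + (-1457/1908 : ℂ) * z^6 + (1393/954 : ℂ) * z^7 + (457/954 : ℂ) * z^8 + (-731/954 : ℂ) * z^9 + (-1871/1908 : ℂ) * z^10 + (8/477 : ℂ) * z^11 + (453/212 : ℂ)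 * z^12 + (1061/1908 : ℂ) * z^13 + (1249/1908 : ℂ) * z^14 + (1319/636 : ℂ) * z^15 + (2093/1908 : ℂ) * z^16) * h1

private lemma cert19 (z : ℂ) (h1 : z ^ 19 = 1)
    (h2 : -1 - z + z^5 + 2*z^7 - z^8 - z^10 + 2*z^11 + z^13 - z^17 - z^18 = 0) : z = 1 := by
  linear_combination ((-1413/33193 : ℂ) + (-679/33193 : ℂ) * z + (55/33193 : ℂ) * z^2 + (-1358/33193 : ℂ) * z^3 + (2245/33193 : ℂ) * z^4 + (-5780/33193 : ℂ) * z^5 + (-467/33193 : ℂ) * z^6 + (3231/33193 : ℂ) * z^7 + (-9392/33193 : ℂ) * z^8 + (5687/33193 : ℂ) * z^9 + (7029/33193 : ℂ) * z^10 + (-8387/33193 : ℂ) * z^11 + (-7045/33193 : ℂ) * z^12 + (8034/33193 : ℂ) * z^13 + (-4589/33193 : ℂ) * z^14 + (-891/33193 : ℂ) * z^15 + (4422/33193 : ℂ) * z^16 + (-3603/33193 : ℂ) * z^17) * h2 + ((34606/33193 : ℂ) + (-31101/33193 : ℂ) * z + (624/33193 : ℂ) * z^2 + (1303/33193 : ℂ)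 * z^3 + (-887/33193 : ℂ) * z^4 + (2122/33193 : ℂ) * z^5 + (5568/33193 : ℂ) * z^6 + (-5535/33193 : ℂ) * z^7 + (4858/33193 : ℂ) * z^8 + (6739/33193 : ℂ) * z^9 + (-19854/33193 : ℂ) * z^10 + (4592/33193 : ℂ) * z^11 + (3445/33193 : ℂ) * z^12 + (-5480/33193 : ℂ) * z^13 + (3531/33193 : ℂ) * z^14 + (819/33193 : ℂ) * z^15 + (-3603/33193 : ℂ) * z^16) * h1

private lemma cert20 (z : ℂ) (h1 : z ^ 20 = 1)
    (h2 : -1 - z + z^5 + 2*z^7 - z^8 - z^10 + 2*z^11 + z^13 - z^17 - z^18 = 0) : z = 1 := by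
  linear_combination ((-699/760 : ℂ) + (-539/380 : ℂ) * z + (-77/760 : ℂ) * z^2 + (-3/5 : ℂ) * z^3 + (-231/152 : ℂ) * z^4 + (-167/380 : ℂ) * z^5 + (-213/760 : ℂ) * z^6 + (-124/95 : ℂ) * z^7 + (-771/760 : ℂ) * z^8 + (-11/76 : ℂ) * z^9 + (-31/40 : ℂ) * z^10 + (-126/95 : ℂ) * z^11 + (-147/760 : ℂ) * z^12 + (-283/380 : ℂ) * z^13 + (-11/8 : ℂ) * z^14 + (-48/95 : ℂ) * z^15 + (-163/760 : ℂ) * z^16 + (-471/380 : ℂ) * z^17 + (-821/760 : ℂ) * z^18) * h2 + ((1459/760 : ℂ) + (1017/760 : ℂ) * z + (231/152 : ℂ) * z^2 + (533/760 : ℂ) * z^3 + (1611/760 : ℂ) * z^4 + (79/76 : ℂ) * z^5 + (-531/760 : ℂ) * z^6 + (-27/76 : ℂ) * z^7 + (-15/76 : ℂ) * z^8 + (65/76 : ℂ) * z^9 + (229/760 : ℂ) * z^10 + (-79/76 : ℂ) * z^11 + (-1429/760 : ℂ) * z^12 + (-547/760 : ℂ) * z^13 + (-221/152 : ℂ) *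 z^14 + (-1763/760 : ℂ) * z^15 + (-821/760 : ℂ) * z^16) * h1

private lemma cert21 (z : ℂ) (h1 : z ^ 21 = 1)
    (h2 : -1 - z + z^5 + 2*z^7 - z^8 - z^10 + 2*z^11 + z^13 - z^17 - z^18 = 0) : z = 1 := by
  linear_combination ((-4751/4431 : ℂ) + (-3685/4431 : ℂ) * z + (-1188/1477 : ℂ) * z^2 + (-3443/4431 : ℂ) * z^3 + (-2377/4431 : ℂ) * z^4 + (-2376/1477 : ℂ) * z^5 + (-149/633 : ℂ) * z^6 + (-1489/4431 : ℂ) * z^7 + (-2738/1477 : ℂ) * z^8 + (-1562/4431 : ℂ) * z^9 + (-2638/4431 : ℂ) * z^10 + (-1525/1477 : ℂ) * z^11 + (-2543/4431 : ℂ) * z^12 + (-655/633 : ℂ) * z^13 + (-851/1477 : ℂ) * z^14 + (-4490/4431 : ℂ) * z^15 + (-5566/4431 : ℂ) * z^16 + (362/1477 : ℂ) * z^17 + (-5639/4431 : ℂ) * z^18 + (-6085/4431 : ℂ) * z^19) * h2 + ((9182/4431 : ℂ) + (1335/1477 : ℂ) * z + (7249/4431 : ℂ) * z^2 + (1001/633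 : ℂ) * z^3 + (1940/1477 : ℂ) * z^4 + (4754/4431 : ℂ) * z^5 + (4486/4431 : ℂ) * z^6 + (-10534/4431 : ℂ) * z^7 + (3641/4431 : ℂ) * z^8 + (3956/4431 : ℂ) * z^9 + (-1499/4431 : ℂ) * z^10 + (-958/4431 : ℂ) * z^11 + (-3352/1477 : ℂ) * z^12 + (-640/633 : ℂ) * z^13 + (-4553/4431 : ℂ) * z^14 + (-3908/1477 : ℂ) * z^15 + (-6085/4431 : ℂ) * z^16) * h1

private lemma cert22 (z : ℂ) (h1 : z ^ 22 = 1)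
    (h2 : -1 - z + z^5 + 2*z^7 - z^8 - z^10 + 2*z^11 + z^13 - z^17 - z^18 = 0) : z = 1 := by
  linear_combination ((3463/31988 : ℂ) + (2793/7997 : ℂ) * z + (11291/31988 : ℂ) * z^2 + (-849/7997 : ℂ) * z^3 + (-3277/31988 : ℂ) * z^4 + (1108/7997 : ℂ) * z^5 + (7895/31988 : ℂ) * z^6 + (1899/7997 : ℂ) * z^7 + (-645/31988 : ℂ) * z^8 + (1172/7997 : ℂ) * z^9 + (189/2908 : ℂ) * z^10 + (-1073/7997 : ℂ) * z^11 + (17079/31988 : ℂ) * z^12 + (3513/7997 : ℂ) * z^13 + (-6157/31988 : ℂ) * z^14 + (-2296/7997 : ℂ) * z^15 + (12187/31988 : ℂ) * z^16 + (2/11 : ℂ) * z^17 + (3207/31988 : ℂ) * z^18 + (2135/7997 : ℂ) * z^19 + (299/31988 : ℂ) * z^20) * h2 + ((28525/31988 : ℂ) + (-46623/31988 : ℂ) * z + (-22463/31988 : ℂ) * z^2 + (-7895/31988 : ℂ) * z^3 + (6673/31988 : ℂ) * z^4 + (577/7997 : ℂ) * z^5 + (-105/2908 : ℂ) * z^6 +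 (1363/15994 : ℂ) * z^7 + (4267/15994 : ℂ) * z^8 + (2045/15994 : ℂ) * z^9 + (-2171/2908 : ℂ) * z^10 + (676/7997 : ℂ) * z^11 + (18003/31988 : ℂ) * z^12 + (9023/31988 : ℂ) * z^13 + (11747/31988 : ℂ) * z^14 + (8839/31988 : ℂ) * z^15 + (299/31988 : ℂ) * z^16) * h1

private lemma cert23 (z : ℂ) (h1 : z ^ 23 = 1)
    (h2 : -1 - z + z^5 + 2*z^7 - z^8 - z^10 + 2*z^11 + z^13 - z^17 - z^18 = 0) : z = 1 := by
  linear_combination ((4383/1081 : ℂ) + (4580/1081 : ℂ) * z + (545/1081 : ℂ) * z^2 + (2812/1081 : ℂ) * z^3 + (5079/1081 : ℂ) * z^4 + (1044/1081 : ℂ) * z^5 + (1241/1081 : ℂ) * z^6 + (5624/1081 : ℂ) * z^7 + (2601/1081 : ℂ) * z^8 + (176/1081 : ℂ) * z^9 + (4858/1081 : ℂ) * z^10 + (3767/1081 : ℂ) * z^11 + (77/1081 : ℂ) * z^12 + (4000/1081 : ℂ) * z^13 + (5094/1081 : ℂ) * z^14 + (530/1081 : ℂ) * z^15 + (1624/1081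 : ℂ) * z^16 + (5547/1081 : ℂ) * z^17 + (1857/1081 : ℂ) * z^18 + (766/1081 : ℂ) * z^19 + (5448/1081 : ℂ) * z^20 + (3023/1081 : ℂ) * z^21) * h2 + ((-3302/1081 : ℂ) + (-10044/1081 : ℂ) * z + (-5125/1081 : ℂ) * z^2 + (-3357/1081 : ℂ) * z^3 + (-7891/1081 : ℂ) * z^4 + (-1740/1081 : ℂ) * z^5 + (2295/1081 : ℂ) * z^6 + (2446/1081 : ℂ) * z^7 + (-636/1081 : ℂ) * z^8 + (-1188/1081 : ℂ) * z^9 + (-3294/1081 : ℂ) * z^10 + (4148/1081 : ℂ) * z^11 + (7404/1081 : ℂ) * z^12 + (2623/1081 : ℂ) * z^13 + (6214/1081 : ℂ) * z^14 + (8471/1081 : ℂ) * z^15 + (3023/1081 : ℂ) * z^16) * h1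

private lemma cert24 (z : ℂ) (h1 : z ^ 24 = 1)
    (h2 : -1 - z + z^5 + 2*z^7 - z^8 - z^10 + 2*z^11 + z^13 - z^17 - z^18 = 0) : z = 1 := by
  linear_combination ((-1139/2256 : ℂ) + (-749/1128 : ℂ) * z + (-95/752 : ℂ) * z^2 + (-77/564 : ℂ) * z^3 + (-847/2256 : ℂ) * z^4 + (-145/376 : ℂ) * z^5 + (343/2256 : ℂ) * z^6 + (-1/141 : ℂ) * z^7 + (-385/752 : ℂ) * z^8 + (131/1128 : ℂ) * z^9 + (-349/2256 : ℂ) * z^10 + (-155/188 : ℂ) * z^11 + (-815/2256 : ℂ) * z^12 + (-275/1128 : ℂ) * z^13 + (-243/752 : ℂ) * z^14 + (-50/141 : ℂ) * z^15 + (-355/2256 : ℂ) * z^16 + (-71/376 : ℂ) * z^17 + (-605/2256 : ℂ) * z^18 + (-85/564 : ℂ) * z^19 + (5/16 : ℂ) * z^20 + (-403/1128 : ℂ) * z^21 + (-1417/2256 : ℂ) * z^22) * h2 + ((3395/2256 : ℂ) + (127/752 : ℂ) * z + (1783/2256 : ℂ) * z^2 + (593/2256 : ℂ) * z^3 + (385/752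 : ℂ) * z^4 + (289/1128 : ℂ) * z^5 + (-971/2256 : ℂ) * z^6 + (-1445/1128 : ℂ) * z^7 + (-497/1128 : ℂ) * z^8 + (487/1128 : ℂ) * z^9 + (25/2256 : ℂ) * z^10 + (193/1128 : ℂ) * z^11 + (-315/752 : ℂ) * z^12 + (365/2256 : ℂ) * z^13 + (-101/2256 : ℂ) * z^14 + (-741/752 : ℂ) * z^15 + (-1417/2256 : ℂ) * z^16) * h1

private lemma cert25 (z : ℂ) (h1 : z ^ 25 = 1)
    (h2 : -1 - z + z^5 + 2*z^7 - z^8 - z^10 + 2*z^11 + z^13 - z^17 - z^18 = 0) : z = 1 := by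
  linear_combination ((-3167/8725 : ℂ) + (54591/8725 : ℂ) * z + (37299/8725 : ℂ) * z^2 + (-15168/8725 : ℂ) * z^3 + (4578/1745 : ℂ) * z^4 + (60948/8725 : ℂ) * z^5 + (8481/8725 : ℂ) * z^6 + (-8811/8725 : ℂ) * z^7 + (48947/8725 : ℂ) * z^8 + (9156/1745 : ℂ) * z^9 + (-10737/8725 : ℂ) * z^10 + (11871/8725 : ℂ) * z^11 + (61204/8725 : ℂ) * z^12 + (17912/8725 : ℂ) * z^13 + (-3071/1745 : ℂ) * z^14 + (43028/8725 : ℂ) * z^15 + (53186/8725 : ℂ) * z^16 + (-7406/8725 : ℂ) * z^17 + (2752/8725 : ℂ) * z^18 + (12227/1745 : ℂ) * z^19 + (27868/8725 : ℂ) * z^20 + (-15424/8725 : ℂ) * z^21 + (33909/8725 : ℂ) * z^22 + (56517/8725 : ℂ) * z^23) * h2 + ((11892/8725 : ℂ) + (-60149/8725 : ℂ) * z + (-18378/1745 : ℂ) * z^2 + (-22131/8725 : ℂ) * z^3 + (-7722/8725 : ℂ) * z^4 + (-17401/1745 : ℂ) * z^5 + (-14838/8725 : ℂ) * z^6 + (6259/1745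 : ℂ) * z^7 + (11409/1745 : ℂ) * z^8 + (-10366/1745 : ℂ) * z^9 + (-38563/8725 : ℂ) * z^10 + (1474/1745 : ℂ) * z^11 + (89003/8725 : ℂ) * z^12 + (12444/8725 : ℂ) * z^13 + (3697/1745 : ℂ) * z^14 + (90426/8725 : ℂ) * z^15 + (56517/8725 : ℂ) * z^16) * h1

private lemma cert26 (z : ℂ) (h1 : z ^ 26 = 1)
    (h2 : -1 - z + z^5 + 2*z^7 - z^8 - z^10 + 2*z^11 + z^13 - z^17 - z^18 = 0) : z = 1 := by
  linear_combination ((59829/36452 : ℂ) + (3778/9113 : ℂ) * z + (24709/36452 : ℂ) * z^2 + (9961/9113 : ℂ) * z^3 + (12469/36452 : ℂ) * z^4 + (11256/9113 : ℂ) * z^5 + (17649/36452 : ℂ) * z^6 + (8196/9113 : ℂ) * z^7 + (42381/36452 : ℂ) * z^8 + (-584/9113 : ℂ) * z^9 + (57493/36452 : ℂ) * z^10 + (7445/9113 : ℂ) * z^11 + (-107/2804 : ℂ) * z^12 + (15539/9113 : ℂ) * z^13 + (11537/36452 : ℂ) * z^14 + (3990/9113 : ℂ) * z^15 + (51297/36452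 : ℂ) * z^16 + (4947/9113 : ℂ) * z^17 + (37705/36452 : ℂ) * z^18 + (1549/9113 : ℂ) * z^19 + (41533/36452 : ℂ) * z^20 + (11489/9113 : ℂ) * z^21 + (-4663/36452 : ℂ) * z^22 + (21/13 : ℂ) * z^23 + (27713/36452 : ℂ) * z^24) * h2 + ((-23377/36452 : ℂ) + (-111393/36452 : ℂ) * z + (-39821/36452 : ℂ) * z^2 + (-64553/36452 : ℂ) * z^3 + (-52313/36452 : ℂ) * z^4 + (584/9113 : ℂ) * z^5 + (-47561/36452 : ℂ) * z^6 + (67/26 : ℂ) * z^7 + (-32463/18226 : ℂ) * z^8 + (3365/18226 : ℂ) * z^9 + (-14983/36452 : ℂ) * z^10 + (5004/9113 : ℂ) * z^11 + (87489/36452 : ℂ) * z^12 + (41293/36452 : ℂ) * z^13 + (54221/36452 : ℂ) * z^14 + (86597/36452 : ℂ) * z^15 + (27713/36452 : ℂ) * z^16) * h1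

private lemma cert27 (z : ℂ) (h1 : z ^ 27 = 1)
    (h2 : -1 - z + z^5 + 2*z^7 - z^8 - z^10 + 2*z^11 + z^13 - z^17 - z^18 = 0) : z = 1 := by
  linear_combination ((-247430/616761 : ℂ) + (-361075/616761 : ℂ) * z + (-4403/205587 : ℂ) * z^2 + (-201185/616761 : ℂ) * z^3 + (-446860/616761 : ℂ) * z^4 + (-70969/205587 : ℂ) * z^5 + (21046/616761 : ℂ) * z^6 + (-224629/616761 : ℂ) * z^7 + (-865/1293 : ℂ) * z^8 + (-64739/616761 : ℂ) * z^9 + (-178384/616761 : ℂ) * z^10 + (-141938/205587 : ℂ) * z^11 + (-12770/616761 : ℂ) * z^12 + (-103897/616761 : ℂ) * z^13 + (-153649/205587 : ℂ) * z^14 + (-277079/616761 : ℂ) * z^15 + (-100609/616761 : ℂ) * z^16 + (-287/1293 : ℂ) * z^17 + (-281297/616761 : ℂ) * z^18 + (-144517/616761 : ℂ) * z^19 + (-96305/205587 : ℂ) * z^20 + (-325205/616761 : ℂ) * z^21 + (-148735/616761 : ℂ) * z^22 + (11711/205587 : ℂ) * z^23 + (-321917/616761 : ℂ) * z^24 + (-413044/616761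 : ℂ) * z^25) * h2 + ((864191/616761 : ℂ) + (-2752/205587 : ℂ) * z + (374284/616761 : ℂ) * z^2 + (214394/616761 : ℂ) * z^3 + (72005/68529 : ℂ) * z^4 + (412337/616761 : ℂ) * z^5 + (-169214/616761 : ℂ) * z^6 + (-304486/616761 : ℂ) * z^7 + (-38671/616761 : ℂ) * z^8 + (365141/616761 : ℂ) * z^9 + (-111515/616761 : ℂ) * z^10 + (-201076/616761 : ℂ) * z^11 + (-52660/68529 : ℂ) * z^12 + (-113602/616761 : ℂ) * z^13 + (-286784/616761 : ℂ) * z^14 + (-244987/205587 : ℂ) * z^15 + (-413044/616761 : ℂ) * z^16) * h1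

private lemma cert28 (z : ℂ) (h1 : z ^ 28 = 1)
    (h2 : -1 - z + z^5 + 2*z^7 - z^8 - z^10 + 2*z^11 + z^13 - z^17 - z^18 = 0) : z = 1 := by
  linear_combination ((51915/402136 : ℂ) + (-95365/201068 : ℂ) * z + (8157/402136 : ℂ) * z^2 + (7796/50267 : ℂ) * z^3 + (-206429/402136 : ℂ) * z^4 + (-2063/4676 : ℂ) * z^5 + (8907/57448 : ℂ) * z^6 + (11420/50267 : ℂ) * z^7 + (-177437/402136 : ℂ) * z^8 + (-61613/201068 : ℂ) * z^9 + (75661/402136 : ℂ) * z^10 + (-20873/50267 : ℂ) * z^11 + (-115069/402136 : ℂ) * z^12 + (243/668 : ℂ) * z^13 + (-70291/402136 : ℂ) * z^14 + (-27679/50267 : ℂ) * z^15 + (-108029/402136 : ℂ) * z^16 + (21251/201068 : ℂ) * z^17 + (15709/402136 : ℂ) * z^18 + (-395/1169 : ℂ) * z^19 + (2973/57448 : ℂ) * z^20 + (-65389/201068 : ℂ) * z^21 + (-157571/402136 : ℂ) * z^22 + (-880/50267 : ℂ) * z^23 + (106363/402136 : ℂ) * z^24 + (-22389/201068 : ℂ)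 * z^25 + (-1565/2408 : ℂ) * z^26) * h2 + ((350221/402136 : ℂ) + (-263321/402136 : ℂ) * z + (182573/402136 : ℂ) * z^2 + (-10075/57448 : ℂ) * z^3 + (144061/402136 : ℂ) * z^4 + (5067/4676 : ℂ) * z^5 + (-75661/402136 : ℂ) * z^6 + (-20861/201068 : ℂ) * z^7 + (-142465/201068 : ℂ) * z^8 + (150639/201068 : ℂ) * z^9 + (-65189/402136 : ℂ) * z^10 + (-13497/201068 : ℂ) * z^11 + (-164611/402136 : ℂ) * z^12 + (14189/57448 : ℂ) * z^13 + (61585/402136 : ℂ) * z^14 + (-306133/402136 : ℂ) * z^15 + (-1565/2408 : ℂ) * z^16) * h1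

private lemma cert29 (z : ℂ) (h1 : z ^ 29 = 1)
    (h2 : -1 - z + z^5 + 2*z^7 - z^8 - z^10 + 2*z^11 + z^13 - z^17 - z^18 = 0) : z = 1 := by
  linear_combination ((-49179/270773 : ℂ) + (141994/270773 : ℂ) * z + (61379/270773 : ℂ) * z^2 + (-55544/270773 : ℂ) * z^3 + (79659/270773 : ℂ) * z^4 + (-15427/270773 : ℂ) * z^5 + (32138/270773 : ℂ) * z^6 + (79703/270773 : ℂ) * z^7 + (-15383/270773 : ℂ) * z^8 + (119820/270773 : ℂ) * z^9 + (2897/270773 : ℂ) * z^10 + (-77718/270773 : ℂ) * z^11 + (113455/270773 : ℂ) * z^12 + (64276/270773 : ℂ) * z^13 + (25798/270773 : ℂ) * z^14 + (-12651/270773 : ℂ) * z^15 + (32942/270773 : ℂ) * z^16 + (79898/270773 : ℂ) * z^17 + (-107408/270773 : ℂ) * z^18 + (116013/270773 : ℂ) * z^19 + (197044/270773 : ℂ) * z^20 + (-132768/270773 : ℂ) * z^21 + (-51737/270773 : ℂ) * z^22 + (171684/270773 : ℂ) * z^23 + (-15622/270773 : ℂ) * z^24 + (31334/270773 : ℂ)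 * z^25 + (76927/270773 : ℂ) * z^26 + (38478/270773 : ℂ) * z^27) * h2 + ((319952/270773 : ℂ) + (-363588/270773 : ℂ) * z + (-203373/270773 : ℂ) * z^2 + (-5835/270773 : ℂ) * z^3 + (-24115/270773 : ℂ) * z^4 + (-113411/270773 : ℂ) * z^5 + (125283/270773 : ℂ) * z^6 + (-148820/270773 : ℂ) * z^7 + (213303/270773 : ℂ) * z^8 + (-44014/270773 : ℂ) * z^9 + (-261432/270773 : ℂ) * z^10 + (81469/270773 : ℂ) * z^11 + (156062/270773 : ℂ) * z^12 + (15712/270773 : ℂ) * z^13 + (108261/270773 : ℂ) * z^14 + (115405/270773 : ℂ) * z^15 + (38478/270773 : ℂ) * z^16) * h1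

private lemma cert30 (z : ℂ) (h1 : z ^ 30 = 1)
    (h2 : -1 - z + z^5 + 2*z^7 - z^8 - z^10 + 2*z^11 + z^13 - z^17 - z^18 = 0) : z = 1 := by
  linear_combination ((-2349691/3430860 : ℂ) + (-768218/857715 : ℂ) * z + (55879/1143620 : ℂ) * z^2 + (-362491/857715 : ℂ) * z^3 + (-711931/686172 : ℂ) * z^4 + (-93788/285905 : ℂ) * z^5 + (-541567/3430860 : ℂ) * z^6 + (-713177/857715 : ℂ) * z^7 + (-756273/1143620 : ℂ) * z^8 + (8269/171543 : ℂ) * z^9 + (-1944311/3430860 : ℂ) * z^10 + (-296826/285905 : ℂ) * z^11 + (-321403/3430860 : ℂ) * z^12 + (-261146/857715 : ℂ) * z^13 + (-835/844 : ℂ) * z^14 + (-218524/857715 : ℂ) * z^15 + (-727367/3430860 : ℂ) * z^16 + (-257369/285905 : ℂ) * z^17 + (-2275159/3430860 : ℂ) * z^18 + (-26968/171543 : ℂ) * z^19 + (-465937/1143620 : ℂ) * z^20 + (-664858/857715 : ℂ) * z^21 + (-734843/3430860 : ℂ) * z^22 + (-166372/285905 : ℂ) * z^23 + (-570983/686172 :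 ℂ) * z^24 + (-279779/857715 : ℂ) * z^25 + (-101949/1143620 : ℂ) * z^26 + (-666727/857715 : ℂ) * z^27 + (-2520179/3430860 : ℂ) * z^28) * h2 + ((5780551/3430860 : ℂ) + (663901/1143620 : ℂ) * z + (581047/686172 : ℂ) * z^2 + (1282327/3430860 : ℂ) * z^3 + (1669873/1143620 : ℂ) * z^4 + (116771/171543 : ℂ) * z^5 + (-1405849/3430860 : ℂ) * z^6 + (-113747/343086 : ℂ) * z^7 + (-59/1626 : ℂ) * z^8 + (195193/343086 : ℂ) * z^9 + (-64399/3430860 : ℂ) * z^10 + (-116560/171543 : ℂ) * z^11 + (-1324677/1143620 : ℂ) * z^12 + (-1424963/3430860 : ℂ) * z^13 + (-594551/686172 : ℂ) * z^14 + (-1729029/1143620 : ℂ) * z^15 + (-2520179/3430860 : ℂ) * z^16) * h1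

private lemma cert31 (z : ℂ) (h1 : z ^ 31 = 1)
    (h2 : -1 - z + z^5 + 2*z^7 - z^8 - z^10 + 2*z^11 + z^13 - z^17 - z^18 = 0) : z = 1 := by
  linear_combination ((26301/143995 : ℂ) + (-75676/143995 : ℂ) * z + (12904/143995 : ℂ) * z^2 + (22992/143995 : ℂ) * z^3 + (-14526/28799 : ℂ) * z^4 + (-5223/143995 : ℂ) * z^5 + (1097/28799 : ℂ) * z^6 + (-14311/143995 : ℂ) * z^7 + (-34107/143995 : ℂ) * z^8 + (-23399/143995 : ℂ) * z^9 + (44008/143995 : ℂ) * z^10 + (-51614/143995 : ℂ) * z^11 + (-41526/143995 : ℂ) * z^12 + (47054/143995 : ℂ) * z^13 + (-54923/143995 : ℂ) * z^14 + (-28622/143995 : ℂ) * z^15 + (5060/28799 : ℂ) * z^16 + (-29061/143995 : ℂ) * z^17 + (-21484/143995 : ℂ) * z^18 + (-8287/28799 : ℂ) * z^19 + (7434/143995 : ℂ) * z^20 + (16127/143995 : ℂ) * z^21 + (-54757/143995 : ℂ) * z^22 + (5227/28799 : ℂ) * z^23 + (-44749/143995 : ℂ) * z^24 + (-36056/143995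 : ℂ) * z^25 + (12813/143995 : ℂ) * z^26 + (-7138/143995 : ℂ) * z^27 + (439/143995 : ℂ) * z^28 + (-53922/143995 : ℂ) * z^29) * h2 + ((117694/143995 : ℂ) + (-18924/28799 : ℂ) * z + (62772/143995 : ℂ) * z^2 + (-35896/143995 : ℂ) * z^3 + (49638/143995 : ℂ) * z^4 + (104154/143995 : ℂ) * z^5 + (-75938/143995 : ℂ) * z^6 + (74332/143995 : ℂ) * z^7 + (-106243/143995 : ℂ) * z^8 + (17272/28799 : ℂ) * z^9 + (-19053/143995 : ℂ) * z^10 + (-26883/143995 : ℂ) * z^11 + (-23243/143995 : ℂ) * z^12 + (1135/28799 : ℂ) * z^13 + (-6699/143995 : ℂ) * z^14 + (-53483/143995 : ℂ) * z^15 + (-53922/143995 : ℂ) * z^16) * h1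

private lemma cert32 (z : ℂ) (h1 : z ^ 32 = 1)
    (h2 : -1 - z + z^5 + 2*z^7 - z^8 - z^10 + 2*z^11 + z^13 - z^17 - z^18 = 0) : z = 1 := by
  linear_combination ((3/64 : ℂ) + (-1997/992 : ℂ) * z + (-2557/1984 : ℂ) * z^2 + (201/496 : ℂ) * z^3 + (-1863/1984 : ℂ) * z^4 + (-2331/992 : ℂ) * z^5 + (-409/1984 : ℂ) * z^6 + (51/124 : ℂ) * z^7 + (-4307/1984 : ℂ) * z^8 + (-1541/992 : ℂ) * z^9 + (1171/1984 : ℂ) * z^10 + (-407/496 : ℂ) * z^11 + (-4295/1984 : ℂ) * z^12 + (-467/992 : ℂ) * z^13 + (503/1984 : ℂ) * z^14 + (-56/31 : ℂ) * z^15 + (-3491/1984 : ℂ) * z^16 + (515/992 : ℂ) * z^17 + (-1213/1984 : ℂ) * z^18 + (-1159/496 : ℂ) * z^19 + (-1287/1984 : ℂ) * z^20 + (229/992 : ℂ) * z^21 + (-2617/1984 : ℂ) * z^22 + (-213/124 : ℂ) * z^23 + (-83/1984 : ℂ) * z^24 + (-437/992 : ℂ) * z^25 + (-3949/1984 : ℂ)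 * z^26 + (-551/496 : ℂ) * z^27 + (1145/1984 : ℂ) * z^28 + (-1139/992 : ℂ) * z^29 + (-4521/1984 : ℂ) * z^30) * h2 + ((61/64 : ℂ) + (1917/1984 : ℂ) * z + (6551/1984 : ℂ) * z^2 + (1753/1984 : ℂ) * z^3 + (1059/1984 : ℂ) * z^4 + (3309/992 : ℂ) * z^5 + (1077/1984 : ℂ) * z^6 + (-1389/992 : ℂ) * z^7 + (-1893/992 : ℂ) * z^8 + (2203/992 : ℂ) * z^9 + (1321/1984 : ℂ) * z^10 + (-151/992 : ℂ) * z^11 + (-6153/1984 : ℂ) * z^12 + (-1059/1984 : ℂ) * z^13 + (-1133/1984 : ℂ) * z^14 + (-6799/1984 : ℂ) * z^15 + (-4521/1984 : ℂ) * z^16) * h1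

private lemma cert33 (z : ℂ) (h1 : z ^ 33 = 1)
    (h2 : -1 - z + z^5 + 2*z^7 - z^8 - z^10 + 2*z^11 + z^13 - z^17 - z^18 = 0) : z = 1 := by
  linear_combination ((-98261/30426 : ℂ) + (-111745/30426 : ℂ) * z + (562/5071 : ℂ) * z^2 + (-32611/15213 : ℂ) * z^3 + (-70043/15213 : ℂ) * z^4 + (-4277/5071 : ℂ) * z^5 + (-11686/15213 : ℂ) * z^6 + (-130807/30426 : ℂ) * z^7 + (-22181/10142 : ℂ) * z^8 + (-2279/30426 : ℂ) * z^9 + (-4987/1383 : ℂ) * z^10 + (-17904/5071 : ℂ) * z^11 + (3500/15213 : ℂ) * z^12 + (-33932/15213 : ℂ) * z^13 + (-22743/5071 : ℂ) * z^14 + (-21341/30426 : ℂ) * z^15 + (-34825/30426 : ℂ) * z^16 + (-22181/5071 : ℂ) * z^17 + (-50639/30426 : ℂ) * z^18 + (-10201/30426 : ℂ) * z^19 + (-39223/10142 : ℂ) * z^20 + (-8677/2766 : ℂ) * z^21 + (-1121/15213 : ℂ) * z^22 + (-12587/5071 : ℂ) * z^23 + (-118541/30426 : ℂ) * z^24 +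 (-14545/30426 : ℂ) * z^25 + (-9594/5071 : ℂ) * z^26 + (-65422/15213 : ℂ) * z^27 + (-37639/30426 : ℂ) * z^28 + (-5139/10142 : ℂ) * z^29 + (-122885/30426 : ℂ) * z^30 + (-82447/30426 : ℂ) * z^31) * h2 + ((128687/30426 : ℂ) + (29930/5071 : ℂ) * z + (108373/30426 : ℂ) * z^2 + (30925/15213 : ℂ) * z^3 + (34218/5071 : ℂ) * z^4 + (67487/30426 : ℂ) * z^5 + (-5701/2766 : ℂ) * z^6 + (-38971/30426 : ℂ) * z^7 + (6899/30426 : ℂ) * z^8 + (47225/30426 : ℂ) * z^9 + (2308/1383 : ℂ) * z^10 + (-105961/30426 : ℂ) * z^11 + (-56161/10142 : ℂ) * z^12 + (-26528/15213 : ℂ) * z^13 + (-69151/15213 : ℂ) * z^14 + (-34222/5071 : ℂ) * z^15 + (-82447/30426 : ℂ) * z^16) * h1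

private lemma cert34 (z : ℂ) (h1 : z ^ 34 = 1)
    (h2 : -1 - z + z^5 + 2*z^7 - z^8 - z^10 + 2*z^11 + z^13 - z^17 - z^18 = 0) : z = 1 := by
  linear_combination ((-158205/91052 : ℂ) + (-61/221 : ℂ) * z + (-60053/91052 : ℂ) * z^2 + (-29141/22763 : ℂ) * z^3 + (-27453/91052 : ℂ) * z^4 + (-40303/22763 : ℂ) * z^5 + (-28105/91052 : ℂ) * z^6 + (-9900/22763 : ℂ) * z^7 + (-171217/91052 : ℂ) * z^8 + (4421/22763 : ℂ) * z^9 + (-113933/91052 : ℂ) * z^10 + (-31357/22763 : ℂ) * z^11 + (7679/91052 : ℂ) * z^12 + (-31520/22763 : ℂ) * z^13 + (-36969/91052 : ℂ) * z^14 + (-23370/22763 : ℂ) * z^15 + (-581/412 : ℂ) * z^16 + (1168/22763 : ℂ) * z^17 + (-153533/91052 : ℂ) * z^18 + (-11422/22763 : ℂ) * z^19 + (-21313/91052 : ℂ) * z^20 + (-46146/22763 : ℂ) * z^21 + (-12921/91052 : ℂ) * z^22 + (-21778/22763 : ℂ) * z^23 + (-93745/91052 : ℂ) * z^24 + (-317/22763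 : ℂ) * z^25 + (-152265/91052 : ℂ) * z^26 + (-14947/22763 : ℂ) * z^27 + (-66421/91052 : ℂ) * z^28 + (-35153/22763 : ℂ) * z^29 + (31051/91052 : ℂ) * z^30 + (-33055/22763 : ℂ) * z^31 + (-107845/91052 : ℂ) * z^32) * h2 + ((249257/91052 : ℂ) + (92285/91052 : ℂ) * z + (85185/91052 : ℂ) * z^2 + (176617/91052 : ℂ) * z^3 + (144017/91052 : ℂ) * z^4 + (7615/22763 : ℂ) * z^5 + (164185/91052 : ℂ) * z^6 + (-154379/45526 : ℂ) * z^7 + (101097/45526 : ℂ) * z^8 + (151/442 : ℂ) * z^9 + (-6141/7004 : ℂ) * z^10 + (-4591/22763 : ℂ) * z^11 + (-207033/91052 : ℂ) * z^12 + (-109561/91052 : ℂ) * z^13 + (-101169/91052 : ℂ) * z^14 + (-240065/91052 : ℂ) * z^15 + (-107845/91052 : ℂ) * z^16) * h1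

private lemma cert35 (z : ℂ) (h1 : z ^ 35 = 1)
    (h2 : -1 - z + z^5 + 2*z^7 - z^8 - z^10 + 2*z^11 + z^13 - z^17 - z^18 = 0) : z = 1 := by
  linear_combination ((-45148/4081735 : ℂ) + (-1654551/4081735 : ℂ) * z + (-406239/4081735 : ℂ) * z^2 + (103433/4081735 : ℂ) * z^3 + (-319107/816347 : ℂ) * z^4 + (-2564613/4081735 : ℂ) * z^5 + (-63913/583105 : ℂ) * z^6 + (76106/4081735 : ℂ) * z^7 + (-2536607/4081735 : ℂ) * z^8 + (-187708/816347 : ℂ) * z^9 + (659527/4081735 : ℂ) * z^10 + (-1953186/4081735 : ℂ) * z^11 + (-1429689/4081735 : ℂ) * z^12 + (98219/583105 : ℂ) * z^13 + (-56309/816347 : ℂ) * z^14 + (-1980513/4081735 : ℂ) * z^15 + (-1470841/4081735 : ℂ) * z^16 + (-222529/4081735 : ℂ) * z^17 + (-1831932/4081735 : ℂ) * z^18 + (-375416/816347 : ℂ) * z^19 + (77661/583105 : ℂ) * z^20 + (-1037356/4081735 : ℂ) * z^21 + (-2119729/4081735 : ℂ) * z^22 + (-548752/4081735 : ℂ) *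 z^23 + (-45567/816347 : ℂ) * z^24 + (-221638/4081735 : ℂ) * z^25 + (-1065451/4081735 : ℂ) * z^26 + (-115947/583105 : ℂ) * z^27 + (-1655442/4081735 : ℂ) * z^28 + (-329849/816347 : ℂ) * z^29 + (-1328328/4081735 : ℂ) * z^30 + (242649/4081735 : ℂ) * z^31 + (-839724/4081735 : ℂ) * z^32 + (-2420707/4081735 : ℂ) * z^33) * h2 + ((4126883/4081735 : ℂ) + (-2382036/4081735 : ℂ) * z + (412158/816347 : ℂ) * z^2 + (43258/583105 : ℂ) * z^3 + (1492102/4081735 : ℂ) * z^4 + (823000/816347 : ℂ) * z^5 + (1357453/4081735 : ℂ) * z^6 + (-25050/816347 : ℂ) * z^7 + (-140004/816347 : ℂ) * z^8 + (544337/816347 : ℂ) * z^9 + (-1627347/4081735 : ℂ) * z^10 + (-176796/816347 : ℂ) * z^11 + (-2977573/4081735 : ℂ) * z^12 + (-155097/583105 : ℂ) * z^13 + (-119415/816347 : ℂ) * z^14 + (-3260431/4081735 : ℂ) * z^15 + (-2420707/4081735 : ℂ) * z^16) * h1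

private lemma cert36 (z : ℂ) (h1 : z ^ 36 = 1)
    (h2 : -1 - z + z^5 + 2*z^7 - z^8 - z^10 + 2*z^11 + z^13 - z^17 - z^18 = 0) : z = 1 := by
  linear_combination ((259771/278568 : ℂ) + (177007/139284 : ℂ) * z + (703/1272 : ℂ) * z^2 + (19226/34821 : ℂ) * z^3 + (341291/278568 : ℂ) * z^4 + (46657/46428 : ℂ) * z^5 + (159445/278568 : ℂ) * z^6 + (43843/34821 : ℂ) * z^7 + (615/584 : ℂ) * z^8 + (81947/139284 : ℂ) * z^9 + (321101/278568 : ℂ) * z^10 + (7985/11607 : ℂ) * z^11 + (134251/278568 : ℂ) * z^12 + (162775/139284 : ℂ) * z^13 + (68351/92856 : ℂ) * z^14 + (17963/34821 : ℂ) * z^15 + (331187/278568 : ℂ) * z^16 + (347/292 : ℂ) * z^17 + (130981/278568 : ℂ) * z^18 + (28153/34821 : ℂ) * z^19 + (161665/92856 : ℂ) * z^20 + (89783/139284 : ℂ) * z^21 + (25517/278568 : ℂ) * z^22 + (18700/11607 : ℂ) * z^23 + (234811/278568 : ℂ) * z^24 + (-31169/139284 : ℂ) * z^25 + (809/584 : ℂ)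 * z^26 + (54473/34821 : ℂ) * z^27 + (49211/278568 : ℂ) * z^28 + (16517/46428 : ℂ) * z^29 + (547333/278568 : ℂ) * z^30 + (31273/34821 : ℂ) * z^31 + (12065/92856 : ℂ) * z^32 + (229739/139284 : ℂ) * z^33 + (305429/278568 : ℂ) * z^34) * h2 + ((18797/278568 : ℂ) + (-297451/92856 : ℂ) * z + (-507971/278568 : ℂ) * z^2 + (-307765/278568 : ℂ) * z^3 + (-55011/30952 : ℂ) * z^4 + (-180731/139284 : ℂ) * z^5 + (-85373/278568 : ℂ) * z^6 + (81655/139284 : ℂ) * z^7 + (-21017/139284 : ℂ) * z^8 + (-81029/139284 : ℂ) * z^9 + (-311165/278568 : ℂ) * z^10 + (170503/139284 : ℂ) * z^11 + (88613/30952 : ℂ) * z^12 + (3923/3816 : ℂ) * z^13 + (495673/278568 : ℂ) * z^14 + (254969/92856 : ℂ) * z^15 + (305429/278568 : ℂ) * z^16) * h1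

private lemma cert37 (z : ℂ) (h1 : z ^ 37 = 1)
    (h2 : -1 - z + z^5 + 2*z^7 - z^8 - z^10 + 2*z^11 + z^13 - z^17 - z^18 = 0) : z = 1 := by
  linear_combination ((-9905186/17955841 : ℂ) + (-8572325/17955841 : ℂ) * z + (-963561/17955841 : ℂ) * z^2 + (-7151172/17955841 : ℂ) * z^3 + (-9440093/17955841 : ℂ) * z^4 + (-6170652/17955841 : ℂ) * z^5 + (-289418/17955841 : ℂ) * z^6 + (-6705948/17955841 : ℂ) * z^7 + (-11543281/17955841 : ℂ) * z^8 + (1544221/17955841 : ℂ) * z^9 + (-5941017/17955841 : ℂ) * z^10 + (-13426255/17955841 : ℂ) * z^11 + (-338753/17955841 : ℂ) * z^12 + (-5176086/17955841 : ℂ) * z^13 + (-11592616/17955841 : ℂ) * z^14 + (-5711382/17955841 : ℂ) * z^15 + (-2441941/17955841 : ℂ) * z^16 + (-4730862/17955841 : ℂ) * z^17 + (-10918473/17955841 : ℂ) * z^18 + (-3309709/17955841 : ℂ) * z^19 + (-1976848/17955841 : ℂ) * z^20 + (-11882034/17955841 : ℂ) * z^21 + (-2037767/17955841 : ℂ) *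 z^22 + (-3035573/17955841 : ℂ) * z^23 + (-12484364/17955841 : ℂ) * z^24 + (-6161942/17955841 : ℂ) * z^25 + (-5578886/17955841 : ℂ) * z^26 + (-4451708/17955841 : ℂ) * z^27 + (-5258446/17955841 : ℂ) * z^28 + (-6623588/17955841 : ℂ) * z^29 + (-7430326/17955841 : ℂ) * z^30 + (-6303148/17955841 : ℂ) * z^31 + (-5720092/17955841 : ℂ) * z^32 + (602330/17955841 : ℂ) * z^33 + (-8846461/17955841 : ℂ) * z^34 + (-9844267/17955841 : ℂ) * z^35) * h2 + ((27861027/17955841 : ℂ) + (521670/17955841 : ℂ) * z + (9535886/17955841 : ℂ) * z^2 + (8114733/17955841 : ℂ) * z^3 + (16591265/17955841 : ℂ) * z^4 + (5705559/17955841 : ℂ) * z^5 + (-2112255/17955841 : ℂ) * z^6 + (-13778567/17955841 : ℂ) * z^7 + (3858593/17955841 : ℂ) * z^8 + (7204170/17955841 : ℂ) * z^9 + (-5207453/17955841 : ℂ) * z^10 + (-3889207/17955841 : ℂ) * z^11 + (-12023240/17955841 : ℂ) * z^12 + (-5117762/17955841 : ℂ) * z^13 + (-8244131/17955841 : ℂ)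 * z^14 + (-18690728/17955841 : ℂ) * z^15 + (-9844267/17955841 : ℂ) * z^16) * h1

private lemma cert38 (z : ℂ) (h1 : z ^ 38 = 1)
    (h2 : -1 - z + z^5 + 2*z^7 - z^8 - z^10 + 2*z^11 + z^13 - z^17 - z^18 = 0) : z = 1 := by
  linear_combination ((-2107827/141136636 : ℂ) + (-11397561/35284159 : ℂ) * z + (1013141/141136636 : ℂ) * z^2 + (-679/33193 : ℂ) * z^3 + (-47572491/141136636 : ℂ) * z^4 + (-8216985/35284159 : ℂ) * z^5 + (15172149/141136636 : ℂ) * z^6 + (2098996/35284159 : ℂ) * z^7 + (-56844815/141136636 : ℂ) * z^8 + (-3665749/35284159 : ℂ) * z^9 + (20221341/141136636 : ℂ) * z^10 + (-13602362/35284159 : ℂ) * z^11 + (-19525111/141136636 : ℂ) * z^12 + (5664177/35284159 : ℂ) * z^13 + (-42584091/141136636 : ℂ) * z^14 + (-12340064/35284159 : ℂ) * z^15 + (-1320167/141136636 : ℂ) * z^16 + (3346096/35284159 : ℂ) * z^17 + (-943/4252 : ℂ) * z^18 + (-8800312/35284159 : ℂ) * z^19 + (11402137/141136636 : ℂ) *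 z^20 + (-8020070/35284159 : ℂ) * z^21 + (-34188107/141136636 : ℂ) * z^22 + (6454308/35284159 : ℂ) * z^23 + (-23009619/141136636 : ℂ) * z^24 + (-12114708/35284159 : ℂ) * z^25 + (-25958771/141136636 : ℂ) * z^26 + (-3597742/35284159 : ℂ) * z^27 + (7543121/141136636 : ℂ) * z^28 + (-5408758/35284159 : ℂ) * z^29 + (-12553075/141136636 : ℂ) * z^30 + (-10432807/35284159 : ℂ) * z^31 + (-19797139/141136636 : ℂ) * z^32 + (-2057334/35284159 : ℂ) * z^33 + (14270725/141136636 : ℂ) * z^34 + (-2794622/35284159 : ℂ) * z^35 + (-60005339/141136636 : ℂ) * z^36) * h2 + ((143244463/141136636 : ℂ) + (-93438565/141136636 : ℂ) * z + (44577103/141136636 : ℂ) * z^2 + (1873967/141136636 : ℂ) * z^3 + (50459599/141136636 : ℂ) * z^4 + (19583151/35284159 : ℂ) * z^5 + (-27894453/141136636 : ℂ) * z^6 + (-13385323/70568318 : ℂ) * z^7 + (-21755469/70568318 : ℂ) * z^8 + (35775923/70568318 : ℂ) * z^9 + (-43105815/141136636 : ℂ) * z^10 + (-380757/35284159 : ℂ)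 * z^11 + (-28026475/141136636 : ℂ) * z^12 + (6041389/141136636 : ℂ) * z^13 + (3092237/141136636 : ℂ) * z^14 + (-71183827/141136636 : ℂ) * z^15 + (-60005339/141136636 : ℂ) * z^16) * h1

private lemma cert39 (z : ℂ) (h1 : z ^ 39 = 1)
    (h2 : -1 - z + z^5 + 2*z^7 - z^8 - z^10 + 2*z^11 + z^13 - z^17 - z^18 = 0) : z = 1 := by
  linear_combination ((3893323/3413163 : ℂ) + (-2179648/3413163 : ℂ) * z + (-22186/1137721 : ℂ) * z^2 + (3338680/3413163 : ℂ) * z^3 + (-1080613/3413163 : ℂ) * z^4 + (-280907/1137721 : ℂ) * z^5 + (965194/3413163 : ℂ) * z^6 + (2861522/3413163 : ℂ) * z^7 + (-95093/1137721 : ℂ) * z^8 + (-2621660/3413163 : ℂ) * z^9 + (4150253/3413163 : ℂ) * z^10 + (164886/1137721 : ℂ) * z^11 + (-243149/262551 : ℂ) * z^12 + (3610976/3413163 : ℂ) * z^13 + (424865/1137721 : ℂ) * z^14 + (-1872206/3413163 : ℂ) * z^15 + (24122/3413163 : ℂ) * z^16 + (610679/1137721 : ℂ) * z^17 + (2069929/3413163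 : ℂ) * z^18 + (-2349364/3413163 : ℂ) * z^19 + (351958/1137721 : ℂ) * z^20 + (3168964/3413163 : ℂ) * z^21 + (-2904007/3413163 : ℂ) * z^22 + (329772/1137721 : ℂ) * z^23 + (2916571/3413163 : ℂ) * z^24 + (-66820/262551 : ℂ) * z^25 + (6116/1137721 : ℂ) * z^26 + (-499034/3413163 : ℂ) * z^27 + (1847432/3413163 : ℂ) * z^28 + (423928/1137721 : ℂ) * z^29 + (-1630409/3413163 : ℂ) * z^30 + (2619725/3413163 : ℂ) * z^31 + (-94156/1137721 : ℂ) * z^32 + (-858116/3413163 : ℂ) * z^33 + (1488350/3413163 : ℂ) * z^34 + (323656/1137721 : ℂ) * z^35 + (1857976/3413163 : ℂ) * z^36 + (-1927255/3413163 : ℂ) * z^37) * h2 + ((-480160/3413163 : ℂ) + (-1708946/1137721 : ℂ) * z + (2246206/3413163 : ℂ) * z^2 + (-3272122/3413163 : ℂ) * z^3 + (-752689/1137721 : ℂ) * z^4 + (5816657/3413163 : ℂ) * z^5 + (-2302121/3413163 : ℂ) * z^6 + (3893372/3413163 : ℂ) * z^7 + (-7490182/3413163 : ℂ) * z^8 +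 (3872858/3413163 : ℂ) * z^9 + (479281/3413163 : ℂ) * z^10 + (786671/3413163 : ℂ) * z^11 + (210078/1137721 : ℂ) * z^12 + (2459318/3413163 : ℂ) * z^13 + (2828944/3413163 : ℂ) * z^14 + (-23093/1137721 : ℂ) * z^15 + (-1927255/3413163 : ℂ) * z^16) * h1

private lemma cert40 (z : ℂ) (h1 : z ^ 40 = 1)
    (h2 : -1 - z + z^5 + 2*z^7 - z^8 - z^10 + 2*z^11 + z^13 - z^17 - z^18 = 0) : z = 1 := by
  linear_combination ((-451199/791920 : ℂ) + (-180689/395960 : ℂ) * z + (160143/791920 : ℂ) * z^2 + (-4271/10420 : ℂ) * z^3 + (-231/304 : ℂ) * z^4 + (-61167/395960 : ℂ) * z^5 + (-12173/791920 : ℂ) * z^6 + (-27172/49495 : ℂ) * z^7 + (-334431/791920 : ℂ) * z^8 + (14979/79192 : ℂ) * z^9 + (-21531/41680 : ℂ) * z^10 + (-166157/197980 : ℂ) * z^11 + (174213/791920 : ℂ) * z^12 + (-40663/395960 : ℂ) * z^13 + (-6739/8336 : ℂ) * z^14 + (-9749/49495 : ℂ) * z^15 + (-55663/791920 : ℂ)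 * z^16 + (-239121/395960 : ℂ) * z^17 + (-368081/791920 : ℂ) * z^18 + (293/2084 : ℂ) * z^19 + (-165819/791920 : ℂ) * z^20 + (-325279/395960 : ℂ) * z^21 + (-129037/791920 : ℂ) * z^22 + (-129/2605 : ℂ) * z^23 + (-98083/158384 : ℂ) * z^24 + (-57177/395960 : ℂ) * z^25 + (-98433/791920 : ℂ) * z^26 + (-121893/197980 : ℂ) * z^27 + (-357611/791920 : ℂ) * z^28 + (-15307/79192 : ℂ) * z^29 + (-4911/41680 : ℂ) * z^30 + (-17148/49495 : ℂ) * z^31 + (-216047/791920 : ℂ) * z^32 + (-198553/395960 : ℂ) * z^33 + (-3551/8336 : ℂ) * z^34 + (-33201/197980 : ℂ) * z^35 + (-2843/791920 : ℂ) * z^36 + (-195991/395960 : ℂ) * z^37 + (-376061/791920 : ℂ) * z^38) * h2 + ((1243119/791920 : ℂ) + (20657/791920 : ℂ) * z + (40247/158384 : ℂ) * z^2 + (164453/791920 : ℂ) * z^3 + (926351/791920 : ℂ) * z^4 + (27289/79192 : ℂ) * z^5 + (-226871/791920 : ℂ) * z^6 + (-29533/79192 : ℂ) * z^7 + (17303/79192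 : ℂ) * z^8 + (26455/79192 : ℂ) * z^9 + (-221171/791920 : ℂ) * z^10 + (-35839/79192 : ℂ) * z^11 + (-470149/791920 : ℂ) * z^12 + (-135647/791920 : ℂ) * z^13 + (-78965/158384 : ℂ) * z^14 + (-768043/791920 : ℂ) * z^15 + (-376061/791920 : ℂ) * z^16) * h1

private lemma cert41 (z : ℂ) (h1 : z ^ 41 = 1)
    (h2 : -1 - z + z^5 + 2*z^7 - z^8 - z^10 + 2*z^11 + z^13 - z^17 - z^18 = 0) : z = 1 := by
  linear_combination ((-9179368/554054197 : ℂ) + (-171826574/554054197 : ℂ) * z + (68376599/554054197 : ℂ) * z^2 + (7138588/554054197 : ℂ) * z^3 + (-208592794/554054197 : ℂ) * z^4 + (-65298697/554054197 : ℂ) * z^5 + (28274905/554054197 : ℂ) * z^6 + (-25873878/554054197 : ℂ) * z^7 + (-135951745/554054197 : ℂ) * z^8 + (3328329/554054197 : ℂ) * z^9 + (62963197/554054197 : ℂ) * z^10 + (-243493928/554054197 : ℂ) * z^11 + (-52072432/554054197 : ℂ) * z^12 + (139349064/554054197 : ℂ) * z^13 + (-167108061/554054197 : ℂ) * z^14 +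 (-107473193/554054197 : ℂ) * z^15 + (31806881/554054197 : ℂ) * z^16 + (-78270986/554054197 : ℂ) * z^17 + (-132419769/554054197 : ℂ) * z^18 + (-38846167/554054197 : ℂ) * z^19 + (104447930/554054197 : ℂ) * z^20 + (-111283452/554054197 : ℂ) * z^21 + (-172521463/554054197 : ℂ) * z^22 + (67681710/554054197 : ℂ) * z^23 + (-94965496/554054197 : ℂ) * z^24 + (-104144864/554054197 : ℂ) * z^25 + (72808060/554054197 : ℂ) * z^26 + (-89102335/554054197 : ℂ) * z^27 + (-121295454/554054197 : ℂ) * z^28 + (-106049646/554054197 : ℂ) * z^29 + (-37898217/554054197 : ℂ) * z^30 + (68612115/554054197 : ℂ) * z^31 + (-85349036/554054197 : ℂ) * z^32 + (-18795828/554054197 : ℂ) * z^33 + (-172756979/554054197 : ℂ) * z^34 + (-66246647/554054197 : ℂ) * z^35 + (1904782/554054197 : ℂ) * z^36 + (17150590/554054197 : ℂ) * z^37 + (-15042529/554054197 : ℂ) * z^38 + (-176952924/554054197 : ℂ) * z^39) * h2 + ((563233565/554054197 : ℂ) + (-373048255/554054197 : ℂ) * z + (103449975/554054197 : ℂ) *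 z^2 + (-75515187/554054197 : ℂ) * z^3 + (201454206/554054197 : ℂ) * z^4 + (264712123/554054197 : ℂ) * z^5 + (-134802782/554054197 : ℂ) * z^6 + (47616836/554054197 : ℂ) * z^7 + (-165509569/554054197 : ℂ) * z^8 + (232610394/554054197 : ℂ) * z^9 + (-176510278/554054197 : ℂ) * z^10 + (-62050702/554054197 : ℂ) * z^11 + (-64341865/554054197 : ℂ) * z^12 + (19055372/554054197 : ℂ) * z^13 + (2108061/554054197 : ℂ) * z^14 + (-191995453/554054197 : ℂ) * z^15 + (-176952924/554054197 : ℂ) * z^16) * h1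

private lemma cert42 (z : ℂ) (h1 : z ^ 42 = 1)
    (h2 : -1 - z + z^5 + 2*z^7 - z^8 - z^10 + 2*z^11 + z^13 - z^17 - z^18 = 0) : z = 1 := by
  linear_combination ((-76358363/223304676 : ℂ) + (-14265253/55826169 : ℂ) * z + (-23916449/74434892 : ℂ) * z^2 + (-12740774/55826169 : ℂ) * z^3 + (-16538311/223304676 : ℂ) * z^4 + (-1188/1477 : ℂ) * z^5 + (-1449749/31900668 : ℂ) * z^6 + (8297519/55826169 : ℂ) * z^7 + (-64367637/74434892 : ℂ) * z^8 + (-5080925/55826169 : ℂ) * z^9 + (5323169/223304676 : ℂ) * z^10 + (-10001835/18608723 : ℂ) * z^11 + (-69284939/223304676 : ℂ) * z^12 + (-44368/185469 : ℂ) * z^13 + (-893997/74434892 : ℂ) * z^14 + (-32006795/55826169 : ℂ) * z^15 + (-102380311/223304676 : ℂ) * z^16 + (5866575/18608723 : ℂ) * z^17 + (-155894087/223304676 : ℂ) * z^18 + (-654394/1298283 : ℂ) * z^19 + (12843/50396 : ℂ) * z^20 + (-26541425/55826169 : ℂ) * z^21 + (-71740915/223304676 : ℂ) * z^22 + (-4246222/18608723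 : ℂ) * z^23 + (-65642999/223304676 : ℂ) * z^24 + (-11586412/55826169 : ℂ) * z^25 + (-40901337/74434892 : ℂ) * z^26 + (12037/185469 : ℂ) * z^27 + (-51322387/223304676 : ℂ) * z^28 + (-13661875/18608723 : ℂ) * z^29 + (-1487519/223304676 : ℂ) * z^30 + (-20340121/55826169 : ℂ) * z^31 + (-17877449/74434892 : ℂ) * z^32 + (-11423/1298283 : ℂ) * z^33 + (-17248465/31900668 : ℂ) * z^34 + (-5755972/18608723 : ℂ) * z^35 + (-41343527/223304676 : ℂ) * z^36 + (-30304123/55826169 : ℂ) * z^37 + (13746163/74434892 : ℂ) * z^38 + (-17845406/55826169 : ℂ) * z^39 + (-137196559/223304676 : ℂ) * z^40) * h2 + ((299663039/223304676 : ℂ) + (-29961767/74434892 : ℂ) * z + (128810359/223304676 : ℂ) * z^2 + (17530349/31900668 : ℂ) * z^3 + (22500469/74434892 : ℂ) * z^4 + (2377/4431 : ℂ) * z^5 + (132698575/223304676 : ℂ) * z^6 + (-123753953/111652338 : ℂ) * z^7 + (35593039/111652338 : ℂ) * z^8 + (55225309/111652338 : ℂ) * z^9 + (-118429295/223304676 :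 ℂ) * z^10 + (6695342/55826169 : ℂ) * z^11 + (-54186673/74434892 : ℂ) * z^12 + (-11425429/31900668 : ℂ) * z^13 + (-30143135/223304676 : ℂ) * z^14 + (-69526061/74434892 : ℂ) * z^15 + (-137196559/223304676 : ℂ) * z^16) * h1

private lemma cert43 (z : ℂ) (h1 : z ^ 43 = 1)
    (h2 : -1 - z + z^5 + 2*z^7 - z^8 - z^10 + 2*z^11 + z^13 - z^17 - z^18 = 0) : z = 1 := by
  linear_combination ((-61080904/47889143 : ℂ) + (-25732029/47889143 : ℂ) * z + (30843452/47889143 : ℂ) * z^2 + (-51805951/47889143 : ℂ) * z^3 + (-67063174/47889143 : ℂ) * z^4 + (27390534/47889143 : ℂ) * z^5 + (-6337339/47889143 : ℂ) * z^6 + (-82023021/47889143 : ℂ) * z^7 + (-9696081/47889143 : ℂ) * z^8 + (34803839/47889143 : ℂ) * z^9 + (-68505645/47889143 : ℂ) * z^10 + (-61294809/47889143 : ℂ) * z^11 + (49987250/47889143 : ℂ) * z^12 + (-23040903/47889143 : ℂ) * z^13 + (-96069056/47889143 : ℂ) * z^14 + (15213003/47889143 : ℂ) * z^15 + (22423839/47889143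 : ℂ) * z^16 + (-80885645/47889143 : ℂ) * z^17 + (-36385725/47889143 : ℂ) * z^18 + (35941215/47889143 : ℂ) * z^19 + (-39744467/47889143 : ℂ) * z^20 + (-73472340/47889143 : ℂ) * z^21 + (20981368/47889143 : ℂ) * z^22 + (5724145/47889143 : ℂ) * z^23 + (-76925258/47889143 : ℂ) * z^24 + (-20349777/47889143 : ℂ) * z^25 + (14999098/47889143 : ℂ) * z^26 + (-46081806/47889143 : ℂ) * z^27 + (-35766370/47889143 : ℂ) * z^28 + (-705079/47889143 : ℂ) * z^29 + (-25382871/47889143 : ℂ) * z^30 + (-42485052/47889143 : ℂ) * z^31 + (-18499830/47889143 : ℂ) * z^32 + (-8061285/47889143 : ℂ) * z^33 + (-26443490/47889143 : ℂ) * z^34 + (-19638316/47889143 : ℂ) * z^35 + (-38020521/47889143 : ℂ) * z^36 + (-27581976/47889143 : ℂ) * z^37 + (-3596754/47889143 : ℂ) * z^38 + (-20698935/47889143 : ℂ) * z^39 + (-45376727/47889143 : ℂ) * z^40 + (-10315436/47889143 : ℂ) * z^41) * h2 + ((108970047/47889143 : ℂ) + (38923790/47889143 : ℂ) * z + (-5111423/47889143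 : ℂ) * z^2 + (20962499/47889143 : ℂ) * z^3 + (118869125/47889143 : ℂ) * z^4 + (-21408264/47889143 : ℂ) * z^5 + (-46785224/47889143 : ℂ) * z^6 + (-2957996/47889143 : ℂ) * z^7 + (49529997/47889143 : ℂ) * z^8 + (-4751999/47889143 : ℂ) * z^9 + (-12282110/47889143 : ℂ) * z^10 + (-55287061/47889143 : ℂ) * z^11 + (-31178730/47889143 : ℂ) * z^12 + (-24295689/47889143 : ℂ) * z^13 + (-66075662/47889143 : ℂ) * z^14 + (-55692163/47889143 : ℂ) * z^15 + (-10315436/47889143 : ℂ) * z^16) * h1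

private lemma cert44 (z : ℂ) (h1 : z ^ 44 = 1)
    (h2 : -1 - z + z^5 + 2*z^7 - z^8 - z^10 + 2*z^11 + z^13 - z^17 - z^18 = 0) : z = 1 := by
  linear_combination ((58327245/430750408 : ℂ) + (-54139043/215375204 : ℂ) * z + (121605203/430750408 : ℂ) * z^2 + (2839704/53843801 : ℂ) * z^3 + (-205563203/430750408 : ℂ) * z^4 + (32425761/215375204 : ℂ) * z^5 + (7895/63976 : ℂ) * z^6 + (-4966755/53843801 : ℂ) * z^7 + (-25854715/430750408 : ℂ) * z^8 + (-1195479/215375204 : ℂ) * z^9 + (5663617/39159128 : ℂ) * z^10 + (-17219150/53843801 : ℂ) * z^11 + (34463117/430750408 : ℂ) * z^12 + (92433129/215375204 : ℂ) * z^13 + (-200787309/430750408 : ℂ) * z^14 + (-6298021/53843801 : ℂ) * z^15 + (121832149/430750408 : ℂ) * z^16 + (-53797/296252 : ℂ) * z^17 + (-13530093/430750408 : ℂ) * z^18 + (1241708/53843801 : ℂ) * z^19 + (23812989/430750408 : ℂ) * z^20 + (-4319/26932 : ℂ) * z^21 + (-80772573/430750408 : ℂ) * z^22 + (23705269/53843801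 : ℂ) * z^23 + (-38638683/430750408 : ℂ) * z^24 + (-68763127/215375204 : ℂ) * z^25 + (92357035/430750408 : ℂ) * z^26 + (-9281037/53843801 : ℂ) * z^27 + (-15921051/430750408 : ℂ) * z^28 + (36471845/215375204 : ℂ) * z^29 + (-51908941/430750408 : ℂ) * z^30 + (-444815/53843801 : ℂ) * z^31 + (-9398369/39159128 : ℂ) * z^32 + (5439521/215375204 : ℂ) * z^33 + (126444611/430750408 : ℂ) * z^34 + (-8090014/53843801 : ℂ) * z^35 + (48799061/430750408 : ℂ) * z^36 + (-71182831/215375204 : ℂ) * z^37 + (-26800093/430750408 : ℂ) * z^38 + (15038/74063 : ℂ) * z^39 + (-12362531/430750408 : ℂ) * z^40 + (17993945/215375204 : ℂ) * z^41 + (-88864741/430750408 : ℂ) * z^42) * h2 + ((372423163/430750408 : ℂ) + (-380799567/430750408 : ℂ) * z + (-13327117/430750408 : ℂ) * z^2 + (-144322835/430750408 : ℂ) * z^3 + (182845571/430750408 : ℂ) * z^4 + (99519463/215375204 : ℂ) * z^5 + (-20571513/39159128 : ℂ) * z^6 + (112418349/215375204 : ℂ) * z^7 + (-93288515/215375204 :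 ℂ) * z^8 + (87085481/215375204 : ℂ) * z^9 + (-11777681/39159128 : ℂ) * z^10 + (-40150507/215375204 : ℂ) * z^11 + (60660915/430750408 : ℂ) * z^12 + (75098477/430750408 : ℂ) * z^13 + (23625359/430750408 : ℂ) * z^14 + (-52876851/430750408 : ℂ) * z^15 + (-88864741/430750408 : ℂ) * z^16) * h1

private lemma cert45 (z : ℂ) (h1 : z ^ 45 = 1)
    (h2 : -1 - z + z^5 + 2*z^7 - z^8 - z^10 + 2*z^11 + z^13 - z^17 - z^18 = 0) : z = 1 := by
  linear_combination ((-88913756/1104586515 : ℂ) + (-161724892/1104586515 : ℂ) * z + (-2025326/368195505 : ℂ) * z^2 + (-81769949/1104586515 : ℂ) * z^3 + (-46444745/220917303 : ℂ) * z^4 + (-147339727/368195505 : ℂ) * z^5 + (63351463/1104586515 : ℂ) * z^6 + (157577222/1104586515 : ℂ) * z^7 + (-1062262/2315695 : ℂ) * z^8 + (-10624603/220917303 : ℂ) * z^9 + (95090954/1104586515 : ℂ) * z^10 + (-148219784/368195505 : ℂ) * z^11 + (-78317423/1104586515 : ℂ) * z^12 + (171331631/1104586515 : ℂ) * z^13 +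 (-32729/271731 : ℂ) * z^14 + (-437418401/1104586515 : ℂ) * z^15 + (-187769347/1104586515 : ℂ) * z^16 + (374366/2315695 : ℂ) * z^17 + (-361177724/1104586515 : ℂ) * z^18 + (-42592751/220917303 : ℂ) * z^19 + (80204068/368195505 : ℂ) * z^20 + (-423663992/1104586515 : ℂ) * z^21 + (-329438233/1104586515 : ℂ) * z^22 + (58644137/368195505 : ℂ) * z^23 + (-6772609/220917303 : ℂ) * z^24 + (-184316821/1104586515 : ℂ) * z^25 + (-545096/2315695 : ℂ) * z^26 + (-104361878/1104586515 : ℂ) * z^27 + (-177173014/1104586515 : ℂ) * z^28 + (-65458/271731 : ℂ) * z^29 + (182091664/1104586515 : ℂ) * z^30 + (-180338527/1104586515 : ℂ) * z^31 + (-139728556/368195505 : ℂ) * z^32 + (-62701034/1104586515 : ℂ) * z^33 + (-36167612/220917303 : ℂ) * z^34 + (173382/2315695 : ℂ) * z^35 + (23408773/1104586515 : ℂ) * z^36 + (-289495543/1104586515 : ℂ) * z^37 + (-116263328/368195505 : ℂ) * z^38 + (-17049742/220917303 : ℂ) * z^39 + (-203385736/1104586515 : ℂ) * z^40 + (51032966/368195505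 : ℂ) * z^41 + (-85748243/1104586515 : ℂ) * z^42 + (-448178434/1104586515 : ℂ) * z^43) * h2 + ((1193500271/1104586515 : ℂ) + (-284649289/368195505 : ℂ) * z + (33560174/220917303 : ℂ) * z^2 + (87845927/1104586515 : ℂ) * z^3 + (34888186/122731835 : ℂ) * z^4 + (117065830/220917303 : ℂ) * z^5 + (216942826/1104586515 : ℂ) * z^6 + (-80966435/220917303 : ℂ) * z^7 + (6563155/220917303 : ℂ) * z^8 + (95434240/220917303 : ℂ) * z^9 + (-552537284/1104586515 : ℂ) * z^10 + (2827948/220917303 : ℂ) * z^11 + (-32070494/122731835 : ℂ) * z^12 + (-50286838/1104586515 : ℂ) * z^13 + (13470131/220917303 : ℂ) * z^14 + (-177975559/368195505 : ℂ) * z^15 + (-448178434/1104586515 : ℂ) * z^16) * h1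

private lemma cert46 (z : ℂ) (h1 : z ^ 46 = 1)
    (h2 : -1 - z + z^5 + 2*z^7 - z^8 - z^10 + 2*z^11 + z^13 - z^17 - z^18 = 0) : z = 1 := by
  linear_combination ((170388833/87720988 : ℂ) + (30803269/21930247 : ℂ) * z + (-12117035/87720988 : ℂ) * z^2 + (29492098/21930247 : ℂ) * z^3 + (171845481/87720988 : ℂ) * z^4 + (-5064147/21930247 : ℂ) * z^5 + (42905325/87720988 : ℂ) * z^6 + (2812/1081 : ℂ) * z^7 + (39132549/87720988 : ℂ) * z^8 + (-7636740/21930247 : ℂ) * z^9 + (208524933/87720988 : ℂ) * z^10 + (29798763/21930247 : ℂ) * z^11 + (-54230419/87720988 : ℂ) * z^12 + (35855435/21930247 : ℂ) * z^13 + (200951413/87720988 : ℂ) * z^14 + (-7533247/21930247 : ℂ) * z^15 + (27396685/87720988 : ℂ) * z^16 + (56262211/21930247 : ℂ) * z^17 + (51623373/87720988 : ℂ) * z^18 + (-9426627/21930247 : ℂ) * z^19 + (201365385/87720988 : ℂ) * z^20 + (32921469/21930247 : ℂ) * z^21 + (-53071/81148 : ℂ) * z^22 + (31978275/21930247 : ℂ)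 * z^23 + (191075013/87720988 : ℂ) * z^24 + (-256764/21930247 : ℂ) * z^25 + (52850033/87720988 : ℂ) * z^26 + (45733865/21930247 : ℂ) * z^27 + (47605349/87720988 : ℂ) * z^28 + (107398/21930247 : ℂ) * z^29 + (170818425/87720988 : ℂ) * z^30 + (28640912/21930247 : ℂ) * z^31 + (-12540743/87720988 : ℂ) * z^32 + (32080575/21930247 : ℂ) * z^33 + (129119713/87720988 : ℂ) * z^34 + (777266/21930247 : ℂ) * z^35 + (123800509/87720988 : ℂ) * z^36 + (38761687/21930247 : ℂ) * z^37 + (15771677/87720988 : ℂ) * z^38 + (11754479/21930247 : ℂ) * z^39 + (167709361/87720988 : ℂ) * z^40 + (10424678/21930247 : ℂ) * z^41 + (42496125/87720988 : ℂ) * z^42 + (45839792/21930247 : ℂ) * z^43 + (56254777/87720988 : ℂ) * z^44) * h2 + ((-82667845/87720988 : ℂ) + (-381322897/87720988 : ℂ) * z + (-111096041/87720988 : ℂ) * z^2 + (-105851357/87720988 : ℂ) * z^3 + (-289813873/87720988 : ℂ) * z^4 + (4699985/21930247 : ℂ) * z^5 + (100564339/87720988 : ℂ) * z^6 + (28783565/43860494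 : ℂ) * z^7 + (-36657507/43860494 : ℂ) * z^8 + (7906373/43860494 : ℂ) * z^9 + (-120569575/87720988 : ℂ) * z^10 + (39618125/21930247 : ℂ) * z^11 + (209408073/87720988 : ℂ) * z^12 + (84194837/87720988 : ℂ) * z^13 + (225855293/87720988 : ℂ) * z^14 + (239613945/87720988 : ℂ) * z^15 + (56254777/87720988 : ℂ) * z^16) * h1

private lemma cert47 (z : ℂ) (h1 : z ^ 47 = 1)
    (h2 : -1 - z + z^5 + 2*z^7 - z^8 - z^10 + 2*z^11 + z^13 - z^17 - z^18 = 0) : z = 1 := by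
  linear_combination ((-63572712/12516241 : ℂ) + (-73686/12516241 : ℂ) * z + (-27411560/12516241 : ℂ) * z^2 + (-48375247/12516241 : ℂ) * z^3 + (2333152/12516241 : ℂ) * z^4 + (-57489148/12516241 : ℂ) * z^5 + (-14676655/12516241 : ℂ) * z^6 + (-17892014/12516241 : ℂ) * z^7 + (-60973854/12516241 : ℂ) * z^8 + (10528332/12516241 : ℂ) * z^9 + (-46550108/12516241 : ℂ) * z^10 + (-38163705/12516241 : ℂ) * z^11 + (5824916/12516241 : ℂ) * z^12 + (-58833637/12516241 : ℂ) * z^13 + (-8079883/12516241 : ℂ) * z^14 + (-27568146/12516241 : ℂ) * z^15 + (-47056409/12516241 : ℂ) * z^16 + (3697345/12516241 : ℂ) * z^17 + (-60961208/12516241 : ℂ) * z^18 + (-16972587/12516241 : ℂ) * z^19 + (-8586184/12516241 : ℂ) * z^20 + (-65664624/12516241 : ℂ) * z^21 + (5837562/12516241 : ℂ) * z^22 + (-37244278/12516241 : ℂ) * z^23 + (-40459637/12516241 : ℂ) * z^24 + (2352856/12516241 : ℂ) * z^25 + (-57469444/12516241 : ℂ) * z^26 + (-6761045/12516241 : ℂ)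 * z^27 + (-27724732/12516241 : ℂ) * z^28 + (-55062606/12516241 : ℂ) * z^29 + (8436420/12516241 : ℂ) * z^30 + (-55136292/12516241 : ℂ) * z^31 + (-24950772/12516241 : ℂ) * z^32 + (-5107931/12516241 : ℂ) * z^33 + (-62341800/12516241 : ℂ) * z^34 + (1919096/12516241 : ℂ) * z^35 + (-36591195/12516241 : ℂ) * z^36 + (-39502840/12516241 : ℂ) * z^37 + (6492211/12516241 : ℂ) * z^38 + (-61628503/12516241 : ℂ) * z^39 + (-15633452/12516241 : ℂ) * z^40 + (-18545097/12516241 : ℂ) * z^41 + (-57055388/12516241 : ℂ) * z^42 + (7205508/12516241 : ℂ) * z^43 + (-50028361/12516241 : ℂ) * z^44 + (-30185520/12516241 : ℂ) * z^45) * h2 + ((76088953/12516241 : ℂ) + (51130157/12516241 : ℂ) * z + (27485246/12516241 : ℂ) * z^2 + (75786807/12516241 : ℂ) * z^3 + (46042095/12516241 : ℂ) * z^4 + (-8416716/12516241 : ℂ) * z^5 + (72092117/12516241 : ℂ) * z^6 + (-121988315/12516241 : ℂ) * z^7 + (93915961/12516241 : ℂ) * z^8 + (-1970760/12516241 : ℂ)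 * z^9 + (-27233594/12516241 : ℂ) * z^10 + (-3993029/12516241 : ℂ) * z^11 + (-75600485/12516241 : ℂ) * z^12 + (-49849880/12516241 : ℂ) * z^13 + (-42822853/12516241 : ℂ) * z^14 + (-80213881/12516241 : ℂ) * z^15 + (-30185520/12516241 : ℂ) * z^16) * h1

private lemma cert48 (z : ℂ) (h1 : z ^ 48 = 1)
    (h2 : -1 - z + z^5 + 2*z^7 - z^8 - z^10 + 2*z^11 + z^13 - z^17 - z^18 = 0) : z = 1 := by
  linear_combination ((-95795/870816 : ℂ) + (-96149/435408 : ℂ) * z + (11921/290272 : ℂ) * z^2 + (-9047/217704 : ℂ) * z^3 + (-140215/870816 : ℂ) * z^4 + (-12857/145136 : ℂ) * z^5 + (163015/870816 : ℂ) * z^6 + (7559/54426 : ℂ) * z^7 + (-385/1504 : ℂ) * z^8 + (39011/435408 : ℂ) * z^9 + (106403/870816 : ℂ) * z^10 + (-29781/72568 : ℂ) * z^11 + (-67127/870816 : ℂ) * z^12 + (48541/435408 : ℂ) * z^13 + (-73507/290272 : ℂ) * z^14 + (-5611/27213 : ℂ) * z^15 + (93677/870816 : ℂ) * z^16 + (22441/145136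 : ℂ) * z^17 + (-182957/870816 : ℂ) * z^18 + (-4687/217704 : ℂ) * z^19 + (90499/290272 : ℂ) * z^20 + (-96139/435408 : ℂ) * z^21 + (-163897/870816 : ℂ) * z^22 + (2855/18142 : ℂ) * z^23 + (-206819/870816 : ℂ) * z^24 + (-124445/435408 : ℂ) * z^25 + (-2911/290272 : ℂ) * z^26 + (13585/217704 : ℂ) * z^27 + (-49687/870816 : ℂ) * z^28 + (-20273/145136 : ℂ) * z^29 + (106423/870816 : ℂ) * z^30 + (310/27213 : ℂ) * z^31 + (-28625/290272 : ℂ) * z^32 + (80075/435408 : ℂ) * z^33 + (-104077/870816 : ℂ) * z^34 + (-18629/72568 : ℂ) * z^35 + (-110423/870816 : ℂ) * z^36 + (-86171/435408 : ℂ) * z^37 + (25389/290272 : ℂ) * z^38 + (487/54426 : ℂ) * z^39 + (-93667/870816 : ℂ) * z^40 + (-27007/145136 : ℂ) * z^41 + (86467/870816 : ℂ) * z^42 + (6137/217704 : ℂ) * z^43 + (45891/290272 : ℂ) * z^44 + (9101/435408 : ℂ) * z^45 + (-246025/870816 : ℂ) * z^46) * h2 + ((966611/870816 : ℂ) + (-194241/290272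 : ℂ) * z + (156535/870816 : ℂ) * z^2 + (425/870816 : ℂ) * z^3 + (58801/290272 : ℂ) * z^4 + (60781/435408 : ℂ) * z^5 + (-278171/870816 : ℂ) * z^6 + (-219893/435408 : ℂ) * z^7 + (-111509/435408 : ℂ) * z^8 + (134251/435408 : ℂ) * z^9 + (-273911/870816 : ℂ) * z^10 + (85225/435408 : ℂ) * z^11 + (37005/290272 : ℂ) * z^12 + (162221/870816 : ℂ) * z^13 + (155875/870816 : ℂ) * z^14 + (-75941/290272 : ℂ) * z^15 + (-246025/870816 : ℂ) * z^16) * h1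

private lemma cert49 (z : ℂ) (h1 : z ^ 49 = 1)
    (h2 : -1 - z + z^5 + 2*z^7 - z^8 - z^10 + 2*z^11 + z^13 - z^17 - z^18 = 0) : z = 1 := by
  linear_combination ((839948002/1427106331 : ℂ) + (178383173/1427106331 : ℂ) * z + (77137509/1427106331 : ℂ) * z^2 + (596409421/1427106331 : ℂ) * z^3 + (368605773/1427106331 : ℂ) * z^4 + (-60547842/1427106331 : ℂ) * z^5 + (53852426/203872333 : ℂ) * z^6 + (1056121729/1427106331 : ℂ) * z^7 + (-14785033/1427106331 : ℂ) * z^8 + (-185945612/1427106331 : ℂ) * z^9 + (1137605930/1427106331 : ℂ) * z^10 + (169185363/1427106331 : ℂ) * z^11 + (-347407527/1427106331 : ℂ) * z^12 + (133279947/203872333 : ℂ) * z^13 + (490082633/1427106331 : ℂ) * z^14 + (-345010208/1427106331 : ℂ) * z^15 + (331736581/1427106331 : ℂ) * z^16 + (1008483370/1427106331 : ℂ) * z^17 + (173390529/1427106331 : ℂ) * z^18 + (-269486467/1427106331 : ℂ) * z^19 + (144411527/203872333 : ℂ) * z^20 + (494287799/1427106331 : ℂ) * z^21 + (-474132768/1427106331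 : ℂ) * z^22 + (849418774/1427106331 : ℂ) * z^23 + (678258195/1427106331 : ℂ) * z^24 + (-392648567/1427106331 : ℂ) * z^25 + (286506180/1427106331 : ℂ) * z^26 + (103431572/203872333 : ℂ) * z^27 + (294867389/1427106331 : ℂ) * z^28 + (67063741/1427106331 : ℂ) * z^29 + (586335653/1427106331 : ℂ) * z^30 + (485089989/1427106331 : ℂ) * z^31 + (-176474840/1427106331 : ℂ) * z^32 + (663473162/1427106331 : ℂ) * z^33 + (105681944/203872333 : ℂ) * z^34 + (-194565891/1427106331 : ℂ) * z^35 + (392627371/1427106331 : ℂ) * z^36 + (322360683/1427106331 : ℂ) * z^37 + (-19685632/1427106331 : ℂ) * z^38 + (710441757/1427106331 : ℂ) * z^39 + (494940343/1427106331 : ℂ) * z^40 + (24076117/203872333 : ℂ) * z^41 + (-46968595/1427106331 : ℂ) * z^42 + (683158794/1427106331 : ℂ) * z^43 + (341112479/1427106331 : ℂ) * z^44 + (270845791/1427106331 : ℂ) * z^45 + (858039053/1427106331 : ℂ) * z^46 + (-76300446/1427106331 : ℂ) * z^47) * h2 + ((587158329/1427106331 : ℂ) + (-2445437506/1427106331 :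 ℂ) * z + (-255520682/1427106331 : ℂ) * z^2 + (-96220990/203872333 : ℂ) * z^3 + (-965015194/1427106331 : ℂ) * z^4 + (531890071/1427106331 : ℂ) * z^5 + (-138035967/1427106331 : ℂ) * z^6 + (323944802/1427106331 : ℂ) * z^7 + (-928108931/1427106331 : ℂ) * z^8 + (545228263/1427106331 : ℂ) * z^9 + (-736474829/1427106331 : ℂ) * z^10 + (712490645/1427106331 : ℂ) * z^11 + (1024271273/1427106331 : ℂ) * z^12 + (87422610/203872333 : ℂ) * z^13 + (1128884844/1427106331 : ℂ) * z^14 + (781738607/1427106331 : ℂ) * z^15 + (-76300446/1427106331 : ℂ) * z^16) * h1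

private lemma cert50 (z : ℂ) (h1 : z ^ 50 = 1)
    (h2 : -1 - z + z^5 + 2*z^7 - z^8 - z^10 + 2*z^11 + z^13 - z^17 - z^18 = 0) : z = 1 := by
  linear_combination ((-267000591/336750100 : ℂ) + (227065192/84187525 : ℂ) * z + (699929277/336750100 : ℂ) * z^2 + (-110390141/84187525 : ℂ) * z^3 + (47968689/67350020 : ℂ) * z^4 + (256831501/84187525 : ℂ) * z^5 + (143799513/336750100 : ℂ) * z^6 + (-78817757/84187525 : ℂ) * z^7 + (738695381/336750100 : ℂ) * z^8 + (4578/1745 : ℂ) * z^9 + (-401569451/336750100 : ℂ) * z^10 + (1915877/84187525 : ℂ) * z^11 + (1208799217/336750100 : ℂ) * z^12 + (55303094/84187525 : ℂ) * z^13 + (-97956043/67350020 : ℂ) * z^14 + (175977911/84187525 : ℂ) * z^15 + (904975053/336750100 : ℂ) * z^16 + (-68265772/84187525 : ℂ) * z^17 + (-71999679/336750100 : ℂ) * z^18 + (56084609/16837505 : ℂ) * z^19 + (410699589/336750100 : ℂ) * z^20 + (-144221813/84187525 : ℂ) * z^21 + (624248457/336750100 : ℂ) * z^22 + (258370354/84187525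 : ℂ) * z^23 + (-28831/38596 : ℂ) * z^24 + (-26695854/84187525 : ℂ) * z^25 + (947182993/336750100 : ℂ) * z^26 + (122028113/84187525 : ℂ) * z^27 + (-395414039/336750100 : ℂ) * z^28 + (19603426/16837505 : ℂ) * z^29 + (1073472529/336750100 : ℂ) * z^30 + (-17004328/84187525 : ℂ) * z^31 + (-276348803/336750100 : ℂ) * z^32 + (224728139/84187525 : ℂ) * z^33 + (126382393/67350020 : ℂ) * z^34 + (-66096569/84187525 : ℂ) * z^35 + (198959133/336750100 : ℂ) * z^36 + (225469973/84187525 : ℂ) * z^37 + (218568701/336750100 : ℂ) * z^38 + (-17720592/16837505 : ℂ) * z^39 + (705246569/336750100 : ℂ) * z^40 + (224060332/84187525 : ℂ) * z^41 + (-264329363/336750100 : ℂ) * z^42 + (-18333651/84187525 : ℂ) * z^43 + (197264761/67350020 : ℂ) * z^44 + (103335816/84187525 : ℂ) * z^45 + (-269967927/336750100 : ℂ) * z^46 + (108238208/84187525 : ℂ) * z^47 + (896298241/336750100 : ℂ) * z^48) * h2 + ((603750691/336750100 : ℂ) + (-978010277/336750100 : ℂ) * z + (-321638009/67350020 : ℂ)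 * z^2 + (-258368713/336750100 : ℂ) * z^3 + (201717119/336750100 : ℂ) * z^4 + (-76708502/16837505 : ℂ) * z^5 + (-262864749/336750100 : ℂ) * z^6 + (33739961/33675010 : ℂ) * z^7 + (121853721/33675010 : ℂ) * z^8 + (-89071659/33675010 : ℂ) * z^9 + (-770616799/336750100 : ℂ) * z^10 + (834548/16837505 : ℂ) * z^11 + (1399667069/336750100 : ℂ) * z^12 + (143375337/336750100 : ℂ) * z^13 + (32596981/67350020 : ℂ) * z^14 + (1329251073/336750100 : ℂ) * z^15 + (896298241/336750100 : ℂ) * z^16) * h1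

private lemma cert51 (z : ℂ) (h1 : z ^ 51 = 1)
    (h2 : -1 - z + z^5 + 2*z^7 - z^8 - z^10 + 2*z^11 + z^13 - z^17 - z^18 = 0) : z = 1 := by
  linear_combination ((-133594711/2055964989 : ℂ) + (-236165000/2055964989 : ℂ) * z + (130053478/685321663 : ℂ) * z^2 + (-143889745/2055964989 : ℂ) * z^3 + (-581099084/2055964989 : ℂ) * z^4 + (-25151888/685321663 : ℂ) * z^5 + (227375189/2055964989 : ℂ) * z^6 + (8126998/2055964989 : ℂ) * z^7 + (-122421594/685321663 : ℂ) * z^8 + (220424888/2055964989 : ℂ) * z^9 + (76780117/2055964989 : ℂ) * z^10 + (-273224725/685321663 : ℂ) * z^11 + (222998378/2055964989 : ℂ) * z^12 + (530921275/2055964989 : ℂ) * z^13 + (-214041748/685321663 : ℂ) * z^14 + (-337388266/2055964989 : ℂ) * z^15 + (1100840/9303009 : ℂ) * z^16 + (-29344303/685321663 : ℂ) * z^17 + (-419351458/2055964989 : ℂ) * z^18 + (161322448/2055964989 : ℂ) * z^19 + (155353142/685321663 : ℂ) * z^20 + (-706987093/2055964989 : ℂ) * z^21 + (-399064196/2055964989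 : ℂ) * z^22 + (214536119/685321663 : ℂ) * z^23 + (-252845935/2055964989 : ℂ) * z^24 + (-396490706/2055964989 : ℂ) * z^25 + (63732988/685321663 : ℂ) * z^26 + (-184192816/2055964989 : ℂ) * z^27 + (-403441007/2055964989 : ℂ) * z^28 + (-33536718/685321663 : ℂ) * z^29 + (405033266/2055964989 : ℂ) * z^30 + (-32176073/2055964989 : ℂ) * z^31 + (-188742084/685321663 : ℂ) * z^32 + (271942/9303009 : ℂ) * z^33 + (-42471107/2055964989 : ℂ) * z^34 + (-58688606/685321663 : ℂ) * z^35 + (263567435/2055964989 : ℂ) * z^36 + (-232754066/2055964989 : ℂ) * z^37 + (-99013276/685321663 : ℂ) * z^38 + (-254729317/2055964989 : ℂ) * z^39 + (-269902436/2055964989 : ℂ) * z^40 + (145489217/685321663 : ℂ) * z^41 + (71718347/2055964989 : ℂ) * z^42 + (-247784165/2055964989 : ℂ) * z^43 + (-204177823/685321663 : ℂ) * z^44 + (93836618/2055964989 : ℂ) * z^45 + (78663499/2055964989 : ℂ) * z^46 + (40324670/685321663 : ℂ) * z^47 + (56688248/2055964989 : ℂ) * z^48 + (-439633253/2055964989 :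 ℂ) * z^49) * h2 + ((2189559700/2055964989 : ℂ) + (-562068426/685321663 : ℂ) * z + (-153995434/2055964989 : ℂ) * z^2 + (-246270689/2055964989 : ℂ) * z^3 + (241662943/685321663 : ℂ) * z^4 + (522960037/2055964989 : ℂ) * z^5 + (-388084525/2055964989 : ℂ) * z^6 + (-112531175/2055964989 : ℂ) * z^7 + (-123487250/2055964989 : ℂ) * z^8 + (582226678/2055964989 : ℂ) * z^9 + (-70538914/158151153 : ℂ) * z^10 + (-79063598/2055964989 : ℂ) * z^11 + (57500039/685321663 : ℂ) * z^12 + (1976609/20356089 : ℂ) * z^13 + (177662258/2055964989 : ℂ) * z^14 + (-127648335/685321663 : ℂ) * z^15 + (-439633253/2055964989 : ℂ) * z^16) * h1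

private lemma cert52 (z : ℂ) (h1 : z ^ 52 = 1)
    (h2 : -1 - z + z^5 + 2*z^7 - z^8 - z^10 + 2*z^11 + z^13 - z^17 - z^18 = 0) : z = 1 := by
  linear_combination ((4757481615/6289355176 : ℂ) + (-102644045/3144677588 : ℂ) * z + (2194391065/6289355176 : ℂ) * z^2 + (436256010/786169397 : ℂ) * z^3 + (-544548561/6289355176 : ℂ) * z^4 + (1131969367/3144677588 : ℂ) * z^5 + (1575307625/6289355176 : ℂ) * z^6 + (361376655/786169397 : ℂ) * z^7 + (2147181271/6289355176 : ℂ) * z^8 + (-302715385/3144677588 : ℂ) * z^9 + (57493/72904 : ℂ) * z^10 + (76055887/786169397 : ℂ) * z^11 + (-68326485/483796552 : ℂ) * z^12 + (2982717395/3144677588 : ℂ) * z^13 + (442563777/6289355176 : ℂ) * z^14 + (2531951/786169397 : ℂ) * z^15 + (3242637527/6289355176 : ℂ) * z^16 + (675924003/3144677588 : ℂ) * z^17 + (2217207777/6289355176 : ℂ) * z^18 + (40802282/786169397 : ℂ) * z^19 + (3548800175/6289355176 : ℂ) * z^20 + (1563246003/3144677588 : ℂ) * z^21 + (-2396379007/6289355176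 : ℂ) * z^22 + (794811/1121497 : ℂ) * z^23 + (2960608687/6289355176 : ℂ) * z^24 + (-76309/345076 : ℂ) * z^25 + (4174486553/6289355176 : ℂ) * z^26 + (177734314/786169397 : ℂ) * z^27 + (678042543/6289355176 : ℂ) * z^28 + (996874079/3144677588 : ℂ) * z^29 + (1305117049/6289355176 : ℂ) * z^30 + (514200543/786169397 : ℂ) * z^31 + (79007703/6289355176 : ℂ) * z^32 + (687332359/3144677588 : ℂ) * z^33 + (3774343873/6289355176 : ℂ) * z^34 + (-148553229/786169397 : ℂ) * z^35 + (3569055783/6289355176 : ℂ) * z^36 + (1569463355/3144677588 : ℂ) * z^37 + (-57120299/483796552 : ℂ) * z^38 + (421003663/786169397 : ℂ) * z^39 + (157199295/6289355176 : ℂ) * z^40 + (671321519/3144677588 : ℂ) * z^41 + (4217236425/6289355176 : ℂ) * z^42 + (83940763/786169397 : ℂ) * z^43 + (2897529679/6289355176 : ℂ) * z^44 + (-324090321/3144677588 : ℂ) * z^45 + (2226412745/6289355176 : ℂ) * z^46 + (426482061/786169397 : ℂ) * z^47 + (201026479/6289355176 : ℂ) * z^48 + (3075335/4485988 : ℂ)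 * z^49 + (430129073/6289355176 : ℂ) * z^50) * h2 + ((1531873561/6289355176 : ℂ) + (-10841548701/6289355176 : ℂ) * z + (-1989102975/6289355176 : ℂ) * z^2 + (-5684439145/6289355176 : ℂ) * z^3 + (-2945499519/6289355176 : ℂ) * z^4 + (1519045721/3144677588 : ℂ) * z^5 + (-4044534449/6289355176 : ℂ) * z^6 + (5166215/4485988 : ℂ) * z^7 + (-3358102113/3144677588 : ℂ) * z^8 + (1253885579/3144677588 : ℂ) * z^9 + (-2062270633/6289355176 : ℂ) * z^10 + (574051515/3144677588 : ℂ) * z^11 + (5638269233/6289355176 : ℂ) * z^12 + (3612882967/6289355176 : ℂ) * z^13 + (4512646149/6289355176 : ℂ) * z^14 + (4741748743/6289355176 : ℂ) * z^15 + (430129073/6289355176 : ℂ) * z^16) * h1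

private lemma cert53 (z : ℂ) (h1 : z ^ 53 = 1)
    (h2 : -1 - z + z^5 + 2*z^7 - z^8 - z^10 + 2*z^11 + z^13 - z^17 - z^18 = 0) : z = 1 := by
  linear_combination ((-9402875601/11183033549 : ℂ) + (-15618156461/11183033549 : ℂ) * z + (-2904048269/11183033549 : ℂ) * z^2 + (-5193537721/11183033549 : ℂ) * z^3 + (-15232955830/11183033549 : ℂ) * z^4 + (-9802401629/11183033549 : ℂ) * z^5 + (-2406874177/11183033549 : ℂ) * z^6 + (-9939365044/11183033549 : ℂ) * z^7 + (-13397930404/11183033549 : ℂ) * z^8 + (-3438669197/11183033549 : ℂ) * z^9 + (-7530545390/11183033549 : ℂ) * z^10 + (-14129361174/11183033549 : ℂ) * z^11 + (-5373189738/11183033549 : ℂ) * z^12 + (-6567182069/11183033549 : ℂ) * z^13 + (-11928215978/11183033549 : ℂ) * z^14 + (-7694802298/11183033549 : ℂ) * z^15 + (-7728702486/11183033549 : ℂ) * z^16 + (-9971372374/11183033549 : ℂ) * z^17 + (-8586155904/11183033549 : ℂ) * z^18 + (-7200939434/11183033549 : ℂ) * z^19 + (-9443609322/11183033549 : ℂ)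 * z^20 + (-9477509510/11183033549 : ℂ) * z^21 + (-5244095830/11183033549 : ℂ) * z^22 + (-10605129739/11183033549 : ℂ) * z^23 + (-11799122070/11183033549 : ℂ) * z^24 + (-3042950634/11183033549 : ℂ) * z^25 + (-9641766418/11183033549 : ℂ) * z^26 + (-13733642611/11183033549 : ℂ) * z^27 + (-3774381404/11183033549 : ℂ) * z^28 + (-7232946764/11183033549 : ℂ) * z^29 + (-14765437631/11183033549 : ℂ) * z^30 + (-7369910179/11183033549 : ℂ) * z^31 + (-1939355978/11183033549 : ℂ) * z^32 + (-11978774087/11183033549 : ℂ) * z^33 + (-14268263539/11183033549 : ℂ) * z^34 + (-1554155347/11183033549 : ℂ) * z^35 + (-7769436207/11183033549 : ℂ) * z^36 + (-17172311808/11183033549 : ℂ) * z^37 + (-2595580626/11183033549 : ℂ) * z^38 + (-3417461812/11183033549 : ℂ) * z^39 + (-17739758670/11183033549 : ℂ) * z^40 + (-10118525206/11183033549 : ℂ) * z^41 + (-1085172197/11183033549 : ℂ) * z^42 + (-9475783944/11183033549 : ℂ) * z^43 + (-14200651062/11183033549 : ℂ) * z^44 + (-2971660746/11183033549 : ℂ)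 * z^45 + (-7696527864/11183033549 : ℂ) * z^46 + (-16087139611/11183033549 : ℂ) * z^47 + (-7053786602/11183033549 : ℂ) * z^48 + (567446862/11183033549 : ℂ) * z^49 + (-13754849996/11183033549 : ℂ) * z^50 + (-14576731182/11183033549 : ℂ) * z^51) * h2 + ((20585909150/11183033549 : ℂ) + (13837998513/11183033549 : ℂ) * z + (18522204730/11183033549 : ℂ) * z^2 + (8097585990/11183033549 : ℂ) * z^3 + (20426493551/11183033549 : ℂ) * z^4 + (15632481858/11183033549 : ℂ) * z^5 + (-3408880655/11183033549 : ℂ) * z^6 + (-9363560250/11183033549 : ℂ) * z^7 + (-3689679594/11183033549 : ℂ) * z^8 + (11413703694/11183033549 : ℂ) * z^9 + (3086661386/11183033549 : ℂ) * z^10 + (-9206936293/11183033549 : ℂ) * z^11 + (-23140926213/11183033549 : ℂ) * z^12 + (-6486339740/11183033549 : ℂ) * z^13 + (-13187403134/11183033549 : ℂ) * z^14 + (-28331581178/11183033549 : ℂ) * z^15 + (-14576731182/11183033549 : ℂ) * z^16) * h1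

private lemma cert54 (z : ℂ) (h1 : z ^ 54 = 1)
    (h2 : -1 - z + z^5 + 2*z^7 - z^8 - z^10 + 2*z^11 + z^13 - z^17 - z^18 = 0) : z = 1 := by
  linear_combination ((-5542585781/76332808404 : ℂ) + (521465015/19083202101 : ℂ) * z + (8697088777/25444269468 : ℂ) * z^2 + (-2790174920/19083202101 : ℂ) * z^3 + (-20969985085/76332808404 : ℂ) * z^4 + (1753051808/6361067367 : ℂ) * z^5 + (7984974007/76332808404 : ℂ) * z^6 + (-3152865322/19083202101 : ℂ) * z^7 + (2884367/160026852 : ℂ) * z^8 + (5105931103/19083202101 : ℂ) * z^9 + (-1269881209/76332808404 : ℂ) * z^10 + (-70969/205587 : ℂ) * z^11 + (26176408063/76332808404 : ℂ) * z^12 + (5681851340/19083202101 : ℂ) * z^13 + (-12451907671/25444269468 : ℂ) * z^14 + (980279890/19083202101 : ℂ) * z^15 + (30721181567/76332808404 : ℂ) * z^16 + (-7523192/40006713 : ℂ) * z^17 + (-16454325209/76332808404 : ℂ) * z^18 + (4984362398/19083202101 : ℂ) * z^19 + (5945791573/25444269468 : ℂ) * z^20 + (-6809514296/19083202101 : ℂ)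 * z^21 + (-437995177/76332808404 : ℂ) * z^22 + (3403237283/6361067367 : ℂ) * z^23 + (-19244280977/76332808404 : ℂ) * z^24 + (-5673320920/19083202101 : ℂ) * z^25 + (48371/123764 : ℂ) * z^26 + (1188251398/19083202101 : ℂ) * z^27 + (-16940600029/76332808404 : ℂ) * z^28 + (175606777/6361067367 : ℂ) * z^29 + (16094585671/76332808404 : ℂ) * z^30 + (-1125462406/19083202101 : ℂ) * z^31 + (-5851165771/25444269468 : ℂ) * z^32 + (6113277367/19083202101 : ℂ) * z^33 + (14643824063/76332808404 : ℂ) * z^34 + (-11849131/40006713 : ℂ) * z^35 + (1397264323/76332808404 : ℂ) * z^36 + (2256427541/19083202101 : ℂ) * z^37 + (1161041461/25444269468 : ℂ) * z^38 + (519117997/19083202101 : ℂ) * z^39 + (-5752767337/76332808404 : ℂ) * z^40 + (845035403/6361067367 : ℂ) * z^41 + (-8380178585/76332808404 : ℂ) * z^42 + (-3334901878/19083202101 : ℂ) * z^43 + (57116203/160026852 : ℂ) * z^44 + (2868307408/19083202101 : ℂ) * z^45 + (-7990105249/76332808404 : ℂ) * z^46 + (-1980108704/6361067367 : ℂ) *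 z^47 + (16822731895/76332808404 : ℂ) * z^48 + (2965825742/19083202101 : ℂ) * z^49 + (-2219100151/25444269468 : ℂ) * z^50 + (2308972930/19083202101 : ℂ) * z^51 + (1406652395/76332808404 : ℂ) * z^52) * h2 + ((81875394185/76332808404 : ℂ) + (-24292027561/25444269468 : ℂ) * z + (-28177126391/76332808404 : ℂ) * z^2 + (-14930566651/76332808404 : ℂ) * z^3 + (3570076085/8481423156 : ℂ) * z^4 + (-1402305598/19083202101 : ℂ) * z^5 + (-26935735643/76332808404 : ℂ) * z^6 + (9816291025/38166404202 : ℂ) * z^7 + (4894612225/38166404202 : ℂ) * z^8 + (3663560023/38166404202 : ℂ) * z^9 + (-40987301417/76332808404 : ℂ) * z^10 + (-2086306237/19083202101 : ℂ) * z^11 + (3187337207/8481423156 : ℂ) * z^12 + (5206002515/76332808404 : ℂ) * z^13 + (2578591267/76332808404 : ℂ) * z^14 + (3547514705/25444269468 : ℂ) * z^15 + (1406652395/76332808404 : ℂ) * z^16) * h1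

private lemma cert55 (z : ℂ) (h1 : z ^ 55 = 1)
    (h2 : -1 - z + z^5 + 2*z^7 - z^8 - z^10 + 2*z^11 + z^13 - z^17 - z^18 = 0) : z = 1 := by
  linear_combination ((-19726873682/38943843895 : ℂ) + (-784115154/38943843895 : ℂ) * z + (-7353746441/38943843895 : ℂ) * z^2 + (-16429565203/38943843895 : ℂ) * z^3 + (-321295072/7788768779 : ℂ) * z^4 + (-25647503007/38943843895 : ℂ) * z^5 + (-577564904/38943843895 : ℂ) * z^6 + (2083571784/38943843895 : ℂ) * z^7 + (-30224007508/38943843895 : ℂ) * z^8 + (804253518/7788768779 : ℂ) * z^9 + (-711859637/3540349445 : ℂ) * z^10 + (-21914769524/38943843895 : ℂ) * z^11 + (1412459534/38943843895 : ℂ) * z^12 + (-10984963173/38943843895 : ℂ) * z^13 + (-1159547540/7788768779 : ℂ) * z^14 + (-18710197732/38943843895 : ℂ) * z^15 + (-14045713049/38943843895 : ℂ) * z^16 + (10657689709/38943843895 : ℂ) * z^17 + (-28387099018/38943843895 : ℂ) * z^18 + (-1915987201/7788768779 : ℂ) * z^19 + (9227227008/38943843895 : ℂ) * z^20 + (-2710687429/3540349445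 : ℂ) * z^21 + (-5114158961/38943843895 : ℂ) * z^22 + (-449674278/38943843895 : ℂ) * z^23 + (-2672426862/7788768779 : ℂ) * z^24 + (-8174908837/38943843895 : ℂ) * z^25 + (-20572331544/38943843895 : ℂ) * z^26 + (2754897514/38943843895 : ℂ) * z^27 + (-11329416003/38943843895 : ℂ) * z^28 + (-4636227920/7788768779 : ℂ) * z^29 + (11064135498/38943843895 : ℂ) * z^30 + (-21243443794/38943843895 : ℂ) * z^31 + (-1689300646/3540349445 : ℂ) * z^32 + (6487630997/38943843895 : ℂ) * z^33 + (-3510679330/7788768779 : ℂ) * z^34 + (-2730306807/38943843895 : ℂ) * z^35 + (-11806125569/38943843895 : ℂ) * z^36 + (-18375756856/38943843895 : ℂ) * z^37 + (567001672/38943843895 : ℂ) * z^38 + (-3831974402/7788768779 : ℂ) * z^39 + (-1120549642/38943843895 : ℂ) * z^40 + (-6425892849/38943843895 : ℂ) * z^41 + (-25405757906/38943843895 : ℂ) * z^42 + (113631447/3540349445 : ℂ) * z^43 + (-3650511438/7788768779 : ℂ) * z^44 + (-5742507362/38943843895 : ℂ) * z^45 + (7773567376/38943843895 : ℂ) * z^46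 + (-26933439386/38943843895 : ℂ) * z^47 + (-13417364648/38943843895 : ℂ) * z^48 + (-181462964/7788768779 : ℂ) * z^49 + (-20409817927/38943843895 : ℂ) * z^50 + (6245885896/38943843895 : ℂ) * z^51 + (-12733979161/38943843895 : ℂ) * z^52 + (-18039322368/38943843895 : ℂ) * z^53) * h2 + ((58670717577/38943843895 : ℂ) + (-18432855059/38943843895 : ℂ) * z + (1627572319/7788768779 : ℂ) * z^2 + (23783311644/38943843895 : ℂ) * z^3 + (18036040563/38943843895 : ℂ) * z^4 + (1505420937/7788768779 : ℂ) * z^5 + (2312813887/3540349445 : ℂ) * z^6 + (-9662700137/7788768779 : ℂ) * z^7 + (5973902779/7788768779 : ℂ) * z^8 + (2134577366/7788768779 : ℂ) * z^9 + (-2510620443/3540349445 : ℂ) * z^10 + (742928580/7788768779 : ℂ) * z^11 + (-21317132747/38943843895 : ℂ) * z^12 + (-14163932031/38943843895 : ℂ) * z^13 + (-1297618653/7788768779 : ℂ) * z^14 + (-30773301529/38943843895 : ℂ) * z^15 + (-18039322368/38943843895 : ℂ) * z^16) * h1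

private lemma cert56 (z : ℂ) (h1 : z ^ 56 = 1)
    (h2 : -1 - z + z^5 + 2*z^7 - z^8 - z^10 + 2*z^11 + z^13 - z^17 - z^18 = 0) : z = 1 := by
  linear_combination ((-7490802393/361118128 : ℂ) + (-4247050231/180559064 : ℂ) * z + (-307389703/361118128 : ℂ) * z^2 + (-1187192311/90279532 : ℂ) * z^3 + (-10007751837/361118128 : ℂ) * z^4 + (-25311627/4199048 : ℂ) * z^5 + (-295592077/51588304 : ℂ) * z^6 + (-617127786/22569883 : ℂ) * z^7 + (-4856441689/361118128 : ℂ) * z^8 + (-183190335/180559064 : ℂ) * z^9 + (-8374490903/361118128 : ℂ) * z^10 + (-1897272011/90279532 : ℂ) * z^11 + (-115069/804272 : ℂ) * z^12 + (-9689117/599864 : ℂ) * z^13 + (-9511916859/361118128 : ℂ) * z^14 + (-83197846/22569883 : ℂ) * z^15 + (-3151587465/361118128 : ℂ) * z^16 + (-5031936799/180559064 : ℂ) * z^17 + (-3656204551/361118128 : ℂ) * z^18 + (-5721589/2099524 : ℂ) * z^19 + (-1305319883/51588304 : ℂ) * z^20 + (-3232573969/180559064 : ℂ) * z^21 + (-57478891/361118128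 : ℂ) * z^22 + (-435610314/22569883 : ℂ) * z^23 + (-8790186953/361118128 : ℂ) * z^24 + (-304717815/180559064 : ℂ) * z^25 + (-25679665/2162384 : ℂ) * z^26 + (-50081/1796 : ℂ) * z^27 + (-2532264445/361118128 : ℂ) * z^28 + (-873430793/180559064 : ℂ) * z^29 + (-9754971819/361118128 : ℂ) * z^30 + (-329056925/22569883 : ℂ) * z^31 + (-247307913/361118128 : ℂ) * z^32 + (-93630325/4199048 : ℂ) * z^33 + (-1134936081/51588304 : ℂ) * z^34 + (-28400163/90279532 : ℂ) * z^35 + (-5372583245/361118128 : ℂ) * z^36 + (-4906981393/180559064 : ℂ) * z^37 + (-1627252027/361118128 : ℂ) * z^38 + (-164409381/22569883 : ℂ) * z^39 + (-10121352489/361118128 : ℂ) * z^40 + (-6819723/599864 : ℂ) * z^41 + (-620890967/361118128 : ℂ) * z^42 + (-2234341727/90279532 : ℂ) * z^43 + (-7015109085/361118128 : ℂ) * z^44 + (16176943/180559064 : ℂ) * z^45 + (-6399375275/361118128 : ℂ) * z^46 + (-13383130/524881 : ℂ) * z^47 + (-130537007/51588304 : ℂ) * z^48 + (-1860988607/180559064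 : ℂ) * z^49 + (-10153706375/361118128 : ℂ) * z^50 + (-776560851/90279532 : ℂ) * z^51 + (-1183985581/361118128 : ℂ) * z^52 + (-4750230761/180559064 : ℂ) * z^53 + (-36023229/2162384 : ℂ) * z^54) * h2 + ((7851920521/361118128 : ℂ) + (15623784727/361118128 : ℂ) * z + (8801490165/361118128 : ℂ) * z^2 + (722308421/51588304 : ℂ) * z^3 + (14756521081/361118128 : ℂ) * z^4 + (54578481/4199048 : ℂ) * z^5 + (-4248156001/361118128 : ℂ) * z^6 + (-1672902687/180559064 : ℂ) * z^7 + (242159245/180559064 : ℂ) * z^8 + (1547195789/180559064 : ℂ) * z^9 + (4864725259/361118128 : ℂ) * z^10 + (-3929902173/180559064 : ℂ) * z^11 + (-13259949779/361118128 : ℂ) * z^12 + (-612889855/51588304 : ℂ) * z^13 + (-10684447103/361118128 : ℂ) * z^14 + (-15516340765/361118128 : ℂ) * z^15 + (-36023229/2162384 : ℂ) * z^16) * h1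

private lemma cert57 (z : ℂ) (h1 : z ^ 57 = 1)
    (h2 : -1 - z + z^5 + 2*z^7 - z^8 - z^10 + 2*z^11 + z^13 - z^17 - z^18 = 0) : z = 1 := by
  linear_combination ((1360267411/7685407641 : ℂ) + (-23938020955/7685407641 : ℂ) * z + (-3991846788/2561802547 : ℂ) * z^2 + (5821137208/7685407641 : ℂ) * z^3 + (-13357892788/7685407641 : ℂ) * z^4 + (-7599110472/2561802547 : ℂ) * z^5 + (-2506896320/7685407641 : ℂ) * z^6 + (2005009505/7685407641 : ℂ) * z^7 + (-6755393914/2561802547 : ℂ) * z^8 + (-16991026064/7685407641 : ℂ) * z^9 + (5233425530/7685407641 : ℂ) * z^10 + (-3009466667/2561802547 : ℂ) * z^11 + (-23300548118/7685407641 : ℂ) * z^12 + (-3525749614/7685407641 : ℂ) * z^13 + (436917752/2561802547 : ℂ) * z^14 + (-17567950124/7685407641 : ℂ) * z^15 + (-18276535390/7685407641 : ℂ) * z^16 + (232300684/2561802547 : ℂ) * z^17 + (-104126/231537 : ℂ) * z^18 + (-22940361082/7685407641 : ℂ) * z^19 + (-3144868383/2561802547 : ℂ) * z^20 + (4071150784/7685407641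 : ℂ) * z^21 + (-15412955980/7685407641 : ℂ) * z^22 + (-6522037450/2561802547 : ℂ) * z^23 + (-592674908/7685407641 : ℂ) * z^24 + (-1301260174/7685407641 : ℂ) * z^25 + (-6726654518/2561802547 : ℂ) * z^26 + (-15343460684/7685407641 : ℂ) * z^27 + (4431337820/7685407641 : ℂ) * z^28 + (-3280270099/2561802547 : ℂ) * z^29 + (-24102635828/7685407641 : ℂ) * z^30 + (-1878184234/7685407641 : ℂ) * z^31 + (465657148/2561802547 : ℂ) * z^32 + (-20874219803/7685407641 : ℂ) * z^33 + (-16362313978/7685407641 : ℂ) * z^34 + (1309373706/2561802547 : ℂ) * z^35 + (-5511317510/7685407641 : ℂ) * z^36 + (-743842/231537 : ℂ) * z^37 + (-2297889978/2561802547 : ℂ) * z^38 + (5068810657/7685407641 : ℂ) * z^39 + (-20229477709/7685407641 : ℂ) * z^40 + (-6289736766/2561802547 : ℂ) * z^41 + (5297203879/7685407641 : ℂ) * z^42 + (-6094879360/7685407641 : ℂ) * z^43 + (-8148857703/2561802547 : ℂ) * z^44 + (-9223551728/7685407641 : ℂ) * z^45 + (5288445098/7685407641 : ℂ) * z^46 +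 (-4756720887/2561802547 : ℂ) * z^47 + (-21911743484/7685407641 : ℂ) * z^48 + (3042533186/7685407641 : ℂ) * z^49 + (-1533015879/2561802547 : ℂ) * z^50 + (-24157655396/7685407641 : ℂ) * z^51 + (-9645658570/7685407641 : ℂ) * z^52 + (1859120937/2561802547 : ℂ) * z^53 + (-12774330938/7685407641 : ℂ) * z^54 + (-24166414177/7685407641 : ℂ) * z^55) * h2 + ((6325140230/7685407641 : ℂ) + (4964115301/2561802547 : ℂ) * z + (35913561319/7685407641 : ℂ) * z^2 + (6154403156/7685407641 : ℂ) * z^3 + (2512251860/2561802547 : ℂ) * z^4 + (37515491615/7685407641 : ℂ) * z^5 + (1366206781/7685407641 : ℂ) * z^6 + (-8753118727/7685407641 : ℂ) * z^7 + (-25153999876/7685407641 : ℂ) * z^8 + (23886255245/7685407641 : ℂ) * z^9 + (11217816487/7685407641 : ℂ) * z^10 + (-4590288856/7685407641 : ℂ) * z^11 + (-11267771322/2561802547 : ℂ) * z^12 + (-4068295759/7685407641 : ℂ) * z^13 + (-7196968127/7685407641 : ℂ) * z^14 + (-12313581705/2561802547 : ℂ) * z^15 + (-24166414177/7685407641 :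 ℂ) * z^16) * h1

private lemma cert58 (z : ℂ) (h1 : z ^ 58 = 1)
    (h2 : -1 - z + z^5 + 2*z^7 - z^8 - z^10 + 2*z^11 + z^13 - z^17 - z^18 = 0) : z = 1 := by
  linear_combination ((-31227459067/181232701268 : ℂ) + (-158439794/45308175317 : ℂ) * z + (17082389853/181232701268 : ℂ) * z^2 + (-8705406712/45308175317 : ℂ) * z^3 + (-30642731411/181232701268 : ℂ) * z^4 + (-9453279713/45308175317 : ℂ) * z^5 + (896123101/181232701268 : ℂ) * z^6 + (-1494275828/45308175317 : ℂ) * z^7 + (-62449297047/181232701268 : ℂ) * z^8 + (5966334666/45308175317 : ℂ) * z^9 + (-2489079303/181232701268 : ℂ) * z^10 + (-18540534418/45308175317 : ℂ) * z^11 + (23199310105/181232701268 : ℂ) * z^12 + (32138/270773 : ℂ) * z^13 + (-42927899895/181232701268 : ℂ) * z^14 + (-9520772772/45308175317 : ℂ) * z^15 + (1441376593/181232701268 : ℂ) * z^16 + (317128353/45308175317 : ℂ) * z^17 + (-81050042031/181232701268 : ℂ) * z^18 + (-1408385079/45308175317 : ℂ) * z^19 + (49353984653/181232701268 : ℂ)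 * z^20 + (-20769961295/45308175317 : ℂ) * z^21 + (-28092320211/181232701268 : ℂ) * z^22 + (11831045376/45308175317 : ℂ) * z^23 + (-34994373939/181232701268 : ℂ) * z^24 + (-8791809280/45308175317 : ℂ) * z^25 + (4357230561/181232701268 : ℂ) * z^26 + (2300509842/45308175317 : ℂ) * z^27 + (-203995/669316 : ℂ) * z^28 + (-14231292658/45308175317 : ℂ) * z^29 + (40436277145/181232701268 : ℂ) * z^30 + (-7809195306/45308175317 : ℂ) * z^31 + (-57591199191/181232701268 : ℂ) * z^32 + (7180859130/45308175317 : ℂ) * z^33 + (-27748757215/181232701268 : ℂ) * z^34 + (-8655495907/45308175317 : ℂ) * z^35 + (4087258325/181232701268 : ℂ) * z^36 + (-770782279/45308175317 : ℂ) * z^37 + (1095766321/181232701268 : ℂ) * z^38 + (-12702062595/45308175317 : ℂ) * z^39 + (-33092101351/181232701268 : ℂ) * z^40 + (-624600365/45308175317 : ℂ) * z^41 + (-33725860527/181232701268 : ℂ) * z^42 + (1239643982/45308175317 : ℂ) * z^43 + (-25620763763/181232701268 : ℂ) * z^44 + (-8657276764/45308175317 : ℂ) * z^45 + (-3027841779/181232701268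 : ℂ) * z^46 + (-11519047258/45308175317 : ℂ) * z^47 + (28046559289/181232701268 : ℂ) * z^48 + (6823594779/45308175317 : ℂ) * z^49 + (-61020239643/181232701268 : ℂ) * z^50 + (-15443104954/45308175317 : ℂ) * z^51 + (12350328505/181232701268 : ℂ) * z^52 + (-7674504687/45308175317 : ℂ) * z^53 + (903246529/181232701268 : ℂ) * z^54 + (-2026274191/45308175317 : ℂ) * z^55 + (-38684436455/181232701268 : ℂ) * z^56) * h2 + ((212460160335/181232701268 : ℂ) + (-149371483025/181232701268 : ℂ) * z + (-16448630677/181232701268 : ℂ) * z^2 + (17739236995/181232701268 : ℂ) * z^3 + (65464358259/181232701268 : ℂ) * z^4 + (9307097799/45308175317 : ℂ) * z^5 + (36283236575/181232701268 : ℂ) * z^6 + (-20145774035/90616350634 : ℂ) * z^7 + (31782357113/90616350634 : ℂ) * z^8 + (21369882927/90616350634 : ℂ) * z^9 + (-114687562695/181232701268 : ℂ) * z^10 + (-2684413714/45308175317 : ℂ) * z^11 + (-18347690243/181232701268 : ℂ) * z^12 + (-29794772219/181232701268 : ℂ) * z^13 + (-7201850235/181232701268 : ℂ) * z^14 + (-46789533219/181232701268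 : ℂ) * z^15 + (-38684436455/181232701268 : ℂ) * z^16) * h1

private lemma cert59 (z : ℂ) (h1 : z ^ 59 = 1)
    (h2 : -1 - z + z^5 + 2*z^7 - z^8 - z^10 + 2*z^11 + z^13 - z^17 - z^18 = 0) : z = 1 := by
  linear_combination ((20381711498/28048289719 : ℂ) + (15428455544/28048289719 : ℂ) * z + (2398906651/28048289719 : ℂ) * z^2 + (10199138900/28048289719 : ℂ) * z^3 + (13222362222/28048289719 : ℂ) * z^4 + (-5242629462/28048289719 : ℂ) * z^5 + (758376724/28048289719 : ℂ) * z^6 + (20185680563/28048289719 : ℂ) * z^7 + (-1699763315/28048289719 : ℂ) * z^8 + (-3391561219/28048289719 : ℂ) * z^9 + (24757935994/28048289719 : ℂ) * z^10 + (8773807285/28048289719 : ℂ) * z^11 + (-1839741994/28048289719 : ℂ) * z^12 + (22249093022/28048289719 : ℂ) * z^13 + (16897378385/28048289719 : ℂ) * z^14 + (-6366486564/28048289719 : ℂ) * z^15 + (4758596285/28048289719 : ℂ) * z^16 + (20480818537/28048289719 : ℂ) * z^17 + (-4423719002/28048289719 : ℂ) * z^18 + (-8209144768/28048289719 : ℂ)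 * z^19 + (24227162822/28048289719 : ℂ) * z^20 + (7697897477/28048289719 : ℂ) * z^21 + (-8831367868/28048289719 : ℂ) * z^22 + (23604939722/28048289719 : ℂ) * z^23 + (19819513956/28048289719 : ℂ) * z^24 + (-5085023583/28048289719 : ℂ) * z^25 + (10637198669/28048289719 : ℂ) * z^26 + (21762281518/28048289719 : ℂ) * z^27 + (-1501583431/28048289719 : ℂ) * z^28 + (-6853298068/28048289719 : ℂ) * z^29 + (17235536948/28048289719 : ℂ) * z^30 + (6621987669/28048289719 : ℂ) * z^31 + (-9362141040/28048289719 : ℂ) * z^32 + (18787356173/28048289719 : ℂ) * z^33 + (17095558269/28048289719 : ℂ) * z^34 + (-4789885609/28048289719 : ℂ) * z^35 + (14637418230/28048289719 : ℂ) * z^36 + (20638424416/28048289719 : ℂ) * z^37 + (2173432732/28048289719 : ℂ) * z^38 + (5196656054/28048289719 : ℂ) * z^39 + (12996888303/28048289719 : ℂ) * z^40 + (-32660590/28048289719 : ℂ) * z^41 + (-4985916544/28048289719 : ℂ) * z^42 + (15395794954/28048289719 : ℂ) * z^43 + (11141953261/28048289719 : ℂ) * z^44 + (-5078460890/28048289719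 : ℂ) * z^45 + (16190727900/28048289719 : ℂ) * z^46 + (14970207541/28048289719 : ℂ) * z^47 + (-2180616196/28048289719 : ℂ) * z^48 + (19911177970/28048289719 : ℂ) * z^49 + (19397500680/28048289719 : ℂ) * z^50 + (-4001705726/28048289719 : ℂ) * z^51 + (-4515383016/28048289719 : ℂ) * z^52 + (17576411150/28048289719 : ℂ) * z^53 + (425587413/28048289719 : ℂ) * z^54 + (-794932946/28048289719 : ℂ) * z^55 + (20474255844/28048289719 : ℂ) * z^56 + (4253841693/28048289719 : ℂ) * z^57) * h2 + ((7666578221/28048289719 : ℂ) + (-63858456761/28048289719 : ℂ) * z + (-17827362195/28048289719 : ℂ) * z^2 + (-12598045551/28048289719 : ℂ) * z^3 + (-23421501122/28048289719 : ℂ) * z^4 + (12401978738/28048289719 : ℂ) * z^5 + (19912708282/28048289719 : ℂ) * z^6 + (22218272360/28048289719 : ℂ) * z^7 + (2188421242/28048289719 : ℂ) * z^8 + (7683044514/28048289719 : ℂ) * z^9 + (-28991344586/28048289719 : ℂ) * z^10 + (8807186441/28048289719 : ℂ) * z^11 + (18001998563/28048289719 : ℂ) * z^12 + (-369345533/28048289719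 : ℂ) * z^13 + (19679322898/28048289719 : ℂ) * z^14 + (24728097537/28048289719 : ℂ) * z^15 + (4253841693/28048289719 : ℂ) * z^16) * h1

private lemma cert60 (z : ℂ) (h1 : z ^ 60 = 1)
    (h2 : -1 - z + z^5 + 2*z^7 - z^8 - z^10 + 2*z^11 + z^13 - z^17 - z^18 = 0) : z = 1 := by
  linear_combination ((557471801/130372680 : ℂ) + (-64358599/65186340 : ℂ) * z + (94838541/43457560 : ℂ) * z^2 + (2820757/857715 : ℂ) * z^3 + (-36513451/26074536 : ℂ) * z^4 + (83065271/21728780 : ℂ) * z^5 + (137237207/130372680 : ℂ) * z^6 + (11665691/16296585 : ℂ) * z^7 + (158889243/43457560 : ℂ) * z^8 + (-11179159/13037268 : ℂ) * z^9 + (22071709/6861720 : ℂ) * z^10 + (8902258/5432195 : ℂ) * z^11 + (-76439287/130372680 : ℂ) * z^12 + (291134417/65186340 : ℂ) * z^13 + (-835/1688 : ℂ) * z^14 + (24513187/16296585 : ℂ) * z^15 + (440768977/130372680 : ℂ) * z^16 + (-20930317/21728780 : ℂ) * z^17 + (495416999/130372680 : ℂ) * z^18 + (158059/171543 : ℂ)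 * z^19 + (18022267/43457560 : ℂ) * z^20 + (265500781/65186340 : ℂ) * z^21 + (-123749537/130372680 : ℂ) * z^22 + (774529/285905 : ℂ) * z^23 + (57425437/26074536 : ℂ) * z^24 + (-44082487/65186340 : ℂ) * z^25 + (177611309/43457560 : ℂ) * z^26 + (-4189619/16296585 : ℂ) * z^27 + (211146529/130372680 : ℂ) * z^28 + (275/76 : ℂ) * z^29 + (-9211411/6861720 : ℂ) * z^30 + (60461414/16296585 : ℂ) * z^31 + (64532611/43457560 : ℂ) * z^32 + (-6055223/65186340 : ℂ) * z^33 + (5463617/1372344 : ℂ) * z^34 + (-2892321/5432195 : ℂ) * z^35 + (313926497/130372680 : ℂ) * z^36 + (135007409/65186340 : ℂ) * z^37 + (-30379867/43457560 : ℂ) * z^38 + (776078/171543 : ℂ) * z^39 + (-21503039/130372680 : ℂ) * z^40 + (20456067/21728780 : ℂ) * z^41 + (535969223/130372680 : ℂ) * z^42 + (-988288/857715 : ℂ) * z^43 + (100185/32072 : ℂ) * z^44 + (121211053/65186340 : ℂ) * z^45 + (3334327/130372680 : ℂ) * z^46 + (19998537/5432195 : ℂ) * z^47 + (-110129791/130372680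 : ℂ) * z^48 + (33112273/13037268 : ℂ) * z^49 + (6395783/2287240 : ℂ) * z^50 + (-20039591/16296585 : ℂ) * z^51 + (567568753/130372680 : ℂ) * z^52 + (7115399/21728780 : ℂ) * z^53 + (801361/1372344 : ℂ) * z^54 + (64672727/16296585 : ℂ) * z^55 + (-24237621/43457560 : ℂ) * z^56 + (201958849/65186340 : ℂ) * z^57 + (164829919/130372680 : ℂ) * z^58) * h2 + ((-427099121/130372680 : ℂ) + (-186375761/43457560 : ℂ) * z + (-31159685/26074536 : ℂ) * z^2 + (-713270687/130372680 : ℂ) * z^3 + (-82062603/43457560 : ℂ) * z^4 + (24164743/13037268 : ℂ) * z^5 + (-764346031/130372680 : ℂ) * z^6 + (116889649/13037268 : ℂ) * z^7 + (-453149/61788 : ℂ) * z^8 + (15030505/13037268 : ℂ) * z^9 + (206343449/130372680 : ℂ) * z^10 + (-4600823/13037268 : ℂ) * z^11 + (197837037/43457560 : ℂ) * z^12 + (444668953/130372680 : ℂ) * z^13 + (66240967/26074536 : ℂ) * z^14 + (189582539/43457560 : ℂ) * z^15 + (164829919/130372680 : ℂ) * z^16) * h1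

open Polynomial in
set_option maxRecDepth 8000 in
private lemma Qr_ne_zero {m : ℕ} (hm : m ≠ 0) {z : ℂ} (hz : z ^ m = 1) (h1 : z ≠ 1) :
    -1 - z + z^5 + 2*z^7 - z^8 - z^10 + 2*z^11 + z^13 - z^17 - z^18 ≠ 0 := by
  intro hQ
  have hfin : IsOfFinOrder z := isOfFinOrder_iff_pow_eq_one.mpr ⟨m, by omega, hz⟩
  set n := orderOf z with hn
  have hn0 : 0 < n := hfin.orderOf_pos
  have hzn : z ^ n = 1 := pow_orderOf_eq_one z
  have hn1 : n ≠ 1 := by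
    intro h
    exact h1 (orderOf_eq_one_iff.mp (hn ▸ h))
  have hprim : IsPrimitiveRoot z n := IsPrimitiveRoot.orderOf z
  have hint : IsIntegral ℚ z := by
    refine ⟨X ^ n - C 1, ?_, ?_⟩
    · exact monic_X_pow_sub_C 1 (by omega)
    · simp [hzn]
  set Qp : ℚ[X] := -1 - X + X^5 + 2*X^7 - X^8 - X^10 + 2*X^11 + X^13 - X^17 - X^18 with hQp
  have haev : Polynomial.aeval z Qp = 0 := by
    simp only [hQp, map_sub, map_add, map_mul, map_pow, map_neg, map_one, map_ofNat,
      Polynomial.aeval_X, Polynomial.aeval_one]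
    convert hQ using 2 <;> norm_num
  have hdeg : Qp.natDegree = 18 := by
    unfold Qp
    compute_degree!
    all_goals simp [Polynomial.coeff_one]
  have hQp0 : Qp ≠ 0 := fun h => by simp [h] at hdeg
  have hdvd : Polynomial.cyclotomic n ℚ ∣ Qp :=
    (Polynomial.cyclotomic_eq_minpoly_rat hprim hn0) ▸ minpoly.dvd ℚ z haev
  have hφ : Nat.totient n ≤ 18 := by
    have := Polynomial.natDegree_le_of_dvd hdvd hQp0
    rwa [Polynomial.natDegree_cyclotomic, hdeg] at this
  have hn105 : n ≤ 105 := totient_bound hφ hn0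
  have hn2 : 2 ≤ n := by omega
  interval_cases n
  · exact h1 (cert2 z hzn hQ)
  · exact h1 (cert3 z hzn hQ)
  · exact h1 (cert4 z hzn hQ)
  · exact h1 (cert5 z hzn hQ)
  · exact h1 (cert6 z hzn hQ)
  · exact h1 (cert7 z hzn hQ)
  · exact h1 (cert8 z hzn hQ)
  · exact h1 (cert9 z hzn hQ)
  · exact h1 (cert10 z hzn hQ)
  · exact h1 (cert11 z hzn hQ)
  · exact h1 (cert12 z hzn hQ)
  · exact h1 (cert13 z hzn hQ)
  · exact h1 (cert14 z hzn hQ)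
  · exact h1 (cert15 z hzn hQ)
  · exact h1 (cert16 z hzn hQ)
  · exact h1 (cert17 z hzn hQ)
  · exact h1 (cert18 z hzn hQ)
  · exact h1 (cert19 z hzn hQ)
  · exact h1 (cert20 z hzn hQ)
  · exact h1 (cert21 z hzn hQ)
  · exact h1 (cert22 z hzn hQ)
  · exact h1 (cert23 z hzn hQ)
  · exact h1 (cert24 z hzn hQ)
  · exact h1 (cert25 z hzn hQ)
  · exact h1 (cert26 z hzn hQ)
  · exact h1 (cert27 z hzn hQ)
  · exact h1 (cert28 z hzn hQ)
  · exact h1 (cert29 z hzn hQ)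
  · exact h1 (cert30 z hzn hQ)
  · exact h1 (cert31 z hzn hQ)
  · exact h1 (cert32 z hzn hQ)
  · exact h1 (cert33 z hzn hQ)
  · exact h1 (cert34 z hzn hQ)
  · exact h1 (cert35 z hzn hQ)
  · exact h1 (cert36 z hzn hQ)
  · exact h1 (cert37 z hzn hQ)
  · exact h1 (cert38 z hzn hQ)
  · exact h1 (cert39 z hzn hQ)
  · exact h1 (cert40 z hzn hQ)
  · exact h1 (cert41 z hzn hQ)
  · exact h1 (cert42 z hzn hQ)
  · exact h1 (cert43 z hzn hQ)
  · exact h1 (cert44 z hzn hQ)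
  · exact h1 (cert45 z hzn hQ)
  · exact h1 (cert46 z hzn hQ)
  · exact h1 (cert47 z hzn hQ)
  · exact h1 (cert48 z hzn hQ)
  · exact h1 (cert49 z hzn hQ)
  · exact h1 (cert50 z hzn hQ)
  · exact h1 (cert51 z hzn hQ)
  · exact h1 (cert52 z hzn hQ)
  · exact h1 (cert53 z hzn hQ)
  · exact h1 (cert54 z hzn hQ)
  · exact h1 (cert55 z hzn hQ)
  · exact h1 (cert56 z hzn hQ)
  · exact h1 (cert57 z hzn hQ)
  · exact h1 (cert58 z hzn hQ)
  · exact h1 (cert59 z hzn hQ)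
  · exact h1 (cert60 z hzn hQ)
  · exact absurd hφ (by decide)
  · exact absurd hφ (by decide)
  · exact absurd hφ (by decide)
  · exact absurd hφ (by decide)
  · exact absurd hφ (by decide)
  · exact absurd hφ (by decide)
  · exact absurd hφ (by decide)
  · exact absurd hφ (by decide)
  · exact absurd hφ (by decide)
  · exact absurd hφ (by decide)
  · exact absurd hφ (by decide)
  · exact absurd hφ (by decide)
  · exact absurd hφ (by decide)
  · exact absurd hφ (by decide)
  · exact absurd hφ (by decide)
  · exact absurd hφ (by decide)
  · exact absurd hφ (by decide)
  · exact absurd hφ (by decide)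
  · exact absurd hφ (by decide)
  · exact absurd hφ (by decide)
  · exact absurd hφ (by decide)
  · exact absurd hφ (by decide)
  · exact absurd hφ (by decide)
  · exact absurd hφ (by decide)
  · exact absurd hφ (by decide)
  · exact absurd hφ (by decide)
  · exact absurd hφ (by decide)
  · exact absurd hφ (by decide)
  · exact absurd hφ (by decide)
  · exact absurd hφ (by decide)
  · exact absurd hφ (by decide)
  · exact absurd hφ (by decide)
  · exact absurd hφ (by decide)
  · exact absurd hφ (by decide)
  · exact absurd hφ (by decide)
  · exact absurd hφ (by decide)
  · exact absurd hφ (by decide)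
  · exact absurd hφ (by decide)
  · exact absurd hφ (by decide)
  · exact absurd hφ (by decide)
  · exact absurd hφ (by decide)
  · exact absurd hφ (by decide)
  · exact absurd hφ (by decide)
  · exact absurd hφ (by decide)
  · exact absurd hφ (by decide)

private lemma det_ne_zero {m : ℕ} (hm : m ≠ 0) {z a2 a8 a9 : ℂ} (hz : z ^ m = 1) (h1 : z ≠ 1)
    (h2 : z^2 * a2 = 1) (h8 : z^8 * a8 = 1) (h9 : z^9 * a9 = 1) :
    (1 + z^2 + a2)^2 - (1 + z^8 + z^9) * (1 + a8 + a9) ≠ 0 := by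
  intro hd
  have hz0 : z ≠ 0 := by
    intro h
    rw [h, zero_pow hm] at hz
    exact zero_ne_one hz
  have hmul : z^9 * (-1 - z + z^5 + 2*z^7 - z^8 - z^10 + 2*z^11 + z^13 - z^17 - z^18) = 0 := by
    linear_combination (z^18) * hd - (z^14*(z^2*a2+1) + 2*z^16 + 2*z^18) * h2
      + ((1+z^8+z^9) * z^10) * h8 + ((1+z^8+z^9) * z^9) * h9
  rcases mul_eq_zero.mp hmul with h | h
  · exact pow_ne_zero 9 hz0 h
  · exact Qr_ne_zero hm hz h1 h

section Fourier
variable {m : ℕ} [NeZero m]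

private lemma pow_natMod (z : ℂ) (hz : z ^ m = 1) (a : ℕ) : z ^ (a % m) = z ^ a := by
  conv_rhs => rw [← Nat.div_add_mod a m]
  rw [pow_add, pow_mul, hz, one_pow, one_mul]

private lemma pow_val_add (z : ℂ) (hz : z ^ m = 1) (x y : ZMod m) :
    z ^ (x + y).val = z ^ x.val * z ^ y.val := by
  rw [ZMod.val_add, pow_natMod z hz, pow_add]

private lemma shift_sum (z : ℂ) (hz : z ^ m = 1) (h : ZMod m → ℝ) (a : ZMod m) :
    ∑ k : ZMod m, (h (k + a) : ℂ) * z ^ k.val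
      = z ^ (-a).val * ∑ k : ZMod m, (h k : ℂ) * z ^ k.val := by
  have step : ∀ k : ZMod m, (h (k + a) : ℂ) * z ^ k.val
      = z ^ (-a).val * ((h (k + a) : ℂ) * z ^ (k + a).val) := by
    intro k
    have e1 : z ^ ((k + a) + (-a)).val = z ^ (k + a).val * z ^ (-a).val :=
      pow_val_add z hz _ _
    have e2 : (k + a) + (-a) = k := by ring
    rw [e2] at e1
    rw [e1]; ring
  rw [Finset.sum_congr rfl (fun k _ => step k), ← Finset.mul_sum]
  congr 1
  exact Fintype.sum_equiv (Equiv.addRight a) _ _ (fun k => rfl)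

private lemma const_of_rels (hm : 10 ≤ m) (f g : ZMod m → ℝ)
    (HR : ∀ k : ZMod m, f k + f (k+2) + f (k-2) + g k + g (k-8) + g (k-9) = 0)
    (HS : ∀ k : ZMod m, g k + g (k+2) + g (k-2) + f k + f (k+8) + f (k+9) = 0) :
    (∀ k, f k = f 0) ∧ (∀ k, g k = - f 0) := by
  have hmne : m ≠ 0 := by omega
  set F : ℂ → ℂ := fun z => ∑ k : ZMod m, (f k : ℂ) * z ^ k.val with hF
  set G : ℂ → ℂ := fun z => ∑ k : ZMod m, (g k : ℂ) * z ^ k.val with hG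
  -- value facts
  have hval2 : ((2 : ZMod m)).val = 2 := by
    rw [show (2 : ZMod m) = ((2 : ℕ) : ZMod m) by push_cast; ring]
    exact ZMod.val_cast_of_lt (by omega)
  have hval8 : ((8 : ZMod m)).val = 8 := by
    rw [show (8 : ZMod m) = ((8 : ℕ) : ZMod m) by push_cast; ring]
    exact ZMod.val_cast_of_lt (by omega)
  have hval9 : ((9 : ZMod m)).val = 9 := by
    rw [show (9 : ZMod m) = ((9 : ℕ) : ZMod m) by push_cast; ring]
    exact ZMod.val_cast_of_lt (by omega)
  -- main vanishing of Fourier coefficients at nontrivial roots of unity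
  have key : ∀ z : ℂ, z ^ m = 1 → z ≠ 1 → F z = 0 ∧ G z = 0 := by
    intro z hz hz1
    have h2 : z ^ 2 * z ^ ((-2 : ZMod m)).val = 1 := by
      rw [← hval2, ← pow_val_add z hz]
      norm_num
    have h8 : z ^ 8 * z ^ ((-8 : ZMod m)).val = 1 := by
      rw [← hval8, ← pow_val_add z hz]
      norm_num
    have h9 : z ^ 9 * z ^ ((-9 : ZMod m)).val = 1 := by
      rw [← hval9, ← pow_val_add z hz]
      norm_num
    have EF : (1 + z^2 + z ^ ((-2 : ZMod m)).val) * F z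
        + (1 + z^8 + z^9) * G z = 0 := by
      have hsum : ∑ k : ZMod m,
          ((f k + f (k+2) + f (k+(-2)) + g k + g (k+(-8)) + g (k+(-9)) : ℝ) : ℂ) * z ^ k.val
            = 0 := by
        apply Finset.sum_eq_zero
        intro k _
        have := HR k
        rw [sub_eq_add_neg, sub_eq_add_neg, sub_eq_add_neg] at this
        rw [this]
        simp
      have hsplit : ∀ k : ZMod m,
          ((f k + f (k+2) + f (k+(-2)) + g k + g (k+(-8)) + g (k+(-9)) : ℝ) : ℂ) * z ^ k.val
          = (f k : ℂ) * z ^ k.val + (f (k+2) : ℂ) * z ^ k.val + (f (k+(-2)) : ℂ) * z ^ k.val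
            + (g k : ℂ) * z ^ k.val + (g (k+(-8)) : ℂ) * z ^ k.val
            + (g (k+(-9)) : ℂ) * z ^ k.val := by
        intro k; push_cast; ring
      rw [Finset.sum_congr rfl (fun k _ => hsplit k)] at hsum
      rw [Finset.sum_add_distrib, Finset.sum_add_distrib, Finset.sum_add_distrib,
        Finset.sum_add_distrib, Finset.sum_add_distrib] at hsum
      rw [shift_sum z hz f 2, shift_sum z hz f (-2), shift_sum z hz g (-8),
        shift_sum z hz g (-9)] at hsum
      rw [neg_neg, neg_neg, neg_neg] at hsum
      rw [hval2, hval8, hval9] at hsum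
      linear_combination hsum
    have ES : (1 + z^2 + z ^ ((-2 : ZMod m)).val) * G z
        + (1 + z ^ ((-8 : ZMod m)).val + z ^ ((-9 : ZMod m)).val) * F z = 0 := by
      have hsum : ∑ k : ZMod m,
          ((g k + g (k+2) + g (k+(-2)) + f k + f (k+8) + f (k+9) : ℝ) : ℂ) * z ^ k.val
            = 0 := by
        apply Finset.sum_eq_zero
        intro k _
        have := HS k
        rw [sub_eq_add_neg] at this
        rw [this]
        simp
      have hsplit : ∀ k : ZMod m,
          ((g k + g (k+2) + g (k+(-2)) + f k + f (k+8) + f (k+9) : ℝ) : ℂ) * z ^ k.val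
          = (g k : ℂ) * z ^ k.val + (g (k+2) : ℂ) * z ^ k.val + (g (k+(-2)) : ℂ) * z ^ k.val
            + (f k : ℂ) * z ^ k.val + (f (k+8) : ℂ) * z ^ k.val
            + (f (k+9) : ℂ) * z ^ k.val := by
        intro k; push_cast; ring
      rw [Finset.sum_congr rfl (fun k _ => hsplit k)] at hsum
      rw [Finset.sum_add_distrib, Finset.sum_add_distrib, Finset.sum_add_distrib,
        Finset.sum_add_distrib, Finset.sum_add_distrib] at hsum
      rw [shift_sum z hz g 2, shift_sum z hz g (-2), shift_sum z hz f 8,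
        shift_sum z hz f 9] at hsum
      rw [neg_neg] at hsum
      rw [hval2] at hsum
      linear_combination hsum
    have hdet := det_ne_zero hmne hz hz1 h2 h8 h9
    constructor
    · have hmul : ((1 + z^2 + z ^ ((-2 : ZMod m)).val)^2
          - (1 + z^8 + z^9) * (1 + z ^ ((-8 : ZMod m)).val + z ^ ((-9 : ZMod m)).val)) * F z
            = 0 := by
        linear_combination (1 + z^2 + z ^ ((-2 : ZMod m)).val) * EF - (1 + z^8 + z^9) * ES
      exact (mul_eq_zero.mp hmul).resolve_left hdet
    · have hmul : ((1 + z^2 + z ^ ((-2 : ZMod m)).val)^2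
          - (1 + z^8 + z^9) * (1 + z ^ ((-8 : ZMod m)).val + z ^ ((-9 : ZMod m)).val)) * G z
            = 0 := by
        linear_combination (1 + z^2 + z ^ ((-2 : ZMod m)).val) * ES
          - (1 + z ^ ((-8 : ZMod m)).val + z ^ ((-9 : ZMod m)).val) * EF
      exact (mul_eq_zero.mp hmul).resolve_left hdet
  -- Fourier inversion
  have hm0 : (m : ℂ) ≠ 0 := by
    simp only [ne_eq, Nat.cast_eq_zero]
    omega
  set ζ : ℂ := Complex.exp (2 * Real.pi * Complex.I / m) with hζdef
  have hζ : IsPrimitiveRoot ζ m := Complex.isPrimitiveRoot_exp m hmne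
  have hζm : ζ ^ m = 1 := hζ.pow_eq_one
  have inversion : ∀ (h : ZMod m → ℝ),
      (∀ z : ℂ, z ^ m = 1 → z ≠ 1 → ∑ k : ZMod m, (h k : ℂ) * z ^ k.val = 0) →
      ∀ k : ZMod m, (h k : ℂ) * m = ∑ l : ZMod m, (h l : ℂ) := by
    intro h hvan k
    have calc1 : ∑ j ∈ Finset.range m, (∑ l : ZMod m, (h l : ℂ) * (ζ ^ j) ^ l.val)
        * (ζ ^ ((-k : ZMod m)).val) ^ j = (h k : ℂ) * m := by
      have e1 : ∀ j ∈ Finset.range m,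
          (∑ l : ZMod m, (h l : ℂ) * (ζ ^ j) ^ l.val) * (ζ ^ ((-k : ZMod m)).val) ^ j
          = ∑ l : ZMod m, (h l : ℂ) * (ζ ^ ((l + (-k : ZMod m)).val)) ^ j := by
        intro j _
        rw [Finset.sum_mul]
        apply Finset.sum_congr rfl
        intro l _
        rw [pow_val_add ζ hζm l (-k), mul_pow, pow_right_comm]
        ring
      rw [Finset.sum_congr rfl e1, Finset.sum_comm]
      have e2 : ∀ l : ZMod m,
          ∑ j ∈ Finset.range m, (h l : ℂ) * (ζ ^ ((l + (-k : ZMod m)).val)) ^ j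
          = if l = k then (h l : ℂ) * m else 0 := by
        intro l
        rw [← Finset.mul_sum]
        by_cases hlk : l = k
        · subst hlk
          rw [show l + -l = (0 : ZMod m) by ring, ZMod.val_zero, pow_zero]
          simp
        · have hv0 : (l + (-k : ZMod m)).val ≠ 0 := by
            rw [ne_eq, ZMod.val_eq_zero]
            intro hc
            exact hlk (by rwa [add_neg_eq_zero] at hc)
          have hvlt : (l + (-k : ZMod m)).val < m := ZMod.val_lt _
          have hne : ζ ^ ((l + (-k : ZMod m)).val) ≠ 1 :=
            hζ.pow_ne_one_of_pos_of_lt hv0 hvlt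
          have hpm : (ζ ^ ((l + (-k : ZMod m)).val)) ^ m = 1 := by
            rw [← pow_mul, mul_comm, pow_mul, hζm, one_pow]
          rw [geom_sum_eq hne, hpm]
          simp [hlk]
      rw [Finset.sum_congr rfl (fun l _ => e2 l)]
      simp
    have calc2 : ∑ j ∈ Finset.range m, (∑ l : ZMod m, (h l : ℂ) * (ζ ^ j) ^ l.val)
        * (ζ ^ ((-k : ZMod m)).val) ^ j = ∑ l : ZMod m, (h l : ℂ) := by
      rw [Finset.sum_eq_single_of_mem 0 (Finset.mem_range.mpr (by omega))]
      · simp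
      · intro j hj hj0
        have hjm : j < m := Finset.mem_range.mp hj
        have : ∑ l : ZMod m, (h l : ℂ) * (ζ ^ j) ^ l.val = 0 := by
          apply hvan
          · rw [← pow_mul, mul_comm, pow_mul, hζm, one_pow]
          · exact hζ.pow_ne_one_of_pos_of_lt (by omega) hjm
        rw [this, zero_mul]
    rw [← calc1, calc2]
  have hf : ∀ k : ZMod m, f k = f 0 := by
    intro k
    have h1 := inversion f (fun z hz hz1 => (key z hz hz1).1) k
    have h2 := inversion f (fun z hz hz1 => (key z hz hz1).1) 0
    have : (f k : ℂ) * m = (f 0 : ℂ) * m := by rw [h1, h2]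
    have := mul_right_cancel₀ hm0 this
    exact_mod_cast this
  have hgc : ∀ k : ZMod m, g k = g 0 := by
    intro k
    have h1 := inversion g (fun z hz hz1 => (key z hz hz1).2) k
    have h2 := inversion g (fun z hz hz1 => (key z hz hz1).2) 0
    have : (g k : ℂ) * m = (g 0 : ℂ) * m := by rw [h1, h2]
    have := mul_right_cancel₀ hm0 this
    exact_mod_cast this
  have hg0 : g 0 = - f 0 := by
    have := HR 0
    rw [hf (0+2), hf (0-2), hgc (0-8), hgc (0-9)] at this
    linarith
  exact ⟨hf, fun k => by rw [hgc k, hg0]⟩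

end Fourier

namespace NutDev
open DihedralGroup

variable {m : ℕ}

private lemma natCast_zmod_ne (hm : 10 ≤ m) (a : ℕ) (h1 : 0 < a) (h2 : a < m) :
    ((a : ℕ) : ZMod m) ≠ 0 := by
  haveI : NeZero m := ⟨by omega⟩
  intro h
  rw [ZMod.natCast_eq_zero_iff] at h
  exact absurd (Nat.le_of_dvd h1 h) (by omega)

private lemma zm1 (hm : 10 ≤ m) : (1 : ZMod m) ≠ 0 := by
  have := natCast_zmod_ne hm 1 (by omega) (by omega); simpa using this
private lemma zm2 (hm : 10 ≤ m) : (2 : ZMod m) ≠ 0 := by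
  have := natCast_zmod_ne hm 2 (by omega) (by omega); simpa using this
private lemma zm4 (hm : 10 ≤ m) : (4 : ZMod m) ≠ 0 := by
  have := natCast_zmod_ne hm 4 (by omega) (by omega); simpa using this
private lemma zm8 (hm : 10 ≤ m) : (8 : ZMod m) ≠ 0 := by
  have := natCast_zmod_ne hm 8 (by omega) (by omega); simpa using this
private lemma zm9 (hm : 10 ≤ m) : (9 : ZMod m) ≠ 0 := by
  have := natCast_zmod_ne hm 9 (by omega) (by omega); simpa using this

private lemma mem_conn_iff (x : DihedralGroup m) :
    x ∈ conn17 m ↔ x = r 2 ∨ x = r (-2) ∨ x = sr 0 ∨ x = sr (-8) ∨ x = sr (-9) := by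
  have h2 : dihR m ^ 2 = (r 2 : DihedralGroup m) := by
    rw [dihR, r_one_pow]; norm_num
  have h2i : (dihR m ^ 2)⁻¹ = (r (-2) : DihedralGroup m) := by rw [h2]; rfl
  have hs : dihS m = (sr 0 : DihedralGroup m) := rfl
  have h8 : dihR m ^ 8 * dihS m = (sr (-8) : DihedralGroup m) := by
    rw [dihR, r_one_pow, dihS, r_mul_sr]; norm_num
  have h9 : dihR m ^ 9 * dihS m = (sr (-9) : DihedralGroup m) := by
    rw [dihR, r_one_pow, dihS, r_mul_sr]; norm_num
  rw [conn17, h2i, h2, h8, h9, hs]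
  simp [Set.mem_insert_iff]

private lemma r_inv (i : ZMod m) : (r i : DihedralGroup m)⁻¹ = r (-i) := rfl
private lemma sr_inv (i : ZMod m) : (sr i : DihedralGroup m)⁻¹ = sr i := rfl

private lemma one_not_mem_conn (hm : 10 ≤ m) : (1 : DihedralGroup m) ∉ conn17 m := by
  rw [mem_conn_iff, DihedralGroup.one_def]
  rintro (h|h|h|h|h)
  · injection h with h'
    exact zm2 hm h'.symm
  · injection h with h'
    exact zm2 hm (by linear_combination h')
  · cases h
  · cases h
  · cases h

private lemma adj_iff (hm : 10 ≤ m) (u v : DihedralGroup m) :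
    (cayleyGraph (conn17 m)).Adj u v ↔ v * u⁻¹ ∈ conn17 m := by
  constructor
  · exact fun h => h.2.1
  · intro h
    have hne : u ≠ v := by
      intro he
      subst he
      rw [mul_inv_cancel] at h
      exact one_not_mem_conn hm h
    refine ⟨hne, h, ?_⟩
    have huv : u * v⁻¹ = (v * u⁻¹)⁻¹ := by group
    rw [mem_conn_iff] at h
    rw [huv, mem_conn_iff]
    rcases h with h|h|h|h|h <;> rw [h] <;> simp [r_inv, sr_inv]

private lemma adj_r_iff (hm : 10 ≤ m) (k : ZMod m) (v : DihedralGroup m) :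
    (cayleyGraph (conn17 m)).Adj (r k) v ↔
      v = r (k+2) ∨ v = r (k-2) ∨ v = sr k ∨ v = sr (k-8) ∨ v = sr (k-9) := by
  rw [adj_iff hm, mem_conn_iff]
  simp only [mul_inv_eq_iff_eq_mul, r_mul_r, r_mul_sr, sr_mul_r, sr_mul_sr]
  rw [show (2:ZMod m) + k = k + 2 by ring, show (-2:ZMod m) + k = k - 2 by ring,
      show (0:ZMod m) + k = k by ring, show (-8:ZMod m) + k = k - 8 by ring,
      show (-9:ZMod m) + k = k - 9 by ring]

private lemma adj_sr_iff (hm : 10 ≤ m) (k : ZMod m) (v : DihedralGroup m) :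
    (cayleyGraph (conn17 m)).Adj (sr k) v ↔
      v = sr (k-2) ∨ v = sr (k+2) ∨ v = r k ∨ v = r (k+8) ∨ v = r (k+9) := by
  rw [adj_iff hm, mem_conn_iff]
  simp only [mul_inv_eq_iff_eq_mul, r_mul_r, r_mul_sr, sr_mul_r, sr_mul_sr]
  rw [show k - (2:ZMod m) = k - 2 by ring, show k - (-2:ZMod m) = k + 2 by ring,
      show k - (0:ZMod m) = k by ring, show k - (-8:ZMod m) = k + 8 by ring,
      show k - (-9:ZMod m) = k + 9 by ring]

private def clsR (k : ZMod m) : Finset (DihedralGroup m) :=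
  {r k, r (k+2), r (k-2), sr k, sr (k-8), sr (k-9)}

private def clsS (k : ZMod m) : Finset (DihedralGroup m) :=
  {sr k, sr (k-2), sr (k+2), r k, r (k+8), r (k+9)}

private lemma mem_clsR (hm : 10 ≤ m) (k : ZMod m) (v : DihedralGroup m) :
    v ∈ clsR k ↔ v = r k ∨ (cayleyGraph (conn17 m)).Adj (r k) v := by
  rw [adj_r_iff hm]
  simp [clsR, or_assoc]

private lemma mem_clsS (hm : 10 ≤ m) (k : ZMod m) (v : DihedralGroup m) :
    v ∈ clsS k ↔ v = sr k ∨ (cayleyGraph (conn17 m)).Adj (sr k) v := by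
  rw [adj_sr_iff hm]
  simp [clsS, or_assoc]


private lemma neR1 (hm : 10 ≤ m) (k : ZMod m) : (r k : DihedralGroup m) ≠ r (k + 2) := by
  intro h; injection h with h'; exact zm2 hm (by linear_combination -h')
private lemma neR2 (hm : 10 ≤ m) (k : ZMod m) : (r k : DihedralGroup m) ≠ r (k - 2) := by
  intro h; injection h with h'; exact zm2 hm (by linear_combination h')
private lemma neR3 (hm : 10 ≤ m) (k : ZMod m) : (r (k+2) : DihedralGroup m) ≠ r (k - 2) := by
  intro h; injection h with h'; exact zm4 hm (by linear_combination h')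
private lemma neS1 (hm : 10 ≤ m) (k : ZMod m) : (sr k : DihedralGroup m) ≠ sr (k - 8) := by
  intro h; injection h with h'; exact zm8 hm (by linear_combination h')
private lemma neS2 (hm : 10 ≤ m) (k : ZMod m) : (sr k : DihedralGroup m) ≠ sr (k - 9) := by
  intro h; injection h with h'; exact zm9 hm (by linear_combination h')
private lemma neS3 (hm : 10 ≤ m) (k : ZMod m) : (sr (k-8) : DihedralGroup m) ≠ sr (k - 9) := by
  intro h; injection h with h'; exact zm1 hm (by linear_combination h')
private lemma neS4 (hm : 10 ≤ m) (k : ZMod m) : (sr k : DihedralGroup m) ≠ sr (k - 2) := by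
  intro h; injection h with h'; exact zm2 hm (by linear_combination h')
private lemma neS5 (hm : 10 ≤ m) (k : ZMod m) : (sr k : DihedralGroup m) ≠ sr (k + 2) := by
  intro h; injection h with h'; exact zm2 hm (by linear_combination -h')
private lemma neS6 (hm : 10 ≤ m) (k : ZMod m) : (sr (k-2) : DihedralGroup m) ≠ sr (k + 2) := by
  intro h; injection h with h'; exact zm4 hm (by linear_combination -h')
private lemma neR4 (hm : 10 ≤ m) (k : ZMod m) : (r k : DihedralGroup m) ≠ r (k + 8) := by
  intro h; injection h with h'; exact zm8 hm (by linear_combination -h')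
private lemma neR5 (hm : 10 ≤ m) (k : ZMod m) : (r k : DihedralGroup m) ≠ r (k + 9) := by
  intro h; injection h with h'; exact zm9 hm (by linear_combination -h')
private lemma neR6 (hm : 10 ≤ m) (k : ZMod m) : (r (k+8) : DihedralGroup m) ≠ r (k + 9) := by
  intro h; injection h with h'; exact zm1 hm (by linear_combination -h')

private lemma card_clsR (hm : 10 ≤ m) (k : ZMod m) : (clsR k : Finset (DihedralGroup m)).card = 6 := by
  rw [clsR]
  rw [Finset.card_insert_of_notMem (by
    simp only [Finset.mem_insert, Finset.mem_singleton]
    push_neg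
    exact ⟨neR1 hm k, neR2 hm k, by simp, by simp, by simp⟩)]
  rw [Finset.card_insert_of_notMem (by
    simp only [Finset.mem_insert, Finset.mem_singleton]
    push_neg
    exact ⟨neR3 hm k, by simp, by simp, by simp⟩)]
  rw [Finset.card_insert_of_notMem (by
    simp only [Finset.mem_insert, Finset.mem_singleton]
    push_neg
    exact ⟨by simp, by simp, by simp⟩)]
  rw [Finset.card_insert_of_notMem (by
    simp only [Finset.mem_insert, Finset.mem_singleton]
    push_neg
    exact ⟨neS1 hm k, neS2 hm k⟩)]
  rw [Finset.card_insert_of_notMem (by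
    simp only [Finset.mem_singleton]
    exact neS3 hm k)]
  rw [Finset.card_singleton]

private lemma card_clsS (hm : 10 ≤ m) (k : ZMod m) : (clsS k : Finset (DihedralGroup m)).card = 6 := by
  rw [clsS]
  rw [Finset.card_insert_of_notMem (by
    simp only [Finset.mem_insert, Finset.mem_singleton]
    push_neg
    exact ⟨neS4 hm k, neS5 hm k, by simp, by simp, by simp⟩)]
  rw [Finset.card_insert_of_notMem (by
    simp only [Finset.mem_insert, Finset.mem_singleton]
    push_neg
    exact ⟨neS6 hm k, by simp, by simp, by simp⟩)]
  rw [Finset.card_insert_of_notMem (by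
    simp only [Finset.mem_insert, Finset.mem_singleton]
    push_neg
    exact ⟨by simp, by simp, by simp⟩)]
  rw [Finset.card_insert_of_notMem (by
    simp only [Finset.mem_insert, Finset.mem_singleton]
    push_neg
    exact ⟨neR4 hm k, neR5 hm k⟩)]
  rw [Finset.card_insert_of_notMem (by
    simp only [Finset.mem_singleton]
    exact neR6 hm k)]
  rw [Finset.card_singleton]

section WithNeZero
variable [NeZero m]

private lemma row_eq (y : DihedralGroup m → ℝ) (u : DihedralGroup m)
    (A : Finset (DihedralGroup m))
    (hA : ∀ v, v ∈ A ↔ v = u ∨ (cayleyGraph (conn17 m)).Adj u v) :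
    (adjMatR (cayleyGraph (conn17 m))ᶜ).mulVec y u = (∑ v, y v) - ∑ v ∈ A, y v := by
  have expand : (adjMatR (cayleyGraph (conn17 m))ᶜ).mulVec y u
      = ∑ v, (if (cayleyGraph (conn17 m))ᶜ.Adj u v then (1:ℝ) else 0) * y v := by
    simp only [adjMatR, Matrix.mulVec, dotProduct, Matrix.of_apply]
    exact Finset.sum_congr rfl fun v _ => by by_cases h : (cayleyGraph (conn17 m))ᶜ.Adj u v <;> simp [h]
  rw [expand]
  have step : ∀ v : DihedralGroup m,
      (if (cayleyGraph (conn17 m))ᶜ.Adj u v then (1:ℝ) else 0) * y v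
      = y v - (if v ∈ A then y v else 0) := by
    intro v
    by_cases hv : v ∈ A
    · have : ¬ (cayleyGraph (conn17 m))ᶜ.Adj u v := by
        rw [SimpleGraph.compl_adj]
        rcases (hA v).mp hv with h | h
        · intro hc; exact hc.1 h.symm
        · intro hc; exact hc.2 h
      simp [hv, this]
    · have hor := (hA v).not.mp hv
      push_neg at hor
      have : (cayleyGraph (conn17 m))ᶜ.Adj u v := by
        rw [SimpleGraph.compl_adj]
        exact ⟨fun h => hor.1 h.symm, hor.2⟩
      simp [hv, this]
  rw [Finset.sum_congr rfl (fun v _ => step v), Finset.sum_sub_distrib]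
  congr 1
  rw [Finset.sum_ite_mem, Finset.univ_inter]

private lemma row_r (hm : 10 ≤ m) (y : DihedralGroup m → ℝ) (k : ZMod m) :
    (adjMatR (cayleyGraph (conn17 m))ᶜ).mulVec y (r k)
      = (∑ v, y v) - (y (r k) + y (r (k+2)) + y (r (k-2))
          + y (sr k) + y (sr (k-8)) + y (sr (k-9))) := by
  rw [row_eq y (r k) (clsR k) (mem_clsR hm k)]
  rw [clsR]
  rw [Finset.sum_insert (by
    simp only [Finset.mem_insert, Finset.mem_singleton]
    push_neg
    exact ⟨neR1 hm k, neR2 hm k, by simp, by simp, by simp⟩)]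
  rw [Finset.sum_insert (by
    simp only [Finset.mem_insert, Finset.mem_singleton]
    push_neg
    exact ⟨neR3 hm k, by simp, by simp, by simp⟩)]
  rw [Finset.sum_insert (by
    simp only [Finset.mem_insert, Finset.mem_singleton]
    push_neg
    exact ⟨by simp, by simp, by simp⟩)]
  rw [Finset.sum_insert (by
    simp only [Finset.mem_insert, Finset.mem_singleton]
    push_neg
    exact ⟨neS1 hm k, neS2 hm k⟩)]
  rw [Finset.sum_insert (by
    simp only [Finset.mem_singleton]
    exact neS3 hm k)]
  rw [Finset.sum_singleton]
  ring

private lemma row_sr (hm : 10 ≤ m) (y : DihedralGroup m → ℝ) (k : ZMod m) :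
    (adjMatR (cayleyGraph (conn17 m))ᶜ).mulVec y (sr k)
      = (∑ v, y v) - (y (sr k) + y (sr (k-2)) + y (sr (k+2))
          + y (r k) + y (r (k+8)) + y (r (k+9))) := by
  rw [row_eq y (sr k) (clsS k) (mem_clsS hm k)]
  rw [clsS]
  rw [Finset.sum_insert (by
    simp only [Finset.mem_insert, Finset.mem_singleton]
    push_neg
    exact ⟨neS4 hm k, neS5 hm k, by simp, by simp, by simp⟩)]
  rw [Finset.sum_insert (by
    simp only [Finset.mem_insert, Finset.mem_singleton]
    push_neg
    exact ⟨neS6 hm k, by simp, by simp, by simp⟩)]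
  rw [Finset.sum_insert (by
    simp only [Finset.mem_insert, Finset.mem_singleton]
    push_neg
    exact ⟨by simp, by simp, by simp⟩)]
  rw [Finset.sum_insert (by
    simp only [Finset.mem_insert, Finset.mem_singleton]
    push_neg
    exact ⟨neR4 hm k, neR5 hm k⟩)]
  rw [Finset.sum_insert (by
    simp only [Finset.mem_singleton]
    exact neR6 hm k)]
  rw [Finset.sum_singleton]
  ring

private def dihEquiv : ZMod m ⊕ ZMod m ≃ DihedralGroup m where
  toFun := Sum.elim r sr
  invFun u := match u with
    | DihedralGroup.r k => Sum.inl k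
    | DihedralGroup.sr k => Sum.inr k
  left_inv := by rintro (k | k) <;> rfl
  right_inv := by rintro (k | k) <;> rfl

private lemma sum_dih {M : Type*} [AddCommMonoid M] (y : DihedralGroup m → M) :
    ∑ u, y u = (∑ k : ZMod m, y (r k)) + ∑ k : ZMod m, y (sr k) := by
  rw [← Equiv.sum_comp (dihEquiv (m := m)) y, Fintype.sum_sum_type]
  rfl

private lemma sum_shift (f : ZMod m → ℝ) (a : ZMod m) :
    ∑ k : ZMod m, f (k + a) = ∑ k, f k :=
  Fintype.sum_equiv (Equiv.addRight a) _ _ fun _ => rfl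

private lemma sum_shift' (f : ZMod m → ℝ) (a : ZMod m) :
    ∑ k : ZMod m, f (k - a) = ∑ k, f k :=
  Fintype.sum_equiv (Equiv.subRight a) _ _ fun _ => rfl

private lemma ncard_nbhd (hm : 10 ≤ m) (u : DihedralGroup m) :
    ((cayleyGraph (conn17 m))ᶜ.neighborSet u).ncard = 2 * m - 6 := by
  obtain (k | k) := u
  · have hset : (cayleyGraph (conn17 m))ᶜ.neighborSet (r k)
        = ↑(Finset.univ \ clsR k) := by
      ext v
      simp only [SimpleGraph.mem_neighborSet, Finset.coe_sdiff, Finset.coe_univ,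
        Set.mem_diff, Set.mem_univ, true_and, Finset.mem_coe, mem_clsR hm k,
        SimpleGraph.compl_adj]
      constructor
      · rintro ⟨hne, hnadj⟩
        rintro (h | h)
        · exact hne h.symm
        · exact hnadj h
      · intro h
        push_neg at h
        exact ⟨fun hc => h.1 hc.symm, h.2⟩
    rw [hset, Set.ncard_coe_finset, Finset.card_sdiff_of_subset (Finset.subset_univ _),
      card_clsR hm k, Finset.card_univ, DihedralGroup.card]
  · have hset : (cayleyGraph (conn17 m))ᶜ.neighborSet (sr k)
        = ↑(Finset.univ \ clsS k) := by
      ext v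
      simp only [SimpleGraph.mem_neighborSet, Finset.coe_sdiff, Finset.coe_univ,
        Set.mem_diff, Set.mem_univ, true_and, Finset.mem_coe, mem_clsS hm k,
        SimpleGraph.compl_adj]
      constructor
      · rintro ⟨hne, hnadj⟩
        rintro (h | h)
        · exact hne h.symm
        · exact hnadj h
      · intro h
        push_neg at h
        exact ⟨fun hc => h.1 hc.symm, h.2⟩
    rw [hset, Set.ncard_coe_finset, Finset.card_sdiff_of_subset (Finset.subset_univ _),
      card_clsS hm k, Finset.card_univ, DihedralGroup.card]

end WithNeZero
end NutDev



/-- For every `d ≥ 14` with `d ≡ 2 (mod 4)` and `m = (d + 6)/2`, the complement of the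
Cayley graph of `Dih(m)` with connection set `{r^{±2}, s, r⁸s, r⁹s}` is a `d`-regular nut
graph of order `d + 6`. -/
theorem compl_cayley_dihedral_nut_d6 (d m : ℕ) [NeZero m] (hd : 14 ≤ d) (hmod : d % 4 = 2)
    (hm : 2 * m = d + 6) :
    Fintype.card (DihedralGroup m) = d + 6 ∧
    IsRegularGraph ((cayleyGraph (conn17 m))ᶜ) d ∧
    IsNutGraph ((cayleyGraph (conn17 m))ᶜ) := by
  have hm10 : 10 ≤ m := by omega
  have hcard : Fintype.card (DihedralGroup m) = d + 6 := by
    rw [DihedralGroup.card]; omega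
  refine ⟨hcard, ?_, ?_⟩
  · intro u
    rw [NutDev.ncard_nbhd hm10 u]
    omega
  · refine ⟨by rw [hcard]; omega, ?_⟩
    set x : DihedralGroup m → ℝ := fun u => match u with
      | DihedralGroup.r _ => 1
      | DihedralGroup.sr _ => -1 with hx
    have hxr : ∀ k : ZMod m, x (DihedralGroup.r k) = 1 := fun _ => rfl
    have hxsr : ∀ k : ZMod m, x (DihedralGroup.sr k) = -1 := fun _ => rfl
    have hsum_x : ∑ v, x v = 0 := by
      rw [NutDev.sum_dih x]
      simp only [hxr, hxsr, Finset.sum_const, Finset.card_univ, ZMod.card,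
        nsmul_eq_mul, mul_one, mul_neg_one]
      ring
    refine ⟨x, ?_, ?_, ?_⟩
    · intro v
      obtain (k | k) := v
      · rw [hxr k]; norm_num
      · rw [hxsr k]; norm_num
    · funext u
      have : (0 : DihedralGroup m → ℝ) u = 0 := rfl
      rw [this]
      obtain (k | k) := u
      · rw [NutDev.row_r hm10 x k, hsum_x]
        norm_num
      · rw [NutDev.row_sr hm10 x k, hsum_x]
        norm_num
    · intro y hy
      set S : ℝ := ∑ v, y v with hS
      set f : ZMod m → ℝ := fun k => y (DihedralGroup.r k) with hf
      set g : ZMod m → ℝ := fun k => y (DihedralGroup.sr k) with hg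
      have hrow_r : ∀ k : ZMod m,
          S - (f k + f (k+2) + f (k-2) + g k + g (k-8) + g (k-9)) = 0 := by
        intro k
        have h0 := congrFun hy (DihedralGroup.r k)
        rw [NutDev.row_r hm10 y k] at h0
        exact h0
      have hrow_s : ∀ k : ZMod m,
          S - (g k + g (k-2) + g (k+2) + f k + f (k+8) + f (k+9)) = 0 := by
        intro k
        have h0 := congrFun hy (DihedralGroup.sr k)
        rw [NutDev.row_sr hm10 y k] at h0
        exact h0
      have hfg : (∑ k : ZMod m, f k) + (∑ k : ZMod m, g k) = S := (NutDev.sum_dih y).symm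
      have hS0 : S = 0 := by
        have eA : ∑ k : ZMod m, (f k + f (k+2) + f (k-2) + g k + g (k-8) + g (k-9))
            = 3 * (∑ k : ZMod m, f k) + 3 * (∑ k : ZMod m, g k) := by
          rw [Finset.sum_add_distrib, Finset.sum_add_distrib, Finset.sum_add_distrib,
            Finset.sum_add_distrib, Finset.sum_add_distrib,
            NutDev.sum_shift f 2, NutDev.sum_shift' f 2, NutDev.sum_shift' g 8,
            NutDev.sum_shift' g 9]
          ring
        have eB : ∑ k : ZMod m, (f k + f (k+2) + f (k-2) + g k + g (k-8) + g (k-9))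
            = (m : ℝ) * S := by
          rw [Finset.sum_congr rfl (fun k _ => by have := hrow_r k; linarith :
            ∀ k ∈ Finset.univ, (f k + f (k+2) + f (k-2) + g k + g (k-8) + g (k-9)) = S)]
          rw [Finset.sum_const, Finset.card_univ, ZMod.card, nsmul_eq_mul]
        have key : ((m : ℝ) - 3) * S = 0 := by
          have := eB.symm.trans eA
          linear_combination this + 3 * hfg
        have hmne : ((m : ℝ) - 3) ≠ 0 := by
          have : (10 : ℝ) ≤ (m : ℝ) := by exact_mod_cast hm10
          linarith
        exact (mul_eq_zero.mp key).resolve_left hmne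
      have HR : ∀ k : ZMod m, f k + f (k+2) + f (k-2) + g k + g (k-8) + g (k-9) = 0 := by
        intro k; have := hrow_r k; rw [hS0] at this; linarith
      have HS : ∀ k : ZMod m, g k + g (k+2) + g (k-2) + f k + f (k+8) + f (k+9) = 0 := by
        intro k; have := hrow_s k; rw [hS0] at this; linarith
      obtain ⟨hfc, hgc⟩ := const_of_rels hm10 f g HR HS
      refine ⟨f 0, funext fun u => ?_⟩
      obtain (k | k) := u
      · have : y (DihedralGroup.r k) = f k := rfl
        rw [Pi.smul_apply, hxr k, smul_eq_mul, mul_one, this, hfc k]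
      · have : y (DihedralGroup.sr k) = g k := rfl
        rw [Pi.smul_apply, hxsr k, smul_eq_mul, this, hgc k]
        ring
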